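/- arXiv:2304.07701 — 14 statements merged into one kernel-verified Lean document; each statement's English description precedes it below -/
import Mathlib

section
/- Let R be a commutative ring and let g ∈ R[x_1,…,x_n] be a monic polynomial, meaning there exists θ ∈ ℕ^n in the support of g (the set of exponent vectors with nonzero coefficient) such that the coefficient of x^θ in g equals 1 and every γ in the support of g satisfies γ ≤ θ componentwise. Then for any γ in max(supp(f)) (the set of maximal elements of the support of f under componentwise order), the coefficient of x^{γ+θ} in f·g equals the coefficient of x^γ in f. -/
open MvPolynomial

theorem stmt0 {R : Type*} [CommRing R] {n : ℕ}
    (g f : MvPolynomial (Fin n) R) (θ : Fin n →₀ ℕ)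
    (hθmem : θ ∈ g.support) (hθone : coeff θ g = 1)
    (hθmax : ∀ γ ∈ g.support, γ ≤ θ)
    (γ : Fin n →₀ ℕ) (hγ : γ ∈ f.support)
    (hγmax : ∀ α ∈ f.support, γ ≤ α → γ = α) :
    coeff (γ + θ) (f * g) = coeff γ f := by
  rw [coeff_mul]
  rw [Finset.sum_eq_single (γ, θ)]
  · simp [hθone]
  · rintro ⟨a, b⟩ hab hne
    rw [Finset.HasAntidiagonal.mem_antidiagonal] at hab
    by_cases hbg : coeff b g = 0
    · simp [hbg]
    have hb : b ∈ g.support := by rwa [mem_support_iff]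
    have hbθ : b ≤ θ := hθmax b hb
    have hga : γ ≤ a := by
      intro i
      have h1 := DFunLike.congr_fun hab i
      simp only [Finsupp.coe_add, Pi.add_apply] at h1
      have := hbθ i
      omega
    by_cases haf : coeff a f = 0
    · simp [haf]
    exfalso
    have ha : a ∈ f.support := by rwa [mem_support_iff]
    have hga' : γ = a := hγmax a ha hga
    subst hga'
    have : b = θ := by
      ext i
      have h1 := DFunLike.congr_fun hab i
      simp only [Finsupp.coe_add, Pi.add_apply] at h1
      omega
    exact hne (by simp [this])
  · intro h
    simp at h
end

section
/- Let R be a commutative ring and g ∈ R[x_1,…,x_n] a monic polynomial with greatest support element θ. Then for any f ∈ R[x_1,…,x_n], max(supp(f·g)) = max(supp(f)) + {θ}, where the sum of sets is elementwise addition in ℕ^n. -/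
open MvPolynomial
set_option maxHeartbeats 1000000

private lemma exists_max_above {n : ℕ} (s : Finset (Fin n →₀ ℕ)) {a : Fin n →₀ ℕ}
    (ha : a ∈ s) : ∃ b ∈ s, a ≤ b ∧ ∀ c ∈ s, b ≤ c → b = c := by
  have hfin : ({x ∈ (s : Set (Fin n →₀ ℕ)) | a ≤ x}).Finite :=
    s.finite_toSet.subset (fun x hx => hx.1)
  obtain ⟨b, hb, hbmax⟩ := Set.Finite.exists_maximalFor id _ hfin ⟨a, by simpa using ha⟩
  exact ⟨b, hb.1, hb.2, fun c hc hbc => le_antisymm hbc (hbmax (j := c) ⟨hc, hb.2.trans hbc⟩ hbc)⟩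

private lemma coeff_add_theta {R : Type*} [CommRing R] {n : ℕ}
    (g f : MvPolynomial (Fin n) R) (θ : Fin n →₀ ℕ)
    (hθone : coeff θ g = 1)
    (hθmax : ∀ γ ∈ g.support, γ ≤ θ)
    {β : Fin n →₀ ℕ} (hβmax : ∀ α ∈ f.support, β ≤ α → β = α) :
    coeff (β + θ) (f * g) = coeff β f := by
  rw [coeff_mul]
  rw [Finset.sum_eq_single (β, θ)]
  · rw [hθone, mul_one]
  · rintro ⟨a, b⟩ hab hne
    simp only [Finset.HasAntidiagonal.mem_antidiagonal] at hab
    by_cases hbg : coeff b g = 0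
    · rw [hbg, mul_zero]
    by_cases haf : coeff a f = 0
    · rw [haf, zero_mul]
    have hb : b ≤ θ := hθmax b (mem_support_iff.mpr hbg)
    have hba : β ≤ a := by
      rw [Finsupp.le_def]
      intro i
      have h1 := DFunLike.congr_fun hab i
      simp only [Finsupp.add_apply] at h1
      have h2 := Finsupp.le_def.mp hb i
      omega
    have h3 : β = a := hβmax a (mem_support_iff.mpr haf) hba
    have h4 : b = θ := by rw [h3] at hab; exact add_left_cancel hab
    exact absurd (Prod.ext h3.symm h4) hne
  · intro h
    simp at h

private lemma le_max_add {R : Type*} [CommRing R] {n : ℕ}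
    (g f : MvPolynomial (Fin n) R) (θ : Fin n →₀ ℕ)
    (hθmax : ∀ γ ∈ g.support, γ ≤ θ)
    {δ : Fin n →₀ ℕ} (hδ : δ ∈ (f * g).support) :
    ∃ β, (β ∈ f.support ∧ ∀ α ∈ f.support, β ≤ α → β = α) ∧ δ ≤ β + θ := by
  have := MvPolynomial.support_mul f g hδ
  rw [Finset.mem_add] at this
  obtain ⟨a, ha, b, hb, hab⟩ := this
  obtain ⟨β, hβs, haβ, hβmax⟩ := exists_max_above f.support ha
  refine ⟨β, ⟨hβs, hβmax⟩, ?_⟩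
  subst hab
  exact add_le_add (haβ) (hθmax b hb)

theorem stmt1 {R : Type*} [CommRing R] {n : ℕ}
    (g f : MvPolynomial (Fin n) R) (θ : Fin n →₀ ℕ)
    (hθmem : θ ∈ g.support) (hθone : coeff θ g = 1)
    (hθmax : ∀ γ ∈ g.support, γ ≤ θ) :
    {β : Fin n →₀ ℕ | β ∈ (f * g).support ∧ ∀ α ∈ (f * g).support, β ≤ α → β = α}
      = (fun δ => δ + θ) ''
        {β : Fin n →₀ ℕ | β ∈ f.support ∧ ∀ α ∈ f.support, β ≤ α → β = α} := by
  ext δ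
  simp only [Set.mem_setOf_eq, Set.mem_image]
  constructor
  · rintro ⟨hδ, hδmax⟩
    obtain ⟨β, hβ, hle⟩ := le_max_add g f θ hθmax hδ
    have hmem : β + θ ∈ (f * g).support := by
      rw [mem_support_iff, coeff_add_theta g f θ hθone hθmax hβ.2]
      exact mem_support_iff.mp hβ.1
    have : δ = β + θ := hδmax _ hmem hle
    exact ⟨β, hβ, this.symm⟩
  · rintro ⟨β, ⟨hβs, hβmax⟩, rfl⟩
    have hmem : β + θ ∈ (f * g).support := by
      rw [mem_support_iff, coeff_add_theta g f θ hθone hθmax hβmax]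
      exact mem_support_iff.mp hβs
    refine ⟨hmem, fun α hα hle => ?_⟩
    obtain ⟨β', ⟨hβ's, hβ'max⟩, hle'⟩ := le_max_add g f θ hθmax hα
    have hββ' : β ≤ β' := by
      have h : β + θ ≤ β' + θ := hle.trans hle'
      rw [Finsupp.le_def]
      intro i
      have := Finsupp.le_def.mp h i
      simp only [Finsupp.add_apply] at this
      omega
    have : β = β' := hβmax β' hβ's hββ'
    subst this
    exact le_antisymm hle hle'
end

section
/- Let R be a commutative ring and g ∈ R[x_1,…,x_n] a monic polynomial with greatest support element θ. Then Δ(supp(f·g)) = Δ(supp(f)) + Δ(supp(g)) for any f ∈ R[x_1,…,x_n], where Δ(A) = {β ∈ ℕ^n : β ≤ α for some α ∈ A} is the downward closure and + is elementwise set addition. -/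
set_option maxHeartbeats 1000000


open MvPolynomial Pointwise

theorem stmt3 {R : Type*} [CommRing R] {n : ℕ}
    (g f : MvPolynomial (Fin n) R) (θ : Fin n →₀ ℕ)
    (hθmem : θ ∈ g.support) (hθone : coeff θ g = 1)
    (hθmax : ∀ γ ∈ g.support, γ ≤ θ) :
    {β : Fin n →₀ ℕ | ∃ α ∈ (f * g).support, β ≤ α}
      = {β : Fin n →₀ ℕ | ∃ α ∈ f.support, β ≤ α}
        + {β : Fin n →₀ ℕ | ∃ α ∈ g.support, β ≤ α} := by
  ext β
  simp only [Set.mem_setOf_eq, Set.mem_add]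
  constructor
  · rintro ⟨α, hα, hβα⟩
    have hsub := MvPolynomial.support_mul f g hα
    rw [Finset.mem_add] at hsub
    obtain ⟨a, ha, b, hb, rfl⟩ := hsub
    refine ⟨β - (β - a), ⟨a, ha, tsub_tsub_le⟩,
      β - (β - (β - a)), ⟨b, hb, ?_⟩, ?_⟩
    · rw [Finsupp.le_def] at hβα ⊢
      intro i
      have := hβα i
      simp only [Finsupp.add_apply, Finsupp.tsub_apply] at this ⊢
      omega
    · ext i
      simp only [Finsupp.add_apply, Finsupp.tsub_apply]
      omega
  · rintro ⟨β₁, ⟨a, ha, hβ₁a⟩, β₂, ⟨b, hb, hβ₂b⟩, rfl⟩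
    obtain ⟨α', hα'S, hmax⟩ : ∃ i ∈ f.support.filter (a ≤ ·),
        ∀ x ∈ f.support.filter (a ≤ ·), ¬ i < x := by
      obtain ⟨i, hi⟩ := Finset.exists_maximal (s := f.support.filter (a ≤ ·)) ⟨a, by simp [ha]⟩
      exact ⟨i, hi.1, fun x hx hlt => hlt.not_ge (hi.2 hx hlt.le)⟩
    rw [Finset.mem_filter] at hα'S
    have hcoeff : coeff (α' + θ) (f * g) = coeff α' f := by
      rw [coeff_mul, Finset.sum_eq_single_of_mem (α', θ)
        (Finset.HasAntidiagonal.mem_antidiagonal.mpr rfl)]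
      · rw [hθone, mul_one]
      · rintro ⟨x, y⟩ hxy hne
        rw [Finset.HasAntidiagonal.mem_antidiagonal] at hxy
        by_cases hy : y ∈ g.support
        · by_cases hx : x ∈ f.support
          · have hyθ := hθmax y hy
            have hx' : α' ≤ x := by
              rw [Finsupp.le_def] at hyθ ⊢
              intro i
              have h1 := DFunLike.congr_fun hxy i
              simp only [Finsupp.add_apply] at h1
              have := hyθ i; omega
            have hxS : x ∈ f.support.filter (a ≤ ·) :=
              Finset.mem_filter.mpr ⟨hx, le_trans hα'S.2 hx'⟩
            have hxe : x = α' := by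
              by_contra hne'
              exact hmax x hxS (lt_of_le_of_ne hx' (Ne.symm hne'))
            subst hxe
            have hye : y = θ := add_left_cancel hxy
            exact absurd (by rw [hye]) hne
          · rw [MvPolynomial.notMem_support_iff.mp hx, zero_mul]
        · rw [MvPolynomial.notMem_support_iff.mp hy, mul_zero]
    have hmem : α' + θ ∈ (f * g).support := by
      rw [mem_support_iff, hcoeff]
      exact mem_support_iff.mp hα'S.1
    exact ⟨α' + θ, hmem, add_le_add (le_trans hβ₁a hα'S.2) (le_trans hβ₂b (hθmax b hb))⟩
end

section
/- Let R be a commutative ring and let g_1,…,g_n ∈ R[x_1,…,x_n] be monic polynomials with g_k ∈ R[x_k] (a univariate polynomial in the variable x_k) for each k. If f ∈ R[x_1,…,x_n] satisfies g_k ∣ f for all k ∈ {1,…,n}, then (∏_{k=1}^n g_k) ∣ f. -/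
open MvPolynomial

theorem stmt5 {R : Type*} [CommRing R] {n : ℕ}
    (g : Fin n → MvPolynomial (Fin n) R)
    (hmonic : ∀ k, ∃ θ ∈ (g k).support, coeff θ (g k) = 1 ∧ ∀ γ ∈ (g k).support, γ ≤ θ)
    (huniv : ∀ k, ∀ γ ∈ (g k).support, ∀ l, l ≠ k → γ l = 0)
    (f : MvPolynomial (Fin n) R)
    (hdvd : ∀ k, g k ∣ f) :
    (∏ k, g k) ∣ f := by
  rcases subsingleton_or_nontrivial R with hR | hR
  · exact ⟨f, Subsingleton.elim _ _⟩
  cases n with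
  | zero => simpa using one_dvd f
  | succ m =>
    suffices h : ∀ S : Finset (Fin (m+1)), (∏ k ∈ S, g k) ∣ f by simpa using h Finset.univ
    intro S
    induction S using Finset.induction_on with
    | empty => simpa using one_dvd f
    | insert _ _ hk _ =>
      rename_i k S ih
      obtain ⟨q, hq⟩ := ih
      set σ : Equiv.Perm (Fin (m+1)) := Equiv.swap k 0 with hσ
      set φ : MvPolynomial (Fin (m+1)) R ≃ₐ[R] Polynomial (MvPolynomial (Fin m) R) :=
        (renameEquiv R σ).trans (finSuccEquiv R m) with hφ
      -- coefficient formula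
      have key : ∀ (h : MvPolynomial (Fin (m+1)) R) (i : ℕ) (e : Fin m →₀ ℕ),
          coeff e (Polynomial.coeff (φ h) i)
            = coeff (Finsupp.mapDomain σ (e.cons i)) h := by
        intro h i e
        have h1 : coeff e (Polynomial.coeff (φ h) i) = coeff (e.cons i) (rename σ h) := by
          rw [hφ]
          exact finSuccEquiv_coeff_coeff e (rename σ h) i
        rw [h1]
        have h2 : Finsupp.mapDomain (⇑σ) (Finsupp.mapDomain (⇑σ.symm) (e.cons i)) = e.cons i := by
          rw [← Finsupp.mapDomain_comp, Equiv.self_comp_symm, Finsupp.mapDomain_id]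
        calc coeff (e.cons i) (rename σ h)
            = coeff (Finsupp.mapDomain (⇑σ) (Finsupp.mapDomain (⇑σ.symm) (e.cons i))) (rename σ h) := by rw [h2]
          _ = coeff (Finsupp.mapDomain (⇑σ.symm) (e.cons i)) h :=
              coeff_rename_mapDomain _ σ.injective _ _
          _ = coeff (Finsupp.mapDomain (⇑σ) (e.cons i)) h := by
              rw [hσ]; rw [Equiv.symm_swap]
      -- values of the mapped exponent
      have εk : ∀ (i : ℕ) (e : Fin m →₀ ℕ), (Finsupp.mapDomain (⇑σ) (e.cons i)) k = i := by
        intro i e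
        have : σ 0 = k := by simp [hσ, Equiv.swap_apply_right]
        rw [← this, Finsupp.mapDomain_apply σ.injective]
        simp
      have εl : ∀ (i : ℕ) (e : Fin m →₀ ℕ) (j : Fin m),
          (Finsupp.mapDomain (⇑σ) (e.cons i)) (σ j.succ) = e j := by
        intro i e j
        rw [Finsupp.mapDomain_apply σ.injective]
        simp
      have σsucc_ne : ∀ j : Fin m, σ j.succ ≠ k := by
        intro j h
        have : σ 0 = k := by simp [hσ, Equiv.swap_apply_right]
        exact (Fin.succ_ne_zero j) (σ.injective (h.trans this.symm))
      obtain ⟨θ, hθs, hθ1, hθmax⟩ := hmonic k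
      set d : ℕ := θ k with hd
      have hθ : θ = Finsupp.single k d := by
        ext l
        by_cases hl : l = k
        · subst hl; simp [hd]
        · rw [huniv k θ hθs l hl, Finsupp.single_apply]
          simp [Ne.symm hl]
      set G : Polynomial (MvPolynomial (Fin m) R) := φ (g k) with hG
      -- G.coeff d = 1
      have hGd : G.coeff d = 1 := by
        apply MvPolynomial.ext
        intro e
        rw [hG, key]
        by_cases he : e = 0
        · subst he
          have : Finsupp.mapDomain (⇑σ) ((0 : Fin m →₀ ℕ).cons d) = Finsupp.single k d := by
            ext l
            by_cases hl : l = k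
            · subst hl; rw [εk]; simp
            · obtain ⟨j, hj⟩ : ∃ j : Fin m, σ j.succ = l := by
                refine ⟨(σ.symm l).pred ?_, ?_⟩
                · intro h0
                  apply hl
                  have : σ 0 = k := by simp [hσ, Equiv.swap_apply_right]
                  rw [← this, ← h0]; simp
                · simp
              rw [← hj, εl, Finsupp.single_apply]
              exact (if_neg fun h => σsucc_ne j h.symm).symm
          rw [this, ← hθ, hθ1]
          simp
        · obtain ⟨j, hj⟩ : ∃ j : Fin m, e j ≠ 0 := by
            by_contra hc
            push_neg at hc
            exact he (Finsupp.ext hc)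
          have hne : Finsupp.mapDomain (⇑σ) (e.cons d) ∉ (g k).support := by
            intro hmem
            exact hj (by rw [← εl d e j]; exact huniv k _ hmem _ (σsucc_ne j))
          rw [notMem_support_iff] at hne
          rw [hne, coeff_one, if_neg (fun h => he h.symm)]
      -- G.coeff i = 0 for i > d
      have hGhi : ∀ i, d < i → G.coeff i = 0 := by
        intro i hi
        apply MvPolynomial.ext
        intro e
        rw [hG, key]
        have hne : Finsupp.mapDomain (⇑σ) (e.cons i) ∉ (g k).support := by
          intro hmem
          have := hθmax _ hmem k
          rw [εk, ← hd] at this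
          omega
        rw [notMem_support_iff] at hne
        rw [hne]
        simp
      have hGdeg : G.natDegree ≤ d := Polynomial.natDegree_le_iff_coeff_eq_zero.2 hGhi
      have hGmonic : G.Monic := Polynomial.monic_of_natDegree_le_of_coeff_eq_one d hGdeg hGd
      -- φ P has coeff 0 in positive degrees
      set P : MvPolynomial (Fin (m+1)) R := ∏ j ∈ S, g j with hP
      have hPvars : ∀ δ ∈ P.support, δ k = 0 := by
        intro δ hδ
        by_contra hδk
        have hkv : k ∈ P.vars := (mem_vars k).2 ⟨δ, hδ, Finsupp.mem_support_iff.2 hδk⟩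
        have := vars_prod (s := S) g hkv
        rw [Finset.mem_biUnion] at this
        obtain ⟨j, hjS, hjv⟩ := this
        obtain ⟨δ', hδ', hkδ'⟩ := (mem_vars k).1 hjv
        have hjk : j ≠ k := fun h => hk (h ▸ hjS)
        exact (Finsupp.mem_support_iff.1 hkδ') (huniv j δ' hδ' k (Ne.symm hjk))
      have hPc : ∀ i, 0 < i → (φ P).coeff i = 0 := by
        intro i hi
        apply MvPolynomial.ext
        intro e
        rw [key]
        have hne : Finsupp.mapDomain (⇑σ) (e.cons i) ∉ P.support := by
          intro hmem
          have := hPvars _ hmem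
          rw [εk] at this
          omega
        rw [notMem_support_iff] at hne
        rw [hne]
        simp
      have hPdeg : (φ P).degree ≤ 0 := by
        exact Polynomial.degree_le_zero_iff.2 (Polynomial.eq_C_of_natDegree_le_zero
          (Polynomial.natDegree_le_iff_coeff_eq_zero.2 fun i hi => hPc i hi))
      -- division with remainder
      set r : Polynomial (MvPolynomial (Fin m) R) := φ q %ₘ G with hr
      set s : Polynomial (MvPolynomial (Fin m) R) := φ q /ₘ G with hs
      have hdiv : r + G * s = φ q := Polynomial.modByMonic_add_div (φ q) G
      have hrdeg : r.degree < G.degree := Polynomial.degree_modByMonic_lt (φ q) hGmonic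
      have hGf : G ∣ φ f := map_dvd φ.toAlgHom (hdvd k)
      have hφf : φ f = φ P * r + G * (φ P * s) := by
        have h1 : φ f = φ P * φ q := by rw [hq, map_mul]
        rw [h1, ← hdiv]
        ring
      have hGPr : G ∣ φ P * r := by
        have : φ P * r = φ f - G * (φ P * s) := by rw [hφf]; ring
        rw [this]
        exact dvd_sub hGf (dvd_mul_right G (φ P * s))
      have hPrdeg : (φ P * r).degree < G.degree := by
        calc (φ P * r).degree ≤ (φ P).degree + r.degree := Polynomial.degree_mul_le _ _
          _ ≤ 0 + r.degree := by exact add_le_add_left hPdeg _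
          _ = r.degree := by rw [zero_add]
          _ < G.degree := hrdeg
      have hPr0 : φ P * r = 0 := by
        obtain ⟨t, ht⟩ := hGPr
        rcases eq_or_ne t 0 with h0 | h0
        · rw [ht, h0, mul_zero]
        · exfalso
          have hlc : G.leadingCoeff * t.leadingCoeff ≠ 0 := by
            rw [hGmonic.leadingCoeff, one_mul]
            exact Polynomial.leadingCoeff_ne_zero.2 h0
          have hdm : (G * t).degree = G.degree + t.degree := Polynomial.degree_mul' hlc
          rw [ht, hdm] at hPrdeg
          have : (0 : WithBot ℕ) ≤ t.degree := Polynomial.zero_le_degree_iff.2 h0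
          have hge : G.degree ≤ G.degree + t.degree := le_add_of_nonneg_right this
          exact absurd hPrdeg (not_lt.2 hge)
      have hfin : φ f = G * (φ P * s) := by rw [hφf, hPr0, zero_add]
      have : f = (g k * P) * φ.symm s := by
        have := congrArg φ.symm hfin
        rw [AlgEquiv.symm_apply_apply] at this
        rw [this, map_mul, map_mul, AlgEquiv.symm_apply_apply, AlgEquiv.symm_apply_apply]
        ring
      rw [Finset.prod_insert hk]
      exact ⟨φ.symm s, this⟩
end

section
/- Let α ∈ ℕ^n, t ∈ ℕ, and B = {(α_1θ_1,…,α_nθ_n) : θ ∈ ℕ^n, ∑_i θ_i = t}. Then |ℕ^n − ∇(B)| = (∏_{i=1}^n α_i) · C(n+t−1, n), where ∇(B) is the upward closure of B in ℕ^n and C(·,·) is a binomial coefficient. -/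
lemma exists_comp : ∀ {n : ℕ} (f : Fin n → ℕ) (t : ℕ), t ≤ ∑ i, f i →
    ∃ θ : Fin n → ℕ, (∀ i, θ i ≤ f i) ∧ ∑ i, θ i = t := by
  intro n
  induction n with
  | zero =>
    intro f t h
    simp only [Finset.univ_eq_empty, Finset.sum_empty, Nat.le_zero] at h
    exact ⟨0, fun i => i.elim0, by simp [h]⟩
  | succ n ih =>
    intro f t h
    rw [Fin.sum_univ_succ] at h
    have h2 : t - min t (f 0) ≤ ∑ i, Fin.tail f i := by
      have : ∑ i, Fin.tail f i = ∑ i : Fin n, f i.succ := rfl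
      omega
    obtain ⟨θ', hle, hsum⟩ := ih (Fin.tail f) _ h2
    refine ⟨Fin.cons (min t (f 0)) θ', ?_, ?_⟩
    · intro i
      refine Fin.cases ?_ ?_ i
      · simp
      · intro j; simpa [Fin.tail] using hle j
    · rw [Fin.sum_univ_succ]
      simp only [Fin.cons_zero, Fin.cons_succ]
      have : ∑ i : Fin n, θ' i = t - min t (f 0) := hsum
      omega

lemma card_sum_eq (k m : ℕ) :
    Nat.card {q : Fin k → ℕ // ∑ i, q i = m} = (k + m - 1).choose m := by
  have e : {q : Fin k → ℕ // ∑ i, q i = m} ≃ Sym (Fin k) m := by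
    refine Equiv.subtypeEquiv
      (Finsupp.equivFunOnFinite.symm.trans Multiset.toFinsupp.symm.toEquiv) ?_
    intro q
    have : Multiset.card
        (Multiset.toFinsupp.symm.toEquiv (Finsupp.equivFunOnFinite.symm q)) = ∑ i, q i := by
      show Multiset.card (Multiset.toFinsupp.symm (Finsupp.equivFunOnFinite.symm q)) = _
      rw [Multiset.toFinsupp_symm_apply, Finsupp.card_toMultiset,
        Finsupp.sum_fintype _ _ (fun _ => rfl)]
      simp
    rw [Equiv.trans_apply]
    exact (iff_of_eq (congrArg (· = m) this.symm))
  rw [Nat.card_congr e, Nat.card_eq_fintype_card, Sym.card_sym_eq_choose,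
    Fintype.card_fin]

lemma card_sum_lt (n t : ℕ) (ht : 0 < t) :
    Nat.card {q : Fin n → ℕ // ∑ i, q i < t} = (n + t - 1).choose n := by
  have e : {q : Fin n → ℕ // ∑ i, q i < t} ≃ {q : Fin (n+1) → ℕ // ∑ i, q i = t - 1} := by
    refine ⟨fun q => ⟨Fin.cons (t - 1 - ∑ i, q.1 i) q.1, ?_⟩,
      fun q => ⟨Fin.tail q.1, ?_⟩, ?_, ?_⟩
    · rw [Fin.sum_univ_succ]
      simp only [Fin.cons_zero, Fin.cons_succ]
      have := q.2
      omega
    · have := q.2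
      rw [Fin.sum_univ_succ] at this
      have h2 : ∑ i, Fin.tail q.1 i = ∑ i : Fin n, q.1 i.succ := rfl
      omega
    · intro q; ext i; simp [Fin.tail]
    · intro q
      ext i
      refine Fin.cases ?_ ?_ i
      · have := q.2
        rw [Fin.sum_univ_succ] at this
        have h2 : ∑ i, Fin.tail q.1 i = ∑ i : Fin n, q.1 i.succ := rfl
        simp only [Fin.cons_zero]
        omega
      · intro j; simp [Fin.tail]
  rw [Nat.card_congr e, card_sum_eq]
  have h1 : n + 1 + (t - 1) - 1 = n + t - 1 := by omega
  rw [h1]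
  have h3 := Nat.choose_symm (n := n + t - 1) (k := t - 1) (by omega)
  rw [← h3]
  congr 1
  omega
theorem stmt6 {n : ℕ} (hn : 0 < n) (t : ℕ) (α : Fin n → ℕ) :
    Set.ncard {β : Fin n →₀ ℕ |
        ¬ ∃ x : Fin n →₀ ℕ,
          (∃ θ : Fin n → ℕ, (∑ i, θ i) = t ∧ ∀ i, x i = α i * θ i) ∧ x ≤ β}
      = (∏ i, α i) * Nat.choose (n + t - 1) n := by
  by_cases hz : (∃ i, α i = 0) ∨ t = 0
  · have hempty : {β : Fin n →₀ ℕ |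
        ¬ ∃ x : Fin n →₀ ℕ,
          (∃ θ : Fin n → ℕ, (∑ i, θ i) = t ∧ ∀ i, x i = α i * θ i) ∧ x ≤ β} = ∅ := by
      ext β
      simp only [Set.mem_setOf_eq, Set.mem_empty_iff_false, iff_false, not_not]
      rcases hz with ⟨i, hi⟩ | rfl
      · refine ⟨0, ⟨fun j => if j = i then t else 0, ?_, ?_⟩, (zero_le : 0 ≤ β)⟩
        · simp
        · intro j
          by_cases hj : j = i <;> simp [hj, hi]
      · exact ⟨0, ⟨fun _ => 0, by simp, fun i => by simp⟩, (zero_le : 0 ≤ β)⟩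
    rw [hempty, Set.ncard_empty]
    rcases hz with ⟨i, hi⟩ | rfl
    · rw [Finset.prod_eq_zero (Finset.mem_univ i) hi, zero_mul]
    · rw [Nat.choose_eq_zero_of_lt (by omega), mul_zero]
  · push_neg at hz
    obtain ⟨hα', ht⟩ := hz
    have hα : ∀ i, 0 < α i := fun i => Nat.pos_of_ne_zero (hα' i)
    have key : ∀ β : Fin n →₀ ℕ,
        (∃ x : Fin n →₀ ℕ,
          (∃ θ : Fin n → ℕ, (∑ i, θ i) = t ∧ ∀ i, x i = α i * θ i) ∧ x ≤ β)
        ↔ t ≤ ∑ i, β i / α i := by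
      intro β
      constructor
      · rintro ⟨x, ⟨θ, hsum, hx⟩, hle⟩
        rw [Finsupp.le_def] at hle
        calc t = ∑ i, θ i := hsum.symm
        _ ≤ ∑ i, β i / α i := by
          refine Finset.sum_le_sum fun i _ => ?_
          rw [Nat.le_div_iff_mul_le (hα i), mul_comm]
          rw [← hx i]
          exact hle i
      · intro h
        obtain ⟨θ, hle, hsum⟩ := exists_comp (fun i => β i / α i) t h
        refine ⟨Finsupp.equivFunOnFinite.symm (fun i => α i * θ i), ⟨θ, hsum, fun i => rfl⟩, ?_⟩
        rw [Finsupp.le_def]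
        intro i
        show α i * θ i ≤ β i
        calc α i * θ i ≤ α i * (β i / α i) := Nat.mul_le_mul_left _ (hle i)
        _ ≤ β i := Nat.mul_div_le _ _
    have hset : {β : Fin n →₀ ℕ |
        ¬ ∃ x : Fin n →₀ ℕ,
          (∃ θ : Fin n → ℕ, (∑ i, θ i) = t ∧ ∀ i, x i = α i * θ i) ∧ x ≤ β}
        = {β : Fin n →₀ ℕ | ∑ i, β i / α i < t} := by
      ext β
      simp only [Set.mem_setOf_eq]
      rw [key β, not_le]
    rw [hset, ← Nat.card_coe_set_eq]
    have e1 : {β : Fin n →₀ ℕ // ∑ i, β i / α i < t}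
        ≃ {f : Fin n → ℕ // ∑ i, f i / α i < t} :=
      (Finsupp.equivFunOnFinite.subtypeEquiv fun β => Iff.rfl)
    have e2 : {f : Fin n → ℕ // ∑ i, f i / α i < t}
        ≃ {q : Fin n → ℕ // ∑ i, q i < t} × (∀ i, Fin (α i)) := by
      refine ⟨fun f => ⟨⟨fun i => f.1 i / α i, f.2⟩,
        fun i => ⟨f.1 i % α i, Nat.mod_lt _ (hα i)⟩⟩,
        fun p => ⟨fun i => α i * p.1.1 i + (p.2 i : ℕ), ?_⟩, ?_, ?_⟩
      · have : ∀ i, (α i * p.1.1 i + (p.2 i : ℕ)) / α i = p.1.1 i := by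
          intro i
          rw [Nat.mul_add_div (hα i), Nat.div_eq_of_lt (p.2 i).isLt, add_zero]
        simpa only [this] using p.1.2
      · intro f
        ext i
        exact Nat.div_add_mod (f.1 i) (α i)
      · intro p
        ext i
        · show (α i * p.1.1 i + (p.2 i : ℕ)) / α i = p.1.1 i
          rw [Nat.mul_add_div (hα i), Nat.div_eq_of_lt (p.2 i).isLt, add_zero]
        · show ((α i * p.1.1 i + (p.2 i : ℕ)) % α i : ℕ) = (p.2 i : ℕ)
          rw [Nat.mul_add_mod, Nat.mod_eq_of_lt (p.2 i).isLt]
    show Nat.card {β : Fin n →₀ ℕ // ∑ i, β i / α i < t} = _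
    rw [Nat.card_congr (e1.trans e2), Nat.card_prod,
      card_sum_lt n t (Nat.pos_of_ne_zero ht), Nat.card_pi]
    simp only [Nat.card_eq_fintype_card, Fintype.card_fin]
    rw [mul_comm]
end

section
/- Let α ∈ (ℤ^+)^n, t ∈ ℕ, and B = {(α_1θ_1,…,α_nθ_n) : θ ∈ ℕ^n, ∑_i θ_i = t}. Then ℕ^n − ∇(B) = {β ∈ ℕ^n : ∑_{i=1}^n ⌊β_i/α_i⌋ ≤ t−1}. -/
lemma aux_exists_le {ι : Type*} [DecidableEq ι] (s : Finset ι) :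
    ∀ (f : ι → ℕ) (t : ℕ), t ≤ ∑ i ∈ s, f i →
      ∃ g : ι → ℕ, (∀ i, g i ≤ f i) ∧ ∑ i ∈ s, g i = t := by
  induction s using Finset.induction_on with
  | empty =>
    intro f t ht
    simp only [Finset.sum_empty, Nat.le_zero] at ht
    exact ⟨fun _ => 0, fun _ => Nat.zero_le _, by simp [ht]⟩
  | @insert a s ha ih =>
    intro f t ht
    rw [Finset.sum_insert ha] at ht
    obtain ⟨g, hg, hgs⟩ := ih f (t - min (f a) t) (by omega)
    refine ⟨fun i => if i = a then min (f a) t else g i, ?_, ?_⟩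
    · intro i
      by_cases hi : i = a <;> simp [hi, hg i, Nat.min_le_left]
    · rw [Finset.sum_insert ha, if_pos rfl]
      rw [Finset.sum_congr rfl (fun i hi => if_neg (by rintro rfl; exact ha hi)), hgs]
      omega

theorem stmt7 {n : ℕ} (t : ℕ) (α : Fin n → ℕ) (hα : ∀ i, 0 < α i) :
    {β : Fin n →₀ ℕ |
        ¬ ∃ x : Fin n →₀ ℕ,
          (∃ θ : Fin n → ℕ, (∑ i, θ i) = t ∧ ∀ i, x i = α i * θ i) ∧ x ≤ β}
      = {β : Fin n →₀ ℕ | (∑ i, ((β i / α i : ℕ) : ℤ)) ≤ (t : ℤ) - 1} := by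
  ext β
  simp only [Set.mem_setOf_eq]
  have hcast : (∑ i, ((β i / α i : ℕ) : ℤ)) ≤ (t : ℤ) - 1 ↔ (∑ i, β i / α i) < t := by
    rw [← Nat.cast_sum]
    omega
  rw [hcast]
  constructor
  · intro h
    by_contra hlt
    push_neg at hlt
    obtain ⟨θ, hθle, hθsum⟩ := aux_exists_le Finset.univ (fun i => β i / α i) t hlt
    refine h ⟨Finsupp.equivFunOnFinite.symm (fun i => α i * θ i), ⟨θ, hθsum, fun i => rfl⟩, ?_⟩
    intro i
    simp only [Finsupp.coe_equivFunOnFinite_symm]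
    calc α i * θ i ≤ α i * (β i / α i) := Nat.mul_le_mul_left _ (hθle i)
      _ ≤ β i := Nat.mul_div_le _ _
  · intro h ⟨x, ⟨θ, hθsum, hx⟩, hle⟩
    have : ∀ i, θ i ≤ β i / α i := fun i => by
      rw [Nat.le_div_iff_mul_le (hα i), mul_comm]
      rw [← hx i]; exact hle i
    have := Finset.sum_le_sum (s := Finset.univ) (fun i _ => this i)
    omega
end

section
/- Let α, γ ∈ ℕ^n with γ ≤ α componentwise, and let t ∈ ℤ^+. Define B = {(α_1θ_1,…,α_nθ_n) : θ ∈ ℕ^n, ∑θ_i = t} and C = {(α_1θ_1,…,α_nθ_n) + α − γ : θ ∈ ℕ^n, ∑θ_i = t−1}. Then |ℕ^n − ∇(B ∪ C)| = (∏_i α_i)·C(n+t−1, n) − (∏_i γ_i)·C(n+t−2, n−1). -/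
open Finset

private lemma exists_sum_eq' {n : ℕ} (t : ℕ) (f : Fin n → ℕ) (h : t ≤ ∑ i, f i) :
    ∃ g : Fin n → ℕ, (∀ i, g i ≤ f i) ∧ ∑ i, g i = t := by
  obtain ⟨k, hk⟩ : ∃ k, ∑ i, f i = t + k := ⟨_, (Nat.add_sub_cancel' h).symm⟩
  clear h
  induction k generalizing f with
  | zero => exact ⟨f, fun i => le_rfl, by omega⟩
  | succ k ih =>
    have hpos : 0 < ∑ i, f i := by omega
    obtain ⟨i, hi⟩ : ∃ i, 0 < f i := by
      by_contra hc
      push_neg at hc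
      have : ∑ i, f i = 0 := Finset.sum_eq_zero fun i _ => by have := hc i; omega
      omega
    have hsplit : f i + ∑ x ∈ Finset.univ.erase i, f x = ∑ x, f x :=
      Finset.add_sum_erase _ f (Finset.mem_univ i)
    have hupd : ∑ j, Function.update f i (f i - 1) j = t + k := by
      rw [Finset.sum_update_of_mem (Finset.mem_univ i)]
      have : ∑ x ∈ Finset.univ \ {i}, f x = ∑ x ∈ Finset.univ.erase i, f x := by
        rw [Finset.sdiff_singleton_eq_erase]
      rw [this]
      omega
    obtain ⟨g, hg1, hg2⟩ := ih _ hupd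
    refine ⟨g, fun j => le_trans (hg1 j) ?_, hg2⟩
    by_cases hj : j = i
    · subst hj; simp only [Function.update_self]; omega
    · rw [Function.update_of_ne hj]

private lemma aux_choose_sum (n : ℕ) : ∀ k : ℕ,
    ∑ m ∈ Finset.range (k + 1), (n + m - 1).choose m = (n + k).choose k := by
  intro k
  induction k with
  | zero => simp
  | succ k ih =>
    rw [Finset.sum_range_succ, ih]
    have h1 : n + (k + 1) - 1 = n + k := by omega
    have h2 : n + (k + 1) = (n + k) + 1 := by omega
    rw [h1, h2, Nat.choose_succ_succ' (n + k) k]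

private lemma card_adt : ∀ (n k : ℕ),
    (Finset.Nat.antidiagonalTuple n k).card = (n + k - 1).choose k := by
  intro n
  induction n with
  | zero =>
    intro k
    cases k with
    | zero => simp [Finset.Nat.antidiagonalTuple_zero_zero]
    | succ k =>
      rw [Finset.Nat.antidiagonalTuple_zero_succ]
      simp [Nat.choose_eq_zero_of_lt (by omega : k + 1 - 1 < k + 1)]
  | succ n ih =>
    intro k
    have hbij : (Finset.Nat.antidiagonalTuple (n + 1) k).card =
        ((Finset.range (k + 1)).sigma fun j => Finset.Nat.antidiagonalTuple n (k - j)).card := by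
      apply Finset.card_nbij' (i := fun q => (⟨q 0, Fin.tail q⟩ : Σ _ : ℕ, (Fin n → ℕ)))
        (j := fun p => Fin.cons p.1 p.2)
      · intro q hq
        rw [Finset.mem_coe, Finset.Nat.mem_antidiagonalTuple, Fin.sum_univ_succ] at hq
        simp only [Finset.mem_coe, Finset.mem_sigma, Finset.mem_range, Finset.Nat.mem_antidiagonalTuple]
        have ht : ∑ i, Fin.tail q i = ∑ i : Fin n, q i.succ := rfl
        exact ⟨by omega, by rw [ht]; omega⟩
      · intro p hp
        simp only [Finset.mem_coe, Finset.mem_sigma, Finset.mem_range, Finset.Nat.mem_antidiagonalTuple] at hp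
        simp only [Finset.mem_coe]
        rw [Finset.Nat.mem_antidiagonalTuple, Fin.sum_univ_succ]
        simp only [Fin.cons_zero, Fin.cons_succ]
        omega
      · intro q _; exact Fin.cons_self_tail q
      · intro p _
        simp only [Fin.cons_zero, Fin.tail_cons]
    rw [hbij, Finset.card_sigma]
    have : ∑ j ∈ Finset.range (k + 1), (Finset.Nat.antidiagonalTuple n (k - j)).card =
        ∑ j ∈ Finset.range (k + 1), (n + (k - j) - 1).choose (k - j) := by
      exact Finset.sum_congr rfl fun j _ => ih _
    rw [this]
    have hrefl := Finset.sum_range_reflect (fun j => (n + j - 1).choose j) (k + 1)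
    have hcongr : ∑ j ∈ Finset.range (k + 1), (n + (k - j) - 1).choose (k - j)
        = ∑ j ∈ Finset.range (k + 1), (n + (k + 1 - 1 - j) - 1).choose (k + 1 - 1 - j) := by
      refine Finset.sum_congr rfl fun j hj => ?_
      rw [Finset.mem_range] at hj
      congr 2 <;> omega
    rw [hcongr, hrefl, aux_choose_sum]
    congr 1
    omega

private lemma condC_iff {n : ℕ} (t : ℕ) (α γ : Fin n → ℕ) (hγ : ∀ i, γ i ≤ α i)
    (hα : ∀ i, 0 < α i) (q r : Fin n → ℕ) (hr : ∀ i, r i < α i) (hq : ∑ i, q i < t) :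
    ((∀ i, α i - γ i ≤ α i * q i + r i) ∧
      t - 1 ≤ ∑ i, (α i * q i + r i - (α i - γ i)) / α i) ↔
    (∑ i, q i = t - 1 ∧ ∀ i, α i - γ i ≤ r i) := by
  constructor
  · rintro ⟨h1, h2⟩
    have key : ∀ i, (α i * q i + r i - (α i - γ i)) / α i ≤ q i ∧
        ((α i * q i + r i - (α i - γ i)) / α i = q i → α i - γ i ≤ r i) := by
      intro i
      have hdiv : (α i * q i + r i) / α i = q i := by
        rw [Nat.mul_add_div (hα i), Nat.div_eq_of_lt (hr i), add_zero]
      constructor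
      · calc (α i * q i + r i - (α i - γ i)) / α i
            ≤ (α i * q i + r i) / α i := Nat.div_le_div_right (Nat.sub_le _ _)
          _ = q i := hdiv
      · intro he
        have hm : q i * α i ≤ α i * q i + r i - (α i - γ i) :=
          (Nat.le_div_iff_mul_le (hα i)).mp he.ge
        have hcomm : q i * α i = α i * q i := Nat.mul_comm _ _
        have := h1 i
        omega
    have hle : ∑ i, (α i * q i + r i - (α i - γ i)) / α i ≤ ∑ i, q i :=
      Finset.sum_le_sum fun i _ => (key i).1
    have hsum_eq : ∑ i, q i = t - 1 := by omega
    refine ⟨hsum_eq, fun i => (key i).2 ?_⟩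
    have heq : ∑ i, (α i * q i + r i - (α i - γ i)) / α i = ∑ i, q i := by omega
    exact (Finset.sum_eq_sum_iff_of_le fun i _ => (key i).1).mp heq i (Finset.mem_univ i)
  · rintro ⟨hsum, hs⟩
    refine ⟨fun i => le_trans (hs i) (Nat.le_add_left _ _), ?_⟩
    have hdiv : ∀ i, (α i * q i + r i - (α i - γ i)) / α i = q i := by
      intro i
      have h1 : α i * q i + r i - (α i - γ i) = α i * q i + (r i - (α i - γ i)) := by
        have := hs i; omega
      rw [h1, Nat.mul_add_div (hα i), Nat.div_eq_of_lt (by have := hr i; omega), add_zero]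
    rw [Finset.sum_congr rfl fun i _ => hdiv i, hsum]

theorem stmt8 {n : ℕ} (hn : 0 < n) (t : ℕ) (ht : 0 < t)
    (α γ : Fin n → ℕ) (hγ : ∀ i, γ i ≤ α i) :
    Set.ncard {β : Fin n →₀ ℕ |
        ¬ ∃ x : Fin n →₀ ℕ,
          ((∃ θ : Fin n → ℕ, (∑ i, θ i) = t ∧ ∀ i, x i = α i * θ i) ∨
           (∃ θ : Fin n → ℕ, (∑ i, θ i) = t - 1 ∧ ∀ i, x i = α i * θ i + (α i - γ i))) ∧
          x ≤ β}
      = (∏ i, α i) * Nat.choose (n + t - 1) n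
        - (∏ i, γ i) * Nat.choose (n + t - 2) (n - 1) := by
  by_cases hα : ∀ i, 0 < α i
  · -- main case
    -- membership characterization
    have hmem : ∀ β : Fin n →₀ ℕ,
        (¬ ∃ x : Fin n →₀ ℕ,
          ((∃ θ : Fin n → ℕ, (∑ i, θ i) = t ∧ ∀ i, x i = α i * θ i) ∨
           (∃ θ : Fin n → ℕ, (∑ i, θ i) = t - 1 ∧ ∀ i, x i = α i * θ i + (α i - γ i))) ∧
          x ≤ β) ↔
        ((∑ i, β i / α i < t) ∧
          ¬((∀ i, α i - γ i ≤ β i) ∧ t - 1 ≤ ∑ i, (β i - (α i - γ i)) / α i)) := by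
      intro β
      have hB : (∃ θ : Fin n → ℕ, (∑ i, θ i) = t ∧ ∀ i, α i * θ i ≤ β i) ↔
          t ≤ ∑ i, β i / α i := by
        constructor
        · rintro ⟨θ, hθs, hθ⟩
          calc t = ∑ i, θ i := hθs.symm
            _ ≤ ∑ i, β i / α i := Finset.sum_le_sum fun i _ =>
                (Nat.le_div_iff_mul_le (hα i)).mpr (by rw [Nat.mul_comm]; exact hθ i)
        · intro h
          obtain ⟨θ, hle, hsum⟩ := exists_sum_eq' t _ h
          refine ⟨θ, hsum, fun i => ?_⟩
          calc α i * θ i ≤ α i * (β i / α i) := Nat.mul_le_mul_left _ (hle i)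
            _ ≤ β i := by rw [Nat.mul_comm]; exact Nat.div_mul_le_self _ _
      have hC : (∃ θ : Fin n → ℕ, (∑ i, θ i) = t - 1 ∧
            ∀ i, α i * θ i + (α i - γ i) ≤ β i) ↔
          ((∀ i, α i - γ i ≤ β i) ∧ t - 1 ≤ ∑ i, (β i - (α i - γ i)) / α i) := by
        constructor
        · rintro ⟨θ, hθs, hθ⟩
          refine ⟨fun i => le_trans (Nat.le_add_left _ _) (hθ i), ?_⟩
          calc t - 1 = ∑ i, θ i := hθs.symm
            _ ≤ ∑ i, (β i - (α i - γ i)) / α i := Finset.sum_le_sum fun i _ =>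
                (Nat.le_div_iff_mul_le (hα i)).mpr (by
                  have h := hθ i
                  have hc : θ i * α i = α i * θ i := Nat.mul_comm _ _
                  omega)
        · rintro ⟨h1, h2⟩
          obtain ⟨θ, hle, hsum⟩ := exists_sum_eq' (t - 1) _ h2
          refine ⟨θ, hsum, fun i => ?_⟩
          have : θ i * α i ≤ β i - (α i - γ i) :=
            (Nat.le_div_iff_mul_le (hα i)).mp (hle i)
          have hcomm : θ i * α i = α i * θ i := Nat.mul_comm _ _
          have := h1 i
          omega
      constructor
      · intro h
        constructor
        · by_contra hc
          push_neg at hc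
          obtain ⟨θ, hθs, hθ⟩ := hB.mpr hc
          exact h ⟨Finsupp.equivFunOnFinite.symm fun i => α i * θ i,
            Or.inl ⟨θ, hθs, fun i => rfl⟩, Finsupp.le_def.mpr fun i => hθ i⟩
        · intro hc
          obtain ⟨θ, hθs, hθ⟩ := hC.mpr hc
          exact h ⟨Finsupp.equivFunOnFinite.symm fun i => α i * θ i + (α i - γ i),
            Or.inr ⟨θ, hθs, fun i => rfl⟩, Finsupp.le_def.mpr fun i => hθ i⟩
      · rintro ⟨h1, h2⟩ ⟨x, hx, hxβ⟩
        rw [Finsupp.le_def] at hxβ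
        rcases hx with ⟨θ, hθs, hθ⟩ | ⟨θ, hθs, hθ⟩
        · have : t ≤ ∑ i, β i / α i :=
            hB.mp ⟨θ, hθs, fun i => (hθ i) ▸ hxβ i⟩
          omega
        · exact h2 (hC.mp ⟨θ, hθs, fun i => (hθ i) ▸ hxβ i⟩)
    -- Finsets
    set sQ1 : Finset (Fin n → ℕ) :=
      (Fintype.piFinset fun _ => Finset.range t).filter (fun q => ∑ i, q i < t) with hsQ1
    set sQ2 : Finset (Fin n → ℕ) :=
      (Fintype.piFinset fun _ => Finset.range t).filter (fun q => ∑ i, q i = t - 1) with hsQ2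
    set sR1 : Finset (Fin n → ℕ) := Fintype.piFinset fun i => Finset.range (α i) with hsR1
    set sR2 : Finset (Fin n → ℕ) :=
      Fintype.piFinset fun i => Finset.Ico (α i - γ i) (α i) with hsR2
    set D : Finset ((Fin n → ℕ) × (Fin n → ℕ)) := (sQ1 ×ˢ sR1) \ (sQ2 ×ˢ sR2) with hD
    set g : (Fin n → ℕ) × (Fin n → ℕ) → (Fin n →₀ ℕ) :=
      fun p => Finsupp.equivFunOnFinite.symm fun i => α i * p.1 i + p.2 i with hg
    have hgi : ∀ (p : (Fin n → ℕ) × (Fin n → ℕ)) (i : Fin n),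
        g p i = α i * p.1 i + p.2 i := fun p i => rfl
    have hdiv : ∀ (q r : Fin n → ℕ), (∀ i, r i < α i) →
        ∀ i, (α i * q i + r i) / α i = q i := by
      intro q r hr i
      rw [Nat.mul_add_div (hα i), Nat.div_eq_of_lt (hr i), add_zero]
    have hsub : sQ2 ×ˢ sR2 ⊆ sQ1 ×ˢ sR1 := by
      intro p hp
      rw [Finset.mem_product] at hp ⊢
      obtain ⟨hp1, hp2⟩ := hp
      rw [hsQ2, Finset.mem_filter] at hp1
      rw [hsR2, Fintype.mem_piFinset] at hp2
      refine ⟨by rw [hsQ1, Finset.mem_filter]; exact ⟨hp1.1, by omega⟩, ?_⟩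
      rw [hsR1, Fintype.mem_piFinset]
      intro i
      have := Finset.mem_Ico.mp (hp2 i)
      exact Finset.mem_range.mpr (by omega)
    have hinj : Set.InjOn g (D : Set ((Fin n → ℕ) × (Fin n → ℕ))) := by
      intro p hp p' hp' he
      rw [Finset.mem_coe, hD, Finset.mem_sdiff, Finset.mem_product] at hp hp'
      have hr : ∀ i, p.2 i < α i := by
        intro i
        have := Fintype.mem_piFinset.mp (by rw [hsR1] at hp; exact hp.1.2) i
        exact Finset.mem_range.mp this
      have hr' : ∀ i, p'.2 i < α i := by
        intro i
        have := Fintype.mem_piFinset.mp (by rw [hsR1] at hp'; exact hp'.1.2) i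
        exact Finset.mem_range.mp this
      have hfe : ∀ i, α i * p.1 i + p.2 i = α i * p'.1 i + p'.2 i := by
        intro i
        have := DFunLike.congr_fun he i
        rwa [hgi, hgi] at this
      have hq : ∀ i, p.1 i = p'.1 i := by
        intro i
        rw [← hdiv p.1 p.2 hr i, ← hdiv p'.1 p'.2 hr' i, hfe i]
      have hrq : ∀ i, p.2 i = p'.2 i := by
        intro i
        have h1 := hfe i
        have h2 : α i * p.1 i = α i * p'.1 i := by rw [hq i]
        omega
      exact Prod.ext (funext hq) (funext hrq)
    have hset : {β : Fin n →₀ ℕ |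
        ¬ ∃ x : Fin n →₀ ℕ,
          ((∃ θ : Fin n → ℕ, (∑ i, θ i) = t ∧ ∀ i, x i = α i * θ i) ∨
           (∃ θ : Fin n → ℕ, (∑ i, θ i) = t - 1 ∧ ∀ i, x i = α i * θ i + (α i - γ i))) ∧
          x ≤ β} = ↑(D.image g) := by
      ext β
      rw [Set.mem_setOf_eq, hmem β, Finset.coe_image, Set.mem_image]
      constructor
      · rintro ⟨h1, h2⟩
        refine ⟨(fun i => β i / α i, fun i => β i % α i), ?_, ?_⟩
        · rw [Finset.mem_coe, hD, Finset.mem_sdiff]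
          constructor
          · rw [Finset.mem_product]
            constructor
            · rw [hsQ1, Finset.mem_filter]
              refine ⟨Fintype.mem_piFinset.mpr fun i => Finset.mem_range.mpr ?_, h1⟩
              show β i / α i < t
              have h3 : β i / α i ≤ ∑ j, β j / α j :=
                Finset.single_le_sum (f := fun j => β j / α j)
                  (fun j _ => Nat.zero_le _) (Finset.mem_univ i)
              omega
            · rw [hsR1]
              exact Fintype.mem_piFinset.mpr fun i =>
                Finset.mem_range.mpr (Nat.mod_lt _ (hα i))
          · intro hc
            rw [Finset.mem_product] at hc
            obtain ⟨hcq, hcr⟩ := hc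
            rw [hsQ2, Finset.mem_filter] at hcq
            rw [hsR2, Fintype.mem_piFinset] at hcr
            have hcond := (condC_iff t α γ hγ hα (fun i => β i / α i) (fun i => β i % α i)
              (fun i => Nat.mod_lt _ (hα i)) h1).mpr
              ⟨hcq.2, fun i => (Finset.mem_Ico.mp (hcr i)).1⟩
            simp only [Nat.div_add_mod] at hcond
            exact h2 hcond
        · exact Finsupp.ext fun i => Nat.div_add_mod (β i) (α i)
      · rintro ⟨p, hp, rfl⟩
        rw [Finset.mem_coe, hD, Finset.mem_sdiff, Finset.mem_product] at hp
        obtain ⟨⟨hpq, hpr⟩, hp2⟩ := hp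
        rw [hsQ1, Finset.mem_filter] at hpq
        have hr : ∀ i, p.2 i < α i := by
          intro i
          have := Fintype.mem_piFinset.mp (by rw [hsR1] at hpr; exact hpr) i
          exact Finset.mem_range.mp this
        simp only [hgi]
        have hsum : ∑ i, (α i * p.1 i + p.2 i) / α i = ∑ i, p.1 i :=
          Finset.sum_congr rfl fun i _ => hdiv p.1 p.2 hr i
        refine ⟨by rw [hsum]; exact hpq.2, ?_⟩
        intro hcc
        obtain ⟨hS, hs⟩ := (condC_iff t α γ hγ hα p.1 p.2 hr hpq.2).mp hcc
        apply hp2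
        rw [Finset.mem_product]
        constructor
        · rw [hsQ2, Finset.mem_filter]
          exact ⟨hpq.1, hS⟩
        · rw [hsR2, Fintype.mem_piFinset]
          exact fun i => Finset.mem_Ico.mpr ⟨hs i, hr i⟩
    rw [hset, Set.ncard_coe_finset, Finset.card_image_of_injOn hinj, hD,
      Finset.card_sdiff_of_subset hsub, Finset.card_product, Finset.card_product]
    have hR1card : sR1.card = ∏ i, α i := by
      rw [hsR1, Fintype.card_piFinset]
      exact Finset.prod_congr rfl fun i _ => Finset.card_range _
    have hR2card : sR2.card = ∏ i, γ i := by
      rw [hsR2, Fintype.card_piFinset]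
      refine Finset.prod_congr rfl fun i _ => ?_
      rw [Nat.card_Ico]
      have := hγ i
      omega
    have hQ1card : sQ1.card = (n + t - 1).choose n := by
      have hbij : sQ1.card = (Finset.Nat.antidiagonalTuple (n + 1) (t - 1)).card := by
        apply Finset.card_nbij' (i := fun q => Fin.cons (t - 1 - ∑ i, q i) q)
          (j := fun p : Fin (n + 1) → ℕ => (Fin.tail p : Fin n → ℕ))
        · intro q hq
          rw [hsQ1, Finset.mem_coe, Finset.mem_filter] at hq
          simp only [Finset.mem_coe]
          rw [Finset.Nat.mem_antidiagonalTuple, Fin.sum_univ_succ]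
          simp only [Fin.cons_zero, Fin.cons_succ]
          omega
        · intro p hp
          rw [Finset.mem_coe, Finset.Nat.mem_antidiagonalTuple, Fin.sum_univ_succ] at hp
          simp only [Finset.mem_coe]
          rw [hsQ1, Finset.mem_filter]
          have ht' : ∑ i, Fin.tail p i = ∑ i : Fin n, p i.succ := rfl
          refine ⟨Fintype.mem_piFinset.mpr fun i => Finset.mem_range.mpr ?_,
            by rw [ht']; omega⟩
          have hle : p i.succ ≤ ∑ j : Fin n, p j.succ :=
            Finset.single_le_sum (f := fun j : Fin n => p j.succ)
              (fun j _ => Nat.zero_le _) (Finset.mem_univ i)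
          have htt : Fin.tail p i = p i.succ := rfl
          rw [htt]
          omega
        · intro q _; exact Fin.tail_cons _ _
        · intro p hp
          rw [Finset.mem_coe, Finset.Nat.mem_antidiagonalTuple, Fin.sum_univ_succ] at hp
          have ht' : ∑ i, Fin.tail p i = ∑ i : Fin n, p i.succ := rfl
          have h0 : t - 1 - ∑ i, Fin.tail p i = p 0 := by rw [ht']; omega
          dsimp only
          rw [h0]
          exact Fin.cons_self_tail p
      rw [hbij, card_adt]
      have e1 : n + 1 + (t - 1) - 1 = n + t - 1 := by omega
      rw [e1]
      have h2 := Nat.choose_symm (show t - 1 ≤ n + t - 1 by omega)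
      rw [show n + t - 1 - (t - 1) = n by omega] at h2
      exact h2.symm
    have hQ2card : sQ2.card = (n + t - 2).choose (n - 1) := by
      have heq : sQ2 = Finset.Nat.antidiagonalTuple n (t - 1) := by
        ext q
        rw [hsQ2, Finset.mem_filter, Finset.Nat.mem_antidiagonalTuple]
        constructor
        · exact fun h => h.2
        · intro h
          refine ⟨Fintype.mem_piFinset.mpr fun i => Finset.mem_range.mpr ?_, h⟩
          have := Finset.single_le_sum (f := q) (fun j _ => Nat.zero_le _)
            (Finset.mem_univ i)
          omega
      rw [heq, card_adt]
      have e1 : n + (t - 1) - 1 = n + t - 2 := by omega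
      rw [e1]
      have h2 := Nat.choose_symm (show t - 1 ≤ n + t - 2 by omega)
      rw [show n + t - 2 - (t - 1) = n - 1 by omega] at h2
      exact h2.symm
    rw [hR1card, hR2card, hQ1card, hQ2card,
      Nat.mul_comm ((n + t - 1).choose n), Nat.mul_comm ((n + t - 2).choose (n - 1))]
  · -- degenerate case: some α i = 0
    push_neg at hα
    obtain ⟨i0, hi0⟩ := hα
    have hα0 : α i0 = 0 := by omega
    have hγ0 : γ i0 = 0 := by have := hγ i0; omega
    have hset : {β : Fin n →₀ ℕ |
        ¬ ∃ x : Fin n →₀ ℕ,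
          ((∃ θ : Fin n → ℕ, (∑ i, θ i) = t ∧ ∀ i, x i = α i * θ i) ∨
           (∃ θ : Fin n → ℕ, (∑ i, θ i) = t - 1 ∧ ∀ i, x i = α i * θ i + (α i - γ i))) ∧
          x ≤ β} = (∅ : Set (Fin n →₀ ℕ)) := by
      ext β
      simp only [Set.mem_setOf_eq, Set.mem_empty_iff_false, iff_false, not_not]
      refine ⟨0, Or.inl ⟨fun j => if j = i0 then t else 0, ?_, ?_⟩, (zero_le : 0 ≤ β)⟩
      · simp
      · intro j
        by_cases hj : j = i0
        · subst hj; simp [hα0]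
        · simp [hj]
    rw [hset, Set.ncard_empty]
    have h1 : ∏ i, α i = 0 := Finset.prod_eq_zero (Finset.mem_univ i0) hα0
    have h2 : ∏ i, γ i = 0 := Finset.prod_eq_zero (Finset.mem_univ i0) hγ0
    rw [h1, h2]
    simp
end

section
/- Let R be a commutative ring, Λ a finite set, and (g(λ))_{λ∈Λ} a family of monic polynomials in R[x_1,…,x_n], with θ(λ) the greatest element of supp(g(λ)). Then for any f ∈ R[x_1,…,x_n] there exist polynomials (p(λ))_{λ∈Λ} and τ such that: (1) f = ∑_λ p(λ)·g(λ) + τ; (2) supp(p(λ)) + supp(g(λ)) ⊆ Δ(supp(f)) for all λ; (3) for all λ and all α ∈ supp(τ), θ(λ) ≰ α; and (4) supp(τ) ⊆ Δ(supp(f)). -/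
open MvPolynomial

theorem stmt9 {R : Type*} [CommRing R] {n : ℕ} {Λ : Type*} [Fintype Λ]
    (g : Λ → MvPolynomial (Fin n) R) (θ : Λ → (Fin n →₀ ℕ))
    (hmem : ∀ l, θ l ∈ (g l).support)
    (hone : ∀ l, coeff (θ l) (g l) = 1)
    (hmax : ∀ l, ∀ γ ∈ (g l).support, γ ≤ θ l)
    (f : MvPolynomial (Fin n) R) :
    ∃ (p : Λ → MvPolynomial (Fin n) R) (τ : MvPolynomial (Fin n) R),
      f = (∑ l, p l * g l) + τ ∧
      (∀ l, ∀ a ∈ (p l).support, ∀ b ∈ (g l).support, ∃ c ∈ f.support, a + b ≤ c) ∧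
      (∀ l, ∀ a ∈ τ.support, ¬ θ l ≤ a) ∧
      (∀ a ∈ τ.support, ∃ c ∈ f.support, a ≤ c) := by
  classical
  set μ : MvPolynomial (Fin n) R → WithBot (Lex (Fin n →₀ ℕ)) :=
    fun q => q.support.sup (fun a => ((toLex a : Lex (Fin n →₀ ℕ)) : WithBot (Lex (Fin n →₀ ℕ))))
    with hμdef
  suffices H : ∀ d : WithBot (Lex (Fin n →₀ ℕ)), ∀ f : MvPolynomial (Fin n) R, μ f ≤ d →
      ∃ (p : Λ → MvPolynomial (Fin n) R) (τ : MvPolynomial (Fin n) R),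
      f = (∑ l, p l * g l) + τ ∧
      (∀ l, ∀ a ∈ (p l).support, ∀ b ∈ (g l).support, ∃ c ∈ f.support, a + b ≤ c) ∧
      (∀ l, ∀ a ∈ τ.support, ¬ θ l ≤ a) ∧
      (∀ a ∈ τ.support, ∃ c ∈ f.support, a ≤ c) by
    exact H (μ f) f le_rfl
  intro d
  induction d using WellFoundedLT.induction with
  | _ d IH =>
  intro f hf
  by_cases hf0 : f = 0
  · exact ⟨0, 0, by simp [hf0], by simp, by simp, by simp⟩
  obtain ⟨α, hαf, hαmax⟩ := f.support.exists_max_image toLex (support_nonempty.mpr hf0)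
  have hαd : ((toLex α : Lex (Fin n →₀ ℕ)) : WithBot (Lex (Fin n →₀ ℕ))) ≤ d :=
    le_trans (Finset.le_sup (f := fun a => ((toLex a : Lex (Fin n →₀ ℕ)) :
      WithBot (Lex (Fin n →₀ ℕ)))) hαf) hf
  by_cases hdiv : ∃ l, θ l ≤ α
  · -- reduction step
    obtain ⟨l, hl⟩ := hdiv
    set c : R := coeff α f with hc
    set q : MvPolynomial (Fin n) R := monomial (α - θ l) c * g l with hq
    set f' : MvPolynomial (Fin n) R := f - q with hf'
    have hcancel : (α - θ l) + θ l = α := tsub_add_cancel_of_le hl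
    have hq' : coeff α q = c := by
      have h := coeff_monomial_mul (θ l) (α - θ l) c (g l)
      rw [hcancel, hone l, mul_one] at h
      exact h
    have hcα : coeff α f' = 0 := by
      rw [hf', coeff_sub, hq', sub_self]
    have hsupp' : ∀ β ∈ f'.support, β ≠ α ∧ (β ∈ f.support ∨ β ≤ α) := by
      intro β hβ
      have hne : β ≠ α := by
        rintro rfl; exact (mem_support_iff.mp hβ) hcα
      refine ⟨hne, ?_⟩
      have := support_sub (Fin n) f q hβ
      rcases Finset.mem_union.mp this with h | h
      · exact Or.inl h
      · right
        have := support_mul _ _ h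
        rw [Finset.mem_add] at this
        obtain ⟨x, hx, y, hy, hxy⟩ := this
        have hx' : x = α - θ l := by
          have := support_monomial_subset hx
          simpa using this
        have hy' : y ≤ θ l := hmax l y hy
        calc β = x + y := hxy.symm
          _ ≤ (α - θ l) + θ l := by rw [hx']; exact add_le_add_right hy' _
          _ = α := hcancel
    have hlt : ∀ β ∈ f'.support, (toLex β : Lex (Fin n →₀ ℕ)) < toLex α := by
      intro β hβ
      obtain ⟨hne, hor⟩ := hsupp' β hβ
      have hle : (toLex β : Lex (Fin n →₀ ℕ)) ≤ toLex α := by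
        rcases hor with h | h
        · exact hαmax β h
        · exact Finsupp.toLex_monotone h
      exact lt_of_le_of_ne hle (fun h => hne (by exact toLex.injective h))
    have hμ' : μ f' < ((toLex α : Lex (Fin n →₀ ℕ)) : WithBot (Lex (Fin n →₀ ℕ))) := by
      rw [hμdef]
      exact (Finset.sup_lt_iff (WithBot.bot_lt_coe _)).mpr
        (fun b hb => WithBot.coe_lt_coe.mpr (hlt b hb))
    obtain ⟨p', τ', h1, h2, h3, h4⟩ := IH (μ f') (lt_of_lt_of_le hμ' hαd) f' le_rfl
    have transfer : ∀ b ∈ f'.support, ∃ c ∈ f.support, b ≤ c := by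
      intro b hb
      rcases (hsupp' b hb).2 with h | h
      · exact ⟨b, h, le_rfl⟩
      · exact ⟨α, hαf, h⟩
    refine ⟨fun l' => p' l' + if l' = l then monomial (α - θ l) c else 0, τ', ?_, ?_, h3, ?_⟩
    · have hsum : (∑ l', (p' l' + if l' = l then monomial (α - θ l) c else 0) * g l')
          = (∑ l', p' l' * g l') + q := by
        rw [hq]
        simp [add_mul, Finset.sum_add_distrib, ite_mul, Finset.sum_ite_eq']
      rw [hsum]
      have : f = f' + q := by rw [hf']; ring
      rw [this, h1]; ring
    · intro l' a ha b hb
      rcases Finset.mem_union.mp (support_add ha) with h | h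
      · obtain ⟨e, he, hle⟩ := h2 l' a h b hb
        obtain ⟨e', he', hle'⟩ := transfer e he
        exact ⟨e', he', le_trans hle hle'⟩
      · by_cases hll : l' = l
        · subst hll
          rw [if_pos rfl] at h
          have ha' : a = α - θ l' := by simpa using support_monomial_subset h
          refine ⟨α, hαf, ?_⟩
          calc a + b ≤ (α - θ l') + θ l' := by
                rw [ha']; exact add_le_add_right (hmax l' b hb) _
            _ = α := hcancel
        · rw [if_neg hll] at h; simp at h
    · intro a ha
      obtain ⟨e, he, hle⟩ := h4 a ha
      obtain ⟨e', he', hle'⟩ := transfer e he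
      exact ⟨e', he', le_trans hle hle'⟩
  · -- move leading term to remainder
    push_neg at hdiv
    set c : R := coeff α f with hc
    set f' : MvPolynomial (Fin n) R := f - monomial α c with hf'
    have hcα : coeff α f' = 0 := by
      rw [hf', coeff_sub, coeff_monomial, if_pos rfl, sub_self]
    have hsupp' : ∀ β ∈ f'.support, β ∈ f.support ∧ β ≠ α := by
      intro β hβ
      have hne : β ≠ α := by rintro rfl; exact (mem_support_iff.mp hβ) hcα
      refine ⟨?_, hne⟩
      rcases Finset.mem_union.mp (support_sub (Fin n) f _ hβ) with h | h
      · exact h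
      · exact absurd (by simpa using support_monomial_subset h) hne
    have hlt : ∀ β ∈ f'.support, (toLex β : Lex (Fin n →₀ ℕ)) < toLex α := by
      intro β hβ
      obtain ⟨hmem', hne⟩ := hsupp' β hβ
      exact lt_of_le_of_ne (hαmax β hmem') (fun h => hne (toLex.injective h))
    have hμ' : μ f' < ((toLex α : Lex (Fin n →₀ ℕ)) : WithBot (Lex (Fin n →₀ ℕ))) := by
      rw [hμdef]
      exact (Finset.sup_lt_iff (WithBot.bot_lt_coe _)).mpr
        (fun b hb => WithBot.coe_lt_coe.mpr (hlt b hb))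
    obtain ⟨p', τ', h1, h2, h3, h4⟩ := IH (μ f') (lt_of_lt_of_le hμ' hαd) f' le_rfl
    refine ⟨p', τ' + monomial α c, ?_, ?_, ?_, ?_⟩
    · have : f = f' + monomial α c := by rw [hf']; ring
      rw [this, h1]; ring
    · intro l' a ha b hb
      obtain ⟨e, he, hle⟩ := h2 l' a ha b hb
      exact ⟨e, (hsupp' e he).1, hle⟩
    · intro l' a ha
      rcases Finset.mem_union.mp (support_add ha) with h | h
      · exact h3 l' a h
      · have : a = α := by simpa using support_monomial_subset h
        rw [this]; exact hdiv l'
    · intro a ha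
      rcases Finset.mem_union.mp (support_add ha) with h | h
      · obtain ⟨e, he, hle⟩ := h4 a h
        exact ⟨e, (hsupp' e he).1, hle⟩
      · have : a = α := by simpa using support_monomial_subset h
        exact ⟨α, hαf, this.le⟩
end

section
/- Let R be a commutative ring, Λ a finite set, (g(λ))_{λ∈Λ} monic polynomials in R[x_1,…,x_n] with greatest support elements θ(λ), and Q an ideal containing all g(λ). Then the following are equivalent: (a) for every nonzero τ ∈ Q there exist α ∈ supp(τ) and r ∈ Λ with θ(r) ≤ α (i.e., (g(λ)) is a Gröbner basis of Q); (b) Q ∩ δ(ℕ^n − ∇({θ(λ)})) = {0}, where δ(A) is the set of polynomials with support in A; (c) every f ∈ Q can be written f = ∑_λ p(λ)g(λ) with supp(p(λ)) + supp(g(λ)) ⊆ Δ(supp(f)) for all λ; (d) for every f ∈ Q and every β ∈ max(supp(f)) there is ξ ∈ Λ with θ(ξ) ≤ β; (e) every f ∈ Q can be written f = ∑_λ p(λ)g(λ) with deg(p(λ)) + deg(g(λ)) ≤ deg(f) for all λ; (f) for every nonzero f ∈ Q and every β ∈ supp(f) with deg(f) = ∑β_i, there is ξ ∈ Λ with θ(ξ)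 ≤ β. -/
open MvPolynomial

namespace Stmt10Aux

variable {R : Type*} [CommRing R] {n : ℕ}

/-- total degree of a monomial exponent -/
def deg (α : Fin n →₀ ℕ) : ℕ := α.sum fun _ e => e

lemma deg_eq (α : Fin n →₀ ℕ) : deg α = ∑ i, α i :=
  Finsupp.sum_fintype _ _ (fun _ => rfl)

lemma deg_mono {a b : Fin n →₀ ℕ} (h : a ≤ b) : deg a ≤ deg b := by
  rw [deg_eq, deg_eq]
  exact Finset.sum_le_sum fun i _ => h i

lemma deg_add (a b : Fin n →₀ ℕ) : deg (a + b) = deg a + deg b := by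
  rw [deg_eq, deg_eq, deg_eq, ← Finset.sum_add_distrib]
  simp

lemma eq_of_le_of_deg_le {a b : Fin n →₀ ℕ} (h : a ≤ b) (hd : deg b ≤ deg a) : a = b := by
  ext i
  by_contra hne
  have hi : a i < b i := lt_of_le_of_ne (h i) hne
  have : deg a < deg b := by
    rw [deg_eq, deg_eq]
    exact Finset.sum_lt_sum (fun j _ => h j) ⟨i, Finset.mem_univ i, hi⟩
  omega

lemma deg_lt_of_le_of_ne {a b : Fin n →₀ ℕ} (h : a ≤ b) (hne : a ≠ b) : deg a < deg b := by
  rcases lt_or_ge (deg a) (deg b) with h' | h'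
  · exact h'
  · exact absurd (eq_of_le_of_deg_le h h') hne

lemma exists_add_of_coeff_mul_ne_zero {p q : MvPolynomial (Fin n) R} {β : Fin n →₀ ℕ}
    (h : coeff β (p * q) ≠ 0) :
    ∃ a b, a + b = β ∧ coeff a p ≠ 0 ∧ coeff b q ≠ 0 := by
  rw [coeff_mul] at h
  obtain ⟨x, hx, hx0⟩ := Finset.exists_ne_zero_of_sum_ne_zero h
  exact ⟨x.1, x.2, Finset.HasAntidiagonal.mem_antidiagonal.1 hx, left_ne_zero_of_mul hx0,
    right_ne_zero_of_mul hx0⟩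

lemma tdeg_eq {p : MvPolynomial (Fin n) R} {t : Fin n →₀ ℕ} (ht : t ∈ p.support)
    (hm : ∀ γ ∈ p.support, deg γ ≤ deg t) : p.totalDegree = deg t :=
  le_antisymm (Finset.sup_le hm) (le_totalDegree ht)

lemma sum_union_le {s t : Finset (Fin n →₀ ℕ)} (f : (Fin n →₀ ℕ) → ℕ) :
    ∑ x ∈ s ∪ t, f x ≤ ∑ x ∈ s, f x + ∑ x ∈ t, f x := by
  classical
  rw [← Finset.union_sdiff_self_eq_union, Finset.sum_union Finset.disjoint_sdiff]
  exact add_le_add le_rfl (Finset.sum_le_sum_of_subset (Finset.sdiff_subset))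

lemma division {Λ : Type*} [Fintype Λ]
    (g : Λ → MvPolynomial (Fin n) R) (θ : Λ → (Fin n →₀ ℕ))
    (hmem : ∀ l, θ l ∈ (g l).support)
    (hone : ∀ l, coeff (θ l) (g l) = 1)
    (hmax : ∀ l, ∀ γ ∈ (g l).support, γ ≤ θ l)
    (Q : Ideal (MvPolynomial (Fin n) R)) (hQ : ∀ l, g l ∈ Q)
    (ha : ∀ τ ∈ Q, τ ≠ 0 → ∃ a ∈ τ.support, ∃ r : Λ, θ r ≤ a) :
    ∀ f ∈ Q, ∃ p : Λ → MvPolynomial (Fin n) R, f = (∑ l, p l * g l) ∧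
      ∀ l, ∀ a ∈ (p l).support, ∀ b ∈ (g l).support, ∃ c ∈ f.support, a + b ≤ c := by
  classical
  set B : ℕ := (Finset.univ.sup fun l : Λ => (g l).support.card) + 1 with hB
  have hcard : ∀ l : Λ, (g l).support.card < B := fun l =>
    Nat.lt_succ_of_le (Finset.le_sup (f := fun l : Λ => (g l).support.card) (Finset.mem_univ l))
  set S : MvPolynomial (Fin n) R → Finset (Fin n →₀ ℕ) :=
    fun f => f.support.filter (fun α => ∃ r : Λ, θ r ≤ α) with hS
  set μ : MvPolynomial (Fin n) R → ℕ := fun f => ∑ α ∈ S f, B ^ deg α with hμ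
  suffices H : ∀ N : ℕ, ∀ f ∈ Q, μ f ≤ N →
      ∃ p : Λ → MvPolynomial (Fin n) R, f = (∑ l, p l * g l) ∧
      ∀ l, ∀ a ∈ (p l).support, ∀ b ∈ (g l).support, ∃ c ∈ f.support, a + b ≤ c by
    intro f hf
    exact H (μ f) f hf le_rfl
  intro N
  induction N using Nat.strong_induction_on with
  | _ N ih =>
    intro f hf hμf
    by_cases hf0 : f = 0
    · exact ⟨0, by simp [hf0], by simp⟩
    obtain ⟨α₀, hα₀, r₀, hr₀⟩ := ha f hf hf0
    have hSne : (S f).Nonempty := ⟨α₀, Finset.mem_filter.2 ⟨hα₀, r₀, hr₀⟩⟩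
    obtain ⟨α, hαS, hαmax⟩ := Finset.exists_max_image (S f) deg hSne
    obtain ⟨hαf, r, hr⟩ := Finset.mem_filter.1 hαS
    set c : R := coeff α f with hc
    have hc0 : c ≠ 0 := mem_support_iff.1 hαf
    set m : Fin n →₀ ℕ := α - θ r with hm
    have hmθ : m + θ r = α := tsub_add_cancel_of_le hr
    set h : MvPolynomial (Fin n) R := monomial m c * g r with hh
    have hhQ : h ∈ Q := Q.mul_mem_left _ (hQ r)
    have hch : coeff α h = c := by
      rw [hh, ← hmθ, coeff_monomial_mul, hone, mul_one]
    set f' : MvPolynomial (Fin n) R := f - h with hf'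
    have hf'Q : f' ∈ Q := Q.sub_mem hf hhQ
    have hcf' : ∀ β, coeff β f' ≠ 0 →
        β ≠ α ∧ (coeff β f ≠ 0 ∨ ∃ γ ∈ (g r).support, γ ≠ θ r ∧ β = m + γ) := by
      intro β hβ
      have hsub : coeff β f' = coeff β f - coeff β h := by rw [hf', coeff_sub]
      have hne : β ≠ α := by
        rintro rfl
        rw [hsub, hch, ← hc, sub_self] at hβ
        exact hβ rfl
      refine ⟨hne, ?_⟩
      by_cases hbf : coeff β f = 0
      · right
        have hbh : coeff β h ≠ 0 := by
          intro h0
          rw [hsub, hbf, h0, sub_self] at hβ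
          exact hβ rfl
        rw [hh] at hbh
        obtain ⟨a, b, hab, ha, hb⟩ := exists_add_of_coeff_mul_ne_zero hbh
        have ham : a = m := by
          by_contra hne'
          rw [coeff_monomial, if_neg (fun hh' => hne' hh'.symm)] at ha
          exact ha rfl
        subst ham
        refine ⟨b, mem_support_iff.2 hb, ?_, hab.symm⟩
        rintro rfl
        exact hne (hab.symm.trans hmθ)
      · exact Or.inl hbf
    have hΔ : ∀ β ∈ f'.support, ∃ cc ∈ f.support, β ≤ cc := by
      intro β hβ
      obtain ⟨-, hcase⟩ := hcf' β (mem_support_iff.1 hβ)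
      rcases hcase with hbf | ⟨γ, hγ, -, rfl⟩
      · exact ⟨β, mem_support_iff.2 hbf, le_rfl⟩
      · exact ⟨α, hαf, by rw [← hmθ]; exact add_le_add_right (hmax r γ hγ) m⟩
    set T : Finset (Fin n →₀ ℕ) := ((g r).support.erase (θ r)).image (fun γ => m + γ) with hT
    have hT_sub : S f' ⊆ (S f).erase α ∪ T := by
      intro β hβ
      obtain ⟨hβf', hex⟩ := Finset.mem_filter.1 hβ
      obtain ⟨hne, hcase⟩ := hcf' β (mem_support_iff.1 hβf')
      rcases hcase with hbf | ⟨γ, hγ, hγne, rfl⟩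
      · exact Finset.mem_union_left _
          (Finset.mem_erase.2 ⟨hne, Finset.mem_filter.2 ⟨mem_support_iff.2 hbf, hex⟩⟩)
      · exact Finset.mem_union_right _
          (Finset.mem_image.2 ⟨γ, Finset.mem_erase.2 ⟨hγne, hγ⟩, rfl⟩)
    have hdegT : ∀ β ∈ T, deg β + 1 ≤ deg α := by
      intro β hβ
      obtain ⟨γ, hγ, rfl⟩ := Finset.mem_image.1 hβ
      obtain ⟨hγne, hγs⟩ := Finset.mem_erase.1 hγ
      have h2 : deg γ < deg (θ r) := deg_lt_of_le_of_ne (hmax r γ hγs) hγne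
      have := deg_add m γ
      have := deg_add m (θ r)
      have : deg (m + θ r) = deg α := by rw [hmθ]
      omega
    have hμα : μ f = ∑ β ∈ (S f).erase α, B ^ deg β + B ^ deg α :=
      (Finset.sum_erase_add _ _ hαS).symm
    have hcardT : T.card < B :=
      lt_of_le_of_lt (Finset.card_image_le.trans
        (Finset.card_erase_lt_of_mem (hmem r)).le) (hcard r)
    have hBpos : 0 < B := by omega
    have hTsum : B * ∑ β ∈ T, B ^ deg β < B * B ^ deg α := by
      calc B * ∑ β ∈ T, B ^ deg β = ∑ β ∈ T, B ^ (deg β + 1) := by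
            rw [Finset.mul_sum]
            exact Finset.sum_congr rfl fun β _ => by rw [pow_succ, mul_comm]
        _ ≤ ∑ _β ∈ T, B ^ deg α := Finset.sum_le_sum fun β hβ =>
            Nat.pow_le_pow_right hBpos (hdegT β hβ)
        _ = T.card * B ^ deg α := by rw [Finset.sum_const, smul_eq_mul]
        _ < B * B ^ deg α := by
            have : 0 < B ^ deg α := Nat.pow_pos hBpos
            exact Nat.mul_lt_mul_of_lt_of_le hcardT le_rfl this
    have hμ'lt : μ f' < μ f := by
      have h1 : μ f' ≤ ∑ β ∈ (S f).erase α, B ^ deg β + ∑ β ∈ T, B ^ deg β :=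
        le_trans (Finset.sum_le_sum_of_subset hT_sub) (sum_union_le _)
      have h2 : B * μ f' < B * μ f := by
        calc B * μ f' ≤ B * (∑ β ∈ (S f).erase α, B ^ deg β + ∑ β ∈ T, B ^ deg β) :=
              Nat.mul_le_mul_left B h1
          _ = B * ∑ β ∈ (S f).erase α, B ^ deg β + B * ∑ β ∈ T, B ^ deg β := by ring
          _ < B * ∑ β ∈ (S f).erase α, B ^ deg β + B * B ^ deg α := by omega
          _ = B * μ f := by rw [hμα]; ring
      exact Nat.lt_of_mul_lt_mul_left h2
    obtain ⟨p', hp'eq, hp's⟩ := ih (μ f') (lt_of_lt_of_le hμ'lt hμf) f' hf'Q le_rfl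
    refine ⟨fun l => p' l + if l = r then monomial m c else 0, ?_, ?_⟩
    · have hsum : (∑ l, (p' l + if l = r then monomial m c else 0) * g l)
          = (∑ l, p' l * g l) + ∑ l, (if l = r then monomial m c else 0) * g l := by
        rw [← Finset.sum_add_distrib]
        exact Finset.sum_congr rfl fun l _ => by ring
      have hite : (∑ l, (if l = r then monomial m c else 0) * g l) = h := by
        rw [hh]
        rw [show (∑ l, (if l = r then monomial m c else 0) * g l)
            = ∑ l, (if l = r then monomial m c * g l else 0) from
          Finset.sum_congr rfl fun l _ => by split <;> simp_all]
        rw [Finset.sum_ite_eq' Finset.univ r (fun l => monomial m c * g l),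
          if_pos (Finset.mem_univ r)]
      rw [hsum, hite, ← hp'eq, hf']
      ring
    · intro l a ha b hb
      have hor : coeff a (p' l) ≠ 0 ∨ coeff a (if l = r then monomial m c else 0) ≠ 0 := by
        by_contra hcon
        push_neg at hcon
        have h' := mem_support_iff.1 ha
        rw [coeff_add, hcon.1, hcon.2, add_zero] at h'
        exact h' rfl
      rcases hor with h1 | h2
      · obtain ⟨c', hc', hle⟩ := hp's l a (mem_support_iff.2 h1) b hb
        obtain ⟨cc, hcc, hle2⟩ := hΔ c' hc'
        exact ⟨cc, hcc, le_trans hle hle2⟩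
      · have hlr : l = r := by
          by_contra hne
          rw [if_neg hne] at h2
          exact h2 rfl
        subst hlr
        rw [if_pos rfl, coeff_monomial] at h2
        have ham : a = m := by
          by_contra hne
          rw [if_neg (fun hh' => hne hh'.symm)] at h2
          exact h2 rfl
        subst ham
        exact ⟨α, hαf, by rw [← hmθ]; exact add_le_add_right (hmax l b hb) m⟩

end Stmt10Aux

open Stmt10Aux in
theorem stmt10 {R : Type*} [CommRing R] {n : ℕ} {Λ : Type*} [Fintype Λ]
    (g : Λ → MvPolynomial (Fin n) R) (θ : Λ → (Fin n →₀ ℕ))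
    (hmem : ∀ l, θ l ∈ (g l).support)
    (hone : ∀ l, coeff (θ l) (g l) = 1)
    (hmax : ∀ l, ∀ γ ∈ (g l).support, γ ≤ θ l)
    (Q : Ideal (MvPolynomial (Fin n) R))
    (hQ : ∀ l, g l ∈ Q) :
    List.TFAE [
      -- (a) Gröbner basis condition
      ∀ τ ∈ Q, τ ≠ 0 → ∃ a ∈ τ.support, ∃ r : Λ, θ r ≤ a,
      -- (b) Q ∩ δ(ℕⁿ − ∇({θ λ})) = {0}
      ∀ f ∈ Q, (∀ a ∈ f.support, ∀ r : Λ, ¬ θ r ≤ a) → f = 0,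
      -- (c) representation with support control
      ∀ f ∈ Q, ∃ p : Λ → MvPolynomial (Fin n) R, f = (∑ l, p l * g l) ∧
        ∀ l, ∀ a ∈ (p l).support, ∀ b ∈ (g l).support, ∃ c ∈ f.support, a + b ≤ c,
      -- (d) maximal support elements dominate some θ(ξ)
      ∀ f ∈ Q, ∀ β ∈ f.support, (∀ a ∈ f.support, β ≤ a → β = a) → ∃ ξ : Λ, θ ξ ≤ β,
      -- (e) representation with degree control
      ∀ f ∈ Q, ∃ p : Λ → MvPolynomial (Fin n) R, f = (∑ l, p l * g l) ∧
        ∀ l, p l ≠ 0 → (p l).totalDegree + (g l).totalDegree ≤ f.totalDegree,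
      -- (f) top-degree support elements dominate some θ(ξ)
      ∀ f ∈ Q, f ≠ 0 → ∀ β ∈ f.support, f.totalDegree = (∑ i, β i) →
        ∃ ξ : Λ, θ ξ ≤ β ] := by
  classical
  have htdeg : ∀ l, (g l).totalDegree = deg (θ l) := fun l =>
    tdeg_eq (hmem l) (fun γ hγ => deg_mono (hmax l γ hγ))
  tfae_have 1 → 3 := fun h1 => division g θ hmem hone hmax Q hQ h1
  tfae_have 3 → 4 := by
    intro h3 f hf β hβ hβmax
    obtain ⟨p, hpeq, hps⟩ := h3 f hf
    have hcoeff : coeff β f ≠ 0 := mem_support_iff.1 hβ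
    have hex : ∃ l, coeff β (p l * g l) ≠ 0 := by
      by_contra hcon
      push_neg at hcon
      rw [hpeq, coeff_sum] at hcoeff
      exact hcoeff (Finset.sum_eq_zero fun l _ => hcon l)
    obtain ⟨l, hl⟩ := hex
    obtain ⟨a, b, hab, hpa, hgb⟩ := exists_add_of_coeff_mul_ne_zero hl
    obtain ⟨cc, hcc, hle⟩ := hps l a (mem_support_iff.2 hpa) (θ l) (hmem l)
    have hble : b ≤ θ l := hmax l b (mem_support_iff.2 hgb)
    have h1 : β ≤ cc := hab ▸ le_trans (add_le_add_right hble a) hle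
    have h2 : β = cc := hβmax cc hcc h1
    exact ⟨l, le_trans le_add_self (h2 ▸ hle)⟩
  tfae_have 4 → 2 := by
    intro h4 f hf hnone
    by_contra hf0
    have hne : f.support.Nonempty :=
      Finset.nonempty_iff_ne_empty.2 (fun he => hf0 (support_eq_empty.1 he))
    obtain ⟨β, hβ, hβmax⟩ := f.support.exists_maximal hne
    obtain ⟨ξ, hξ⟩ := h4 f hf β hβ (fun a haf hle => by
      by_contra hne'
      exact hne' (le_antisymm hle (hβmax haf hle)))
    exact hnone β hβ ξ hξ
  tfae_have 2 → 1 := by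
    intro h2 τ hτ hτ0
    by_contra hcon
    push_neg at hcon
    exact hτ0 (h2 τ hτ fun a ha r => hcon a ha r)
  tfae_have 3 → 5 := by
    intro h3 f hf
    obtain ⟨p, hpeq, hps⟩ := h3 f hf
    refine ⟨p, hpeq, fun l hl => ?_⟩
    have hsne : (p l).support.Nonempty :=
      Finset.nonempty_iff_ne_empty.2 (fun he => hl (support_eq_empty.1 he))
    obtain ⟨a, haS, hamax⟩ := Finset.exists_max_image (p l).support deg hsne
    have htpl : (p l).totalDegree = deg a := tdeg_eq haS hamax
    obtain ⟨cc, hcc, hle⟩ := hps l a haS (θ l) (hmem l)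
    calc (p l).totalDegree + (g l).totalDegree = deg a + deg (θ l) := by
          rw [htpl, htdeg l]
      _ = deg (a + θ l) := (deg_add a (θ l)).symm
      _ ≤ deg cc := deg_mono hle
      _ ≤ f.totalDegree := le_totalDegree hcc
  tfae_have 5 → 6 := by
    intro h5 f hf hf0 β hβ hdeg
    obtain ⟨p, hpeq, hps⟩ := h5 f hf
    have hcoeff : coeff β f ≠ 0 := mem_support_iff.1 hβ
    have hex : ∃ l, coeff β (p l * g l) ≠ 0 := by
      by_contra hcon
      push_neg at hcon
      rw [hpeq, coeff_sum] at hcoeff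
      exact hcoeff (Finset.sum_eq_zero fun l _ => hcon l)
    obtain ⟨l, hl⟩ := hex
    obtain ⟨a, b, hab, hpa, hgb⟩ := exists_add_of_coeff_mul_ne_zero hl
    have hpl0 : p l ≠ 0 := fun h0 => hpa (by simp [h0])
    have h1 : deg a ≤ (p l).totalDegree := le_totalDegree (mem_support_iff.2 hpa)
    have h2 : deg b ≤ (g l).totalDegree := le_totalDegree (mem_support_iff.2 hgb)
    have h3 : (p l).totalDegree + (g l).totalDegree ≤ f.totalDegree := hps l hpl0
    have h4 : f.totalDegree = deg β := by rw [hdeg, deg_eq]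
    have h5' : deg a + deg b = deg β := by rw [← hab, deg_add]
    have h6 : (g l).totalDegree = deg (θ l) := htdeg l
    have hbθ : b ≤ θ l := hmax l b (mem_support_iff.2 hgb)
    have hbeq : b = θ l := eq_of_le_of_deg_le hbθ (by omega)
    exact ⟨l, by rw [← hbeq, ← hab]; exact le_add_self⟩
  tfae_have 6 → 1 := by
    intro h6 τ hτ hτ0
    have hne : τ.support.Nonempty :=
      Finset.nonempty_iff_ne_empty.2 (fun he => hτ0 (support_eq_empty.1 he))
    obtain ⟨β, hβ, hβmax⟩ := Finset.exists_max_image τ.support deg hne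
    have htd : τ.totalDegree = deg β := tdeg_eq hβ hβmax
    obtain ⟨ξ, hξ⟩ := h6 τ hτ hτ0 β hβ (by rw [htd, deg_eq])
    exact ⟨β, hβ, ξ, hξ⟩
  tfae_finish
end

section
/- Let R be an integral domain, S_1,…,S_n nonempty finite subsets of R, g_i = ∏_{u∈S_i}(x_i − u), and Q = {f ∈ R[x_1,…,x_n] : f(a) = 0 for all a ∈ ∏ S_i}. Then for every f ∈ Q there exist h_1,…,h_n with f = ∑_i h_i·g_i and supp(h_i) + supp(g_i) ⊆ Δ(supp(f)) for all i (in particular deg(h_i) + deg(g_i) ≤ deg(f)). -/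
open MvPolynomial Finset Pointwise

namespace Stmt11Aux

variable {R : Type*} [CommRing R] {n : ℕ}

/-- weight (total degree) of an exponent vector -/
def w (a : Fin n →₀ ℕ) : ℕ := ∑ i, a i

lemma w_mono {a b : Fin n →₀ ℕ} (h : a ≤ b) : w a ≤ w b :=
  Finset.sum_le_sum fun i _ => h i

lemma w_add (a b : Fin n →₀ ℕ) : w (a + b) = w a + w b := by
  simp [w, Finset.sum_add_distrib]

lemma w_single (i : Fin n) (k : ℕ) : w (Finsupp.single i k) = k := by
  simp [w, Finsupp.single_apply]

lemma le_w (a : Fin n →₀ ℕ) (i : Fin n) : a i ≤ w a :=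
  Finset.single_le_sum (fun _ _ => Nat.zero_le _) (Finset.mem_univ i)

lemma mem_supp_X_sub_C {i : Fin n} {u : R} {m : Fin n →₀ ℕ}
    (h : m ∈ (X i - C u : MvPolynomial (Fin n) R).support) :
    m = Finsupp.single i 1 ∨ m = 0 := by
  classical
  rw [mem_support_iff, coeff_sub, coeff_X', coeff_C] at h
  by_contra hc
  push_neg at hc
  rw [if_neg (fun hh => hc.1 hh.symm), if_neg (fun hh => hc.2 hh.symm)] at h
  simp at h

lemma g_supp_coeff (i : Fin n) (s : Finset R) :
    (∀ b ∈ (∏ u ∈ s, (X i - C u : MvPolynomial (Fin n) R)).support,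
        ∃ k ≤ s.card, b = Finsupp.single i k) ∧
    coeff (Finsupp.single i s.card) (∏ u ∈ s, (X i - C u : MvPolynomial (Fin n) R)) = 1 := by
  classical
  induction s using Finset.induction with
  | empty =>
    constructor
    · intro b hb
      refine ⟨0, le_rfl, ?_⟩
      rw [Finset.prod_empty, mem_support_iff, coeff_one] at hb
      by_contra hc
      rw [if_neg] at hb
      · exact hb rfl
      · intro hh
        exact hc (by rw [← hh, Finsupp.single_zero])
    · rw [Finset.prod_empty, Finset.card_empty, Finsupp.single_zero, coeff_one, if_pos rfl]
  | @insert a s ha ih =>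
    rw [Finset.prod_insert ha, Finset.card_insert_of_notMem ha]
    constructor
    · intro b hb
      have hsub := MvPolynomial.support_mul _ _ hb
      rw [Finset.mem_add] at hsub
      obtain ⟨b1, hb1, b2, hb2, rfl⟩ := hsub
      obtain ⟨k, hk, rfl⟩ := ih.1 b2 hb2
      rcases mem_supp_X_sub_C hb1 with h1 | h1
      · refine ⟨k + 1, by omega, ?_⟩
        rw [h1, ← Finsupp.single_add]
        congr 1
        omega
      · exact ⟨k, by omega, by rw [h1, zero_add]⟩
    · rw [sub_mul, coeff_sub]
      have h1 : coeff (Finsupp.single i (s.card + 1))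
          (X i * ∏ u ∈ s, (X i - C u : MvPolynomial (Fin n) R)) = 1 := by
        have : Finsupp.single i (s.card + 1) =
            Finsupp.single i 1 + Finsupp.single i s.card := by
          rw [← Finsupp.single_add]
          congr 1
          omega
        rw [this, coeff_X_mul]
        exact ih.2
      have h2 : coeff (Finsupp.single i (s.card + 1))
          (C a * ∏ u ∈ s, (X i - C u : MvPolynomial (Fin n) R)) = 0 := by
        rw [coeff_C_mul]
        have : Finsupp.single i (s.card + 1) ∉
            (∏ u ∈ s, (X i - C u : MvPolynomial (Fin n) R)).support := by
          intro hmem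
          obtain ⟨k, hk, hkeq⟩ := ih.1 _ hmem
          have := Finsupp.single_injective i hkeq
          omega
        rw [notMem_support_iff.mp this, mul_zero]
      rw [h1, h2, sub_zero]

lemma division (S : Fin n → Finset R) (hS : ∀ i, (S i).Nonempty) :
    ∀ (N : ℕ) (f : MvPolynomial (Fin n) R),
      (∑ a ∈ f.support.filter (fun a => ∃ i, (S i).card ≤ a i),
          ((Finset.univ.sup fun i => (S i).card) + 2) ^ w a) ≤ N →
      ∃ (h : Fin n → MvPolynomial (Fin n) R) (r : MvPolynomial (Fin n) R),
        f = (∑ i, h i * ∏ u ∈ S i, (X i - C u)) + r ∧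
        (∀ i, ∀ a ∈ (h i).support, ∃ c ∈ f.support, a + Finsupp.single i (S i).card ≤ c) ∧
        (∀ a ∈ r.support, ∃ c ∈ f.support, a ≤ c) ∧
        (∀ a ∈ r.support, ∀ i, a i < (S i).card) := by
  classical
  set B : ℕ := (Finset.univ.sup fun i : Fin n => (S i).card) + 2 with hB
  intro N
  induction N with
  | zero =>
    intro f hf
    have hnobad : ∀ a ∈ f.support, ¬ ∃ i, (S i).card ≤ a i := by
      intro a ha hbad
      have hmem : a ∈ f.support.filter (fun a => ∃ i, (S i).card ≤ a i) :=
        Finset.mem_filter.mpr ⟨ha, hbad⟩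
      have hpos : 0 < B ^ w a := pow_pos (by omega) _
      have h2 : B ^ w a ≤ ∑ x ∈ f.support.filter (fun a => ∃ i, (S i).card ≤ a i), B ^ w x :=
        Finset.single_le_sum (f := fun a => B ^ w a) (fun _ _ => Nat.zero_le _) hmem
      omega
    refine ⟨0, f, by simp, by simp, fun a ha => ⟨a, ha, le_rfl⟩, ?_⟩
    intro a ha i
    by_contra hc
    exact hnobad a ha ⟨i, by omega⟩
  | succ N IH =>
    intro f hf
    by_cases hbad : ∃ a ∈ f.support, ∃ i, (S i).card ≤ a i
    · obtain ⟨α, hαf, i, hti⟩ := hbad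
      set t : ℕ := (S i).card with ht
      set g : MvPolynomial (Fin n) R := ∏ u ∈ S i, (X i - C u) with hgdef
      set c0 : R := coeff α f with hc0
      set β : Fin n →₀ ℕ := α - Finsupp.single i t with hβdef
      have hle : Finsupp.single i t ≤ α := Finsupp.single_le_iff.mpr hti
      have hβ : β + Finsupp.single i t = α := tsub_add_cancel_of_le hle
      set f' : MvPolynomial (Fin n) R := f - monomial β c0 * g with hf'def
      -- coefficient of α in monomial β c0 * g
      have hcα : coeff α (monomial β c0 * g) = c0 := by
        rw [← hβ, coeff_monomial_mul, (g_supp_coeff i (S i)).2, mul_one]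
      have hcα' : coeff α f' = 0 := by
        rw [hf'def, coeff_sub, hcα, ← hc0, sub_self]
      -- support of monomial β c0 * g
      have hmg : ∀ γ ∈ (monomial β c0 * g).support, ∃ k ≤ t, γ = β + Finsupp.single i k := by
        intro γ hγ
        have hsub := MvPolynomial.support_mul _ _ hγ
        rw [Finset.mem_add] at hsub
        obtain ⟨b1, hb1, b2, hb2, rfl⟩ := hsub
        have hb1' : b1 = β := by
          rw [mem_support_iff, coeff_monomial] at hb1
          by_contra hc
          rw [if_neg (fun hh => hc hh.symm)] at hb1
          exact hb1 rfl
        obtain ⟨k, hk, rfl⟩ := (g_supp_coeff i (S i)).1 b2 hb2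
        exact ⟨k, hk, by rw [hb1']⟩
      -- support of f'
      have hsf' : ∀ γ ∈ f'.support, γ ∈ f.support ∨ γ ∈ (monomial β c0 * g).support := by
        intro γ hγ
        rw [mem_support_iff, hf'def, coeff_sub] at hγ
        by_contra hc
        push_neg at hc
        rw [notMem_support_iff.mp hc.1, notMem_support_iff.mp hc.2, sub_zero] at hγ
        exact hγ rfl
      -- domination
      have hdom : ∀ γ ∈ f'.support, ∃ c ∈ f.support, γ ≤ c := by
        intro γ hγ
        rcases hsf' γ hγ with h | h
        · exact ⟨γ, h, le_rfl⟩
        · obtain ⟨k, hk, rfl⟩ := hmg γ h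
          refine ⟨α, hαf, ?_⟩
          rw [← hβ]
          exact add_le_add le_rfl (Finsupp.single_le_iff.mpr (by simpa using hk))
      -- measure decrease
      have hwα : t ≤ w α := le_trans hti (le_w α i)
      have htB : t < B := by
        have : t ≤ Finset.univ.sup fun i : Fin n => (S i).card :=
          Finset.le_sup (f := fun j : Fin n => (S j).card) (Finset.mem_univ i)
        omega
      have ht1 : 1 ≤ t := (hS i).card_pos
      set Γ : Finset (Fin n →₀ ℕ) :=
        (Finset.range t).image (fun k => β + Finsupp.single i k) with hΓ
      have hΓw : ∀ γ ∈ Γ, w γ + 1 ≤ w α := by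
        intro γ hγ
        rw [hΓ, Finset.mem_image] at hγ
        obtain ⟨k, hk, rfl⟩ := hγ
        rw [Finset.mem_range] at hk
        rw [← hβ, w_add, w_add, w_single, w_single]
        omega
      set F := f.support.filter (fun a => ∃ i, (S i).card ≤ a i) with hF
      set F' := f'.support.filter (fun a => ∃ i, (S i).card ≤ a i) with hF'
      have hαF : α ∈ F := Finset.mem_filter.mpr ⟨hαf, ⟨i, hti⟩⟩
      have hsubset : F' ⊆ F.erase α ∪ Γ := by
        intro γ hγ
        rw [hF', Finset.mem_filter] at hγ
        obtain ⟨hγs, hγbad⟩ := hγ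
        have hγα : γ ≠ α := by
          intro hh
          rw [hh, mem_support_iff] at hγs
          exact hγs hcα'
        rcases hsf' γ hγs with h | h
        · exact Finset.mem_union_left _ (Finset.mem_erase.mpr ⟨hγα,
            Finset.mem_filter.mpr ⟨h, hγbad⟩⟩)
        · obtain ⟨k, hk, rfl⟩ := hmg γ h
          have hkt : k < t := by
            rcases Nat.lt_or_ge k t with h' | h'
            · exact h'
            · exfalso
              apply hγα
              have hkt' : k = t := le_antisymm hk h'
              rw [hkt', hβ]
          exact Finset.mem_union_right _ (Finset.mem_image.mpr
            ⟨k, Finset.mem_range.mpr hkt, rfl⟩)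
      have hμ1 : ∑ a ∈ F', B ^ w a ≤ ∑ a ∈ F.erase α, B ^ w a + ∑ a ∈ Γ, B ^ w a := by
        calc ∑ a ∈ F', B ^ w a ≤ ∑ a ∈ F.erase α ∪ Γ, B ^ w a :=
              Finset.sum_le_sum_of_subset hsubset
          _ ≤ ∑ a ∈ F.erase α, B ^ w a + ∑ a ∈ Γ, B ^ w a := by
              have := Finset.sum_union_inter (s₁ := F.erase α) (s₂ := Γ)
                (f := fun a => B ^ w a)
              omega
      have hΓlt : ∑ a ∈ Γ, B ^ w a < B ^ w α := by
        have h1 : B * ∑ a ∈ Γ, B ^ w a ≤ t * B ^ w α := by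
          rw [Finset.mul_sum]
          calc ∑ a ∈ Γ, B * B ^ w a ≤ ∑ _a ∈ Γ, B ^ w α := by
                apply Finset.sum_le_sum
                intro a ha
                calc B * B ^ w a = B ^ (w a + 1) := by ring
                  _ ≤ B ^ w α := Nat.pow_le_pow_right (by omega) (hΓw a ha)
            _ = Γ.card * B ^ w α := by rw [Finset.sum_const, smul_eq_mul]
            _ ≤ t * B ^ w α := by
                apply Nat.mul_le_mul_right
                calc Γ.card ≤ (Finset.range t).card := Finset.card_image_le
                  _ = t := Finset.card_range t
        have h2 : t * B ^ w α < B * B ^ w α :=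
          mul_lt_mul_of_pos_right htB (pow_pos (by omega) _)
        have := lt_of_le_of_lt h1 h2
        exact lt_of_mul_lt_mul_left this (Nat.zero_le B)
      have hμf : ∑ a ∈ F.erase α, B ^ w a + B ^ w α = ∑ a ∈ F, B ^ w a :=
        Finset.sum_erase_add F _ hαF
      have hmeas : ∑ a ∈ F', B ^ w a ≤ N := by
        have hfN : ∑ a ∈ F, B ^ w a ≤ N + 1 := hf
        omega
      obtain ⟨h', r, heq, hh, hr1, hr2⟩ := IH f' hmeas
      refine ⟨fun j => h' j + if j = i then monomial β c0 else 0, r, ?_, ?_, ?_, ?_⟩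
      · have hite : (∑ j, (if j = i then monomial β c0 else 0) *
            ∏ u ∈ S j, (X j - C u)) = monomial β c0 * g := by
          rw [Finset.sum_eq_single i]
          · rw [if_pos rfl]
          · intro j _ hj
            rw [if_neg hj, zero_mul]
          · intro hni
            exact absurd (Finset.mem_univ i) hni
        have hsum : (∑ j, (h' j + if j = i then monomial β c0 else 0) *
            ∏ u ∈ S j, (X j - C u)) =
            (∑ j, h' j * ∏ u ∈ S j, (X j - C u)) + monomial β c0 * g := by
          rw [← hite, ← Finset.sum_add_distrib]
          exact Finset.sum_congr rfl fun j _ => add_mul _ _ _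
        have hfe : f = f' + monomial β c0 * g := by rw [hf'def]; ring
        rw [hfe, heq, hsum]
        ring
      · intro j a ha
        rcases Finset.mem_union.mp (MvPolynomial.support_add ha) with h | h
        · obtain ⟨c, hc, hac⟩ := hh j a h
          obtain ⟨c', hc', hcc'⟩ := hdom c hc
          exact ⟨c', hc', le_trans hac hcc'⟩
        · by_cases hji : j = i
          · subst hji
            rw [if_pos rfl] at h
            have hab : a = β := by
              rw [mem_support_iff, coeff_monomial] at h
              by_contra hc
              rw [if_neg (fun hh => hc hh.symm)] at h
              exact h rfl
            refine ⟨α, hαf, ?_⟩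
            rw [hab, hβ]
          · rw [if_neg hji] at h
            simp at h
      · intro a ha
        obtain ⟨c, hc, hac⟩ := hr1 a ha
        obtain ⟨c', hc', hcc'⟩ := hdom c hc
        exact ⟨c', hc', le_trans hac hcc'⟩
      · exact hr2
    · push_neg at hbad
      refine ⟨0, f, by simp, by simp, fun a ha => ⟨a, ha, le_rfl⟩, ?_⟩
      intro a ha j
      by_contra hc
      have := hbad a ha j
      omega

lemma eval_zero_of_small {R : Type*} [CommRing R] [IsDomain R] :
    ∀ {n : ℕ} (S : Fin n → Finset R) (f : MvPolynomial (Fin n) R),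
      (∀ a ∈ f.support, ∀ i, a i < (S i).card) →
      (∀ x : Fin n → R, (∀ i, x i ∈ S i) → eval x f = 0) → f = 0 := by
  intro n
  induction n with
  | zero =>
    intro S f hsupp heval
    have h0 : f = C (coeff 0 f) := eq_C_of_isEmpty f
    have := heval Fin.elim0 (fun i => i.elim0)
    rw [h0, eval_C] at this
    rw [h0, this, map_zero]
  | succ n IH =>
    intro S f hsupp heval
    by_cases hf0 : f = 0
    · exact hf0
    have hcard0 : 0 < (S 0).card := by
      obtain ⟨a, ha⟩ := (support_nonempty.mpr hf0)
      exact lt_of_le_of_lt (Nat.zero_le _) (hsupp a ha 0)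
    have key : ∀ k, (finSuccEquiv R n f).coeff k = 0 := by
      intro k
      apply IH (fun i => S i.succ)
      · intro m hm i
        have hc : coeff (m.cons k) f ≠ 0 := by
          rw [← finSuccEquiv_coeff_coeff]
          exact mem_support_iff.mp hm
        have := hsupp _ (mem_support_iff.mpr hc) i.succ
        rwa [Finsupp.cons_succ] at this
      · intro b hb
        have hmap : (finSuccEquiv R n f).map (eval b) = 0 := by
          apply Polynomial.eq_zero_of_natDegree_lt_card_of_eval_eq_zero' _ (S 0)
          · intro s hs
            rw [← eval_eq_eval_mv_eval']
            apply heval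
            intro j
            refine Fin.cases ?_ ?_ j
            · simpa using hs
            · intro j'
              simpa using hb j'
          · calc ((finSuccEquiv R n f).map (eval b)).natDegree
                ≤ (finSuccEquiv R n f).natDegree := Polynomial.natDegree_map_le
              _ = degreeOf 0 f := natDegree_finSuccEquiv f
              _ < (S 0).card := by
                  rw [degreeOf_lt_iff hcard0]
                  intro m hm
                  exact hsupp m hm 0
        have := congrArg (fun p => Polynomial.coeff p k) hmap
        simpa [Polynomial.coeff_map] using this
    have hq : finSuccEquiv R n f = 0 := Polynomial.ext fun k => by simp [key k]
    exact (finSuccEquiv R n).injective (by rw [hq, map_zero])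

end Stmt11Aux

open Stmt11Aux in
theorem stmt11 {R : Type*} [CommRing R] [IsDomain R] {n : ℕ}
    (S : Fin n → Finset R) (hS : ∀ i, (S i).Nonempty)
    (f : MvPolynomial (Fin n) R)
    (hf : ∀ a : Fin n → R, (∀ i, a i ∈ S i) → eval a f = 0) :
    ∃ h : Fin n → MvPolynomial (Fin n) R,
      f = ∑ i, h i * ∏ u ∈ S i, (X i - C u) ∧
      ∀ i, ∀ a ∈ (h i).support, ∀ b ∈ (∏ u ∈ S i, (X i - C u : MvPolynomial (Fin n) R)).support,
        ∃ c ∈ f.support, a + b ≤ c := by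
  classical
  obtain ⟨h, r, heq, hh, hr1, hr2⟩ := division S hS _ f le_rfl
  have hr0 : r = 0 := by
    apply eval_zero_of_small S r hr2
    intro x hx
    have hfx : eval x f = 0 := hf x hx
    have hgz : ∀ i, eval x (∏ u ∈ S i, (X i - C u)) = 0 := by
      intro i
      rw [eval_prod]
      apply Finset.prod_eq_zero (hx i)
      simp
    rw [heq, map_add, map_sum] at hfx
    have hz : ∀ i ∈ Finset.univ, eval x (h i * ∏ u ∈ S i, (X i - C u)) = 0 := by
      intro i _
      rw [map_mul, hgz i, mul_zero]
    rw [Finset.sum_eq_zero hz, zero_add] at hfx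
    exact hfx
  rw [hr0, add_zero] at heq
  refine ⟨h, heq, ?_⟩
  intro i a ha b hb
  obtain ⟨c, hc, hac⟩ := hh i a ha
  refine ⟨c, hc, le_trans ?_ hac⟩
  obtain ⟨k, hk, rfl⟩ := (g_supp_coeff i (S i)).1 b hb
  exact add_le_add le_rfl (Finsupp.single_le_iff.mpr (by simpa using hk))
end

section
/- Let R be an integral domain, S_1,…,S_n nonempty finite subsets of R, and f ∈ R[x_1,…,x_n] vanishing on all of ∏_{i=1}^n S_i. Then for every β ∈ max(supp(f)) there exists i ∈ {1,…,n} with |S_i| ≤ β_i. Equivalently: if t ∈ ℕ^n is a maximal element of supp(f) with t_i ≤ |S_i| − 1 for all i, then f does not vanish identically on ∏ S_i. -/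
open MvPolynomial

private lemma sum_modByMonic' {R : Type*} [CommRing R] {ι : Type*} (s : Finset ι)
    (p : ι → Polynomial R) (q : Polynomial R) :
    (∑ i ∈ s, p i) %ₘ q = ∑ i ∈ s, (p i) %ₘ q := by
  classical
  induction s using Finset.induction with
  | empty => simp [Polynomial.zero_modByMonic]
  | insert _ _ h ih =>
    rw [Finset.sum_insert h, Finset.sum_insert h, Polynomial.add_modByMonic, ih]

private lemma lason_aux {R : Type*} [CommRing R] [IsDomain R] :
    ∀ (n : ℕ) (S : Fin n → Finset R) (f : MvPolynomial (Fin n) R),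
      (∀ a : Fin n → R, (∀ i, a i ∈ S i) → eval a f = 0) →
      ∀ β ∈ f.support, (∀ a ∈ f.support, β ≤ a → β = a) → ∃ i, (S i).card ≤ β i := by
  intro n
  induction n with
  | zero =>
    intro S f hf β hβ _
    exfalso
    have h0 : eval (fun i : Fin 0 => i.elim0) f = 0 := hf _ (fun i => i.elim0)
    have : f = MvPolynomial.C (f.coeff 0) := MvPolynomial.eq_C_of_isEmpty f
    rw [this] at h0 hβ
    rw [eval_C] at h0
    rw [h0] at hβ
    simp at hβ
  | succ n ih =>
    intro S f hf β hβ hmax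
    classical
    by_cases hcard : (S 0).card ≤ β 0
    · exact ⟨0, hcard⟩
    push_neg at hcard
    set b : ℕ := β 0 with hb
    obtain ⟨T, hTS, hT⟩ := Finset.exists_subset_card_eq (show b + 1 ≤ (S 0).card from hcard)
    set q : Polynomial R := ∏ s ∈ T, (Polynomial.X - Polynomial.C s) with hq
    have hqmonic : q.Monic := Polynomial.monic_prod_of_monic _ _
      (fun s _ => Polynomial.monic_X_sub_C s)
    have hqdeg : q.natDegree = b + 1 := by
      rw [hq, Polynomial.natDegree_prod_of_monic _ _ (fun s _ => Polynomial.monic_X_sub_C s)]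
      simp [hT]
    have hqne1 : q ≠ 1 := by
      intro h
      rw [h, Polynomial.natDegree_one] at hqdeg
      omega
    set f' : Polynomial (MvPolynomial (Fin n) R) := finSuccEquiv R n f with hf'
    set ρ : ℕ → Polynomial R := fun k => (Polynomial.X ^ k) %ₘ q with hρ
    have hρ_le : ∀ k ≤ b, ρ k = Polynomial.X ^ k := by
      intro k hk
      rw [hρ]
      rw [Polynomial.modByMonic_eq_self_iff hqmonic]
      rw [Polynomial.degree_X_pow, Polynomial.degree_eq_natDegree hqmonic.ne_zero, hqdeg]
      exact_mod_cast Nat.lt_succ_of_le hk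
    have hρdeg : ∀ k, (ρ k).natDegree < b + 1 := by
      intro k
      have := Polynomial.natDegree_modByMonic_lt (Polynomial.X ^ k) hqmonic hqne1
      rwa [hqdeg] at this
    set g : MvPolynomial (Fin n) R :=
      ∑ k ∈ f'.support, ((ρ k).coeff b) • f'.coeff k with hg
    -- coefficient formula for g
    have hcoeffg : ∀ m : Fin n →₀ ℕ,
        MvPolynomial.coeff m g = ∑ k ∈ f'.support, (ρ k).coeff b * MvPolynomial.coeff (m.cons k) f := by
      intro m
      rw [hg, MvPolynomial.coeff_sum]
      refine Finset.sum_congr rfl fun k _ => ?_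
      rw [MvPolynomial.coeff_smul, smul_eq_mul, finSuccEquiv_coeff_coeff]
    have hβcons : (Finsupp.tail β).cons b = β := Finsupp.cons_tail β
    have hβcoeff : MvPolynomial.coeff (Finsupp.tail β) (f'.coeff b) = MvPolynomial.coeff β f := by
      rw [finSuccEquiv_coeff_coeff, hβcons]
    have hβne : MvPolynomial.coeff β f ≠ 0 := MvPolynomial.mem_support_iff.mp hβ
    have hbmem : b ∈ f'.support := by
      rw [Polynomial.mem_support_iff]
      intro h
      rw [h] at hβcoeff
      exact hβne (by simpa using hβcoeff.symm)
    -- (b) coeff β' g = coeff β f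
    have hgβ : MvPolynomial.coeff (Finsupp.tail β) g = MvPolynomial.coeff β f := by
      rw [hcoeffg]
      rw [Finset.sum_eq_single b]
      · rw [hρ_le b le_rfl, Polynomial.coeff_X_pow, if_pos rfl, one_mul, hβcons]
      · intro k _ hkb
        rcases lt_or_gt_of_ne hkb with hlt | hgt
        · rw [hρ_le k hlt.le, Polynomial.coeff_X_pow, if_neg (by omega), zero_mul]
        · have : MvPolynomial.coeff ((Finsupp.tail β).cons k) f = 0 := by
            by_contra hne
            have hmem : (Finsupp.tail β).cons k ∈ f.support := MvPolynomial.mem_support_iff.mpr hne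
            have hle : β ≤ (Finsupp.tail β).cons k := by
              rw [Finsupp.le_def]
              intro i
              refine Fin.cases ?_ (fun j => ?_) i
              · rw [Finsupp.cons_zero]; exact hgt.le
              · rw [Finsupp.cons_succ, Finsupp.tail_apply]
            have := hmax _ hmem hle
            have h0 := congrArg (fun v : Fin (n+1) →₀ ℕ => v 0) this
            simp only [Finsupp.cons_zero] at h0
            omega
          rw [this, mul_zero]
      · intro h; exact absurd hbmem h
    -- (a) g vanishes on the smaller grid
    have hgvanish : ∀ a' : Fin n → R, (∀ i, a' i ∈ S i.succ) → eval a' g = 0 := by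
      intro a' ha'
      set F : Polynomial R := Polynomial.map (eval a') f' with hF
      set P : Polynomial R := F %ₘ q with hP
      have hFsum : F = ∑ k ∈ f'.support, (eval a' (f'.coeff k)) • (Polynomial.X ^ k : Polynomial R) := by
        conv_lhs => rw [hF, f'.as_sum_support]
        rw [Polynomial.map_sum]
        refine Finset.sum_congr rfl fun k _ => ?_
        rw [Polynomial.map_monomial, ← Polynomial.smul_X_eq_monomial]
      have hPsum : P = ∑ k ∈ f'.support, (eval a' (f'.coeff k)) • ρ k := by
        rw [hP, hFsum, sum_modByMonic']
        refine Finset.sum_congr rfl fun k _ => ?_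
        rw [Polynomial.smul_modByMonic]
      have hPdeg : P.natDegree < b + 1 := by
        have := Polynomial.natDegree_modByMonic_lt F hqmonic hqne1
        rwa [hqdeg] at this
      have hProots : ∀ s ∈ T, P.eval s = 0 := by
        intro s hs
        have hqzero : q.eval s = 0 := by
          rw [hq, Polynomial.eval_prod]
          exact Finset.prod_eq_zero hs (by simp)
        have hFzero : F.eval s = 0 := by
          rw [hF, ← eval_eq_eval_mv_eval']
          apply hf
          intro i
          refine Fin.cases ?_ (fun j => ?_) i
          · rw [Fin.cons_zero]; exact hTS hs
          · rw [Fin.cons_succ]; exact ha' j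
        rw [hP, Polynomial.modByMonic_eq_sub_mul_div F q]
        simp [hqzero, hFzero]
      have hP0 : P = 0 :=
        Polynomial.eq_zero_of_natDegree_lt_card_of_eval_eq_zero' P T hProots (by omega)
      have : eval a' g = P.coeff b := by
        rw [hg, hPsum, Polynomial.finset_sum_coeff, map_sum]
        refine Finset.sum_congr rfl fun k _ => ?_
        rw [Polynomial.coeff_smul, MvPolynomial.smul_eq_C_mul, map_mul, eval_C, smul_eq_mul,
          mul_comm]
      rw [this, hP0, Polynomial.coeff_zero]
    -- (c) maximality of tail β in supp g, then apply IH
    have hβg : Finsupp.tail β ∈ g.support := by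
      rw [MvPolynomial.mem_support_iff, hgβ]; exact hβne
    have hmaxg : ∀ m ∈ g.support, Finsupp.tail β ≤ m → Finsupp.tail β = m := by
      intro m hm hle
      have hne : MvPolynomial.coeff m g ≠ 0 := MvPolynomial.mem_support_iff.mp hm
      rw [hcoeffg] at hne
      obtain ⟨k, _, hk⟩ := Finset.exists_ne_zero_of_sum_ne_zero hne
      have hρk : (ρ k).coeff b ≠ 0 := fun h => hk (by rw [h, zero_mul])
      have hkb : b ≤ k := by
        by_contra hlt
        push_neg at hlt
        rw [hρ_le k hlt.le, Polynomial.coeff_X_pow, if_neg (by omega)] at hρk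
        exact hρk rfl
      have hfk : MvPolynomial.coeff (m.cons k) f ≠ 0 := fun h => hk (by rw [h, mul_zero])
      have hmem : m.cons k ∈ f.support := MvPolynomial.mem_support_iff.mpr hfk
      have hle' : β ≤ m.cons k := by
        rw [Finsupp.le_def]
        intro i
        refine Fin.cases ?_ (fun j => ?_) i
        · rw [Finsupp.cons_zero]; exact hkb
        · rw [Finsupp.cons_succ]
          have := Finsupp.le_def.mp hle j
          rw [Finsupp.tail_apply] at this
          exact this
      have heq := hmax _ hmem hle'
      have : Finsupp.tail ((m.cons k : Fin (n+1) →₀ ℕ)) = m := Finsupp.tail_cons k m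
      rw [← this, ← heq]
    obtain ⟨i, hi⟩ := ih (fun i => S i.succ) g hgvanish (Finsupp.tail β) hβg hmaxg
    exact ⟨i.succ, by rwa [← Finsupp.tail_apply]⟩

theorem stmt12 {R : Type*} [CommRing R] [IsDomain R] {n : ℕ}
    (S : Fin n → Finset R) (hS : ∀ i, (S i).Nonempty)
    (f : MvPolynomial (Fin n) R)
    (hf : ∀ a : Fin n → R, (∀ i, a i ∈ S i) → eval a f = 0) :
    ∀ β ∈ f.support, (∀ a ∈ f.support, β ≤ a → β = a) → ∃ i, (S i).card ≤ β i :=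
  lason_aux n S f hf
end

section
/- Let R be a commutative ring and for each k let S_k ⊆ R be finite satisfying Condition (D) (all differences of distinct elements are non-zero-divisors), with multiplicity function ψ_k : S_k → ℤ^+, and set g_k = ∏_{u∈S_k}(x_k−u)^{ψ_k(u)}. Fix t ∈ ℕ and let I_t(g_1,…,g_n) be the ideal generated by {∏_k g_k^{α_k} : α ∈ ℕ^n, ∑α_i = t}. Then for f ∈ R[x_1,…,x_n]: f ∈ I_t(g_1,…,g_n) if and only if for every a ∈ ∏S_i and every β ∈ ℕ^n with ∑_i ⌊β_i/ψ_i(a_i)⌋ ≤ t−1, the coefficient of x^β in f(x_1+a_1,…,x_n+a_n) is zero. -/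
namespace Stmt14Aux

section OneVar
open Polynomial

variable {A : Type*} [CommRing A]

lemma pow_dvd_of_shift_coeff {p : A[X]} {b : A} {m : ℕ}
    (h : ∀ i < m, (p.comp (X + C b)).coeff i = 0) : (X - C b) ^ m ∣ p := by
  obtain ⟨q, hq⟩ := (X_pow_dvd_iff).2 h
  have hp : p = ((p.comp (X + C b)).comp (X - C b)) := by
    rw [comp_assoc]; simp
  rw [hp, hq, mul_comp, pow_comp, X_comp]
  exact Dvd.intro _ rfl

lemma pow_dvd_cancel {a b : A} (hab : (a - b) ∈ nonZeroDivisors A) :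
    ∀ (m : ℕ) {k : ℕ} {q : A[X]}, (X - C a) ^ m ∣ (X - C b) ^ k * q → (X - C a) ^ m ∣ q := by
  intro m
  induction m with
  | zero => intro k q _; simpa using one_dvd q
  | succ m ih =>
    intro k q h
    have h1 : (X - C a) ∣ (X - C b) ^ k * q :=
      dvd_trans (dvd_pow_self _ (Nat.succ_ne_zero m)) h
    have h2 : ((X - C b) ^ k * q).IsRoot a := dvd_iff_isRoot.1 h1
    have h3 : q.IsRoot a := by
      have h2' : q.eval a * (a - b) ^ k = 0 := by
        have := h2
        simp only [IsRoot, eval_mul, eval_pow, eval_sub, eval_X, eval_C] at this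
        rw [mul_comm]; exact this
      exact (pow_mem hab k).2 _ h2'
    obtain ⟨q1, rfl⟩ := dvd_iff_isRoot.2 h3
    obtain ⟨w, hw⟩ := h
    have hcan : (X - C b) ^ k * q1 = (X - C a) ^ m * w := by
      have hreg : IsLeftRegular (X - C a) := (monic_X_sub_C a).isRegular.left
      apply hreg
      have hw' : (X - C a) * ((X - C b) ^ k * q1) = (X - C a) * ((X - C a) ^ m * w) := by
        calc (X - C a) * ((X - C b) ^ k * q1) = (X - C b) ^ k * ((X - C a) * q1) := by ring
        _ = (X - C a) ^ (m + 1) * w := hw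
        _ = (X - C a) * ((X - C a) ^ m * w) := by ring
      exact hw'
    have hq1 : (X - C a) ^ m ∣ q1 := ih ⟨w, hcan⟩
    calc (X - C a) ^ (m + 1) = (X - C a) * (X - C a) ^ m := by ring
    _ ∣ (X - C a) * q1 := mul_dvd_mul_left _ hq1

lemma prod_pow_dvd (e : A → ℕ) :
    ∀ (S : Finset A), (∀ a ∈ S, ∀ b ∈ S, a ≠ b → (b - a) ∈ nonZeroDivisors A) →
      ∀ p : A[X], (∀ u ∈ S, (X - C u) ^ e u ∣ p) →
      (∏ u ∈ S, (X - C u) ^ e u) ∣ p := by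
  classical
  intro S
  induction S using Finset.induction_on with
  | empty => intro _ p _; simpa using one_dvd p
  | @insert b T hb ih =>
    intro hS p hp
    obtain ⟨q, hq⟩ := hp b (Finset.mem_insert_self b T)
    have hT : ∀ u ∈ T, (X - C u) ^ e u ∣ q := by
      intro u hu
      have hub : u ≠ b := fun h => hb (h ▸ hu)
      have hnzd : (u - b) ∈ nonZeroDivisors A :=
        hS b (Finset.mem_insert_self b T) u (Finset.mem_insert_of_mem hu) (Ne.symm hub)
      have : (X - C u) ^ e u ∣ (X - C b) ^ e b * q := hq ▸ hp u (Finset.mem_insert_of_mem hu)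
      exact pow_dvd_cancel hnzd (e u) this
    have hprod : (∏ u ∈ T, (X - C u) ^ e u) ∣ q :=
      ih (fun a ha b' hb' hab => hS a (Finset.mem_insert_of_mem ha)
        b' (Finset.mem_insert_of_mem hb') hab) q hT
    rw [Finset.prod_insert hb, hq]
    exact mul_dvd_mul_left _ hprod

noncomputable def dig (g : A[X]) : ℕ → A[X] → A[X]
  | 0, p => p %ₘ g
  | (j+1), p => dig g j (p /ₘ g)

lemma dig_zero_poly (g : A[X]) (j : ℕ) : dig g j 0 = 0 := by
  induction j with
  | zero => simp [dig]
  | succ j ih => simp [dig, ih]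

lemma degree_dig [Nontrivial A] {g : A[X]} (hg : g.Monic) (j : ℕ) (p : A[X]) :
    (dig g j p).degree < g.degree := by
  induction j generalizing p with
  | zero => exact degree_modByMonic_lt p hg
  | succ j ih => exact ih (p /ₘ g)

lemma map_dig {B : Type*} [CommRing B] (φ : A →+* B) {g : A[X]} (hg : g.Monic) (j : ℕ) (p : A[X]) :
    dig (g.map φ) j (p.map φ) = (dig g j p).map φ := by
  induction j generalizing p with
  | zero => exact (map_modByMonic φ hg).symm
  | succ j ih =>
    show dig (g.map φ) j (p.map φ /ₘ g.map φ) = _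
    rw [← map_divByMonic φ hg, ih]
    rfl

lemma sum_dig [Nontrivial A] {g : A[X]} (hg : g.Monic) (hd : 0 < g.natDegree) :
    ∀ (N : ℕ) (p : A[X]), p.natDegree < N →
      p = ∑ j ∈ Finset.range N, dig g j p * g ^ j := by
  intro N
  induction N with
  | zero => intro p h; omega
  | succ N ih =>
    intro p hp
    rw [Finset.sum_range_succ']
    by_cases h0 : p /ₘ g = 0
    · have hz : ∀ j ∈ Finset.range N, dig g (j+1) p * g ^ (j+1) = 0 := by
        intro j _
        show dig g j (p /ₘ g) * g ^ (j+1) = 0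
        rw [h0, dig_zero_poly, zero_mul]
      rw [Finset.sum_eq_zero hz, zero_add]
      show p = dig g 0 p * g ^ 0
      have := modByMonic_add_div p g
      rw [h0, mul_zero, add_zero] at this
      simpa [dig] using this.symm
    · have hgle : g.natDegree ≤ p.natDegree := by
        have h2 : ¬ p.degree < g.degree := fun hlt => h0 ((divByMonic_eq_zero_iff hg).2 hlt)
        exact natDegree_le_natDegree (le_of_not_gt h2)
      have hdeg : (p /ₘ g).natDegree < N := by
        rw [natDegree_divByMonic p hg]; omega
      have hrec := ih (p /ₘ g) hdeg
      have key : ∀ j, dig g (j+1) p = dig g j (p /ₘ g) := fun j => rfl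
      calc p = p %ₘ g + g * (p /ₘ g) := (modByMonic_add_div p g).symm
      _ = p %ₘ g + g * (∑ j ∈ Finset.range N, dig g j (p /ₘ g) * g ^ j) := by rw [← hrec]
      _ = (∑ i ∈ Finset.range N, dig g (i+1) p * g ^ (i+1)) + dig g 0 p * g ^ 0 := by
          rw [Finset.mul_sum]
          simp only [key, dig, pow_zero, mul_one, pow_succ]
          rw [add_comm]
          congr 1
          apply Finset.sum_congr rfl
          intro j _
          ring

lemma dig_vanish [Nontrivial A] {g : A[X]} (hg : g.Monic) :
    ∀ (s N : ℕ) (γ : ℕ → A[X]), (∀ j, (γ j).degree < g.degree) →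
      g ^ s ∣ (∑ j ∈ Finset.range N, γ j * g ^ j) → ∀ j < N, j < s → γ j = 0 := by
  intro s
  induction s with
  | zero => intro N γ _ _ j _ h; omega
  | succ s ih =>
    intro N γ hdeg hdvd j hjN hjs
    cases N with
    | zero => omega
    | succ M =>
      set T : A[X] := ∑ i ∈ Finset.range M, γ (i+1) * g ^ i with hT
      have hsum : (∑ j ∈ Finset.range (M+1), γ j * g ^ j) = γ 0 + T * g := by
        rw [Finset.sum_range_succ']
        simp only [pow_zero, mul_one, hT, Finset.sum_mul]
        rw [add_comm]
        congr 1
        apply Finset.sum_congr rfl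
        intro i _
        rw [mul_assoc, ← pow_succ]
      rw [hsum] at hdvd
      have hgd : g ∣ γ 0 + T * g := dvd_trans (dvd_pow_self g (Nat.succ_ne_zero s)) hdvd
      have hγ0 : γ 0 = 0 := by
        have hdg : g ∣ γ 0 := by
          have : g ∣ T * g := Dvd.intro_left T rfl
          rw [add_comm] at hgd
          exact (dvd_add_right this).mp hgd
        have h1 : γ 0 %ₘ g = γ 0 := modByMonic_eq_self_iff hg |>.2 (hdeg 0)
        have h2 : γ 0 %ₘ g = 0 := (modByMonic_eq_zero_iff_dvd hg).2 hdg
        rw [← h1, h2]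
      rw [hγ0, zero_add] at hdvd
      have hTs : g ^ s ∣ T := by
        obtain ⟨w, hw⟩ := hdvd
        refine ⟨w, ?_⟩
        have hreg : IsRightRegular g := hg.isRegular.right
        apply hreg
        show T * g = g ^ s * w * g
        rw [hw]; ring
      cases j with
      | zero => exact hγ0
      | succ i =>
        exact ih M (fun i => γ (i+1)) (fun i => hdeg _) hTs i (by omega) (by omega)

end OneVar




open MvPolynomial

variable {R : Type*} [CommRing R] {n : ℕ}

noncomputable def lam (β : Fin n →₀ ℕ) (p : Polynomial (MvPolynomial (Fin n) R)) :
    Polynomial R :=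
  ⟨AddMonoidAlgebra.ofCoeff (p.toFinsupp.coeff.mapRange (MvPolynomial.coeff β) (by simp))⟩

lemma lam_coeff (β : Fin n →₀ ℕ) (p : Polynomial (MvPolynomial (Fin n) R)) (m : ℕ) :
    (lam β p).coeff m = MvPolynomial.coeff β (p.coeff m) := by
  rcases p with ⟨q⟩
  simp [lam, Polynomial.coeff_ofFinsupp, Finsupp.mapRange_apply, AddMonoidAlgebra.coeff_ofCoeff]
  exact Finsupp.mapRange_apply

lemma lam_sum (β : Fin n →₀ ℕ) {ι : Type*} (s : Finset ι)
    (u : ι → Polynomial (MvPolynomial (Fin n) R)) :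
    lam β (∑ j ∈ s, u j) = ∑ j ∈ s, lam β (u j) := by
  ext m
  simp [lam_coeff, Polynomial.finset_sum_coeff, MvPolynomial.coeff_sum]

lemma lam_mapC_mul (β : Fin n →₀ ℕ) (h : Polynomial R)
    (p : Polynomial (MvPolynomial (Fin n) R)) :
    lam β (h.map (MvPolynomial.C : R →+* MvPolynomial (Fin n) R) * p) = h * lam β p := by
  ext m
  rw [lam_coeff, Polynomial.coeff_mul, Polynomial.coeff_mul, MvPolynomial.coeff_sum]
  apply Finset.sum_congr rfl
  rintro ⟨i, j⟩ _
  simp [Polynomial.coeff_map, MvPolynomial.coeff_C_mul, lam_coeff]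

lemma lam_monomial (β : Fin n →₀ ℕ) (m : ℕ) (q : MvPolynomial (Fin n) R) :
    lam β (Polynomial.monomial m q) = Polynomial.monomial m (MvPolynomial.coeff β q) := by
  ext i
  rw [lam_coeff, Polynomial.coeff_monomial, Polynomial.coeff_monomial]
  split <;> simp

lemma lam_degree_le (β : Fin n →₀ ℕ) (p : Polynomial (MvPolynomial (Fin n) R)) :
    (lam β p).degree ≤ p.degree := by
  apply Polynomial.degree_mono
  intro m hm
  rw [Polynomial.mem_support_iff] at hm ⊢
  intro h
  rw [lam_coeff, h] at hm
  simp at hm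

lemma lam_add (β : Fin n →₀ ℕ) (p q : Polynomial (MvPolynomial (Fin n) R)) :
    lam β (p + q) = lam β p + lam β q := by
  ext m; simp [lam_coeff]

lemma lam_C (β : Fin n →₀ ℕ) (q : MvPolynomial (Fin n) R) :
    lam β (Polynomial.C q) = Polynomial.C (MvPolynomial.coeff β q) := by
  ext i
  rw [lam_coeff, Polynomial.coeff_C, Polynomial.coeff_C]
  split <;> simp

lemma lam_comp (β : Fin n →₀ ℕ) (b : R) (p : Polynomial (MvPolynomial (Fin n) R)) :
    lam β (p.comp (Polynomial.X + Polynomial.C (MvPolynomial.C b))) =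
      (lam β p).comp (Polynomial.X + Polynomial.C b) := by
  induction p using Polynomial.induction_on' with
  | add p q hp hq =>
    rw [Polynomial.add_comp, lam_add, hp, hq, lam_add, Polynomial.add_comp]
  | monomial m q =>
    have hmap : (Polynomial.X + Polynomial.C (MvPolynomial.C b) :
        Polynomial (MvPolynomial (Fin n) R)) =
        Polynomial.map (MvPolynomial.C : R →+* MvPolynomial (Fin n) R)
          (Polynomial.X + Polynomial.C b) := by
      simp
    rw [Polynomial.monomial_comp, lam_monomial, Polynomial.monomial_comp, hmap,
      ← Polynomial.map_pow, mul_comm, lam_mapC_mul, lam_C, mul_comm]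


open MvPolynomial

variable {R : Type*} [CommRing R] {n : ℕ}

noncomputable def shC {m : ℕ} (a : Fin m → R) :
    MvPolynomial (Fin m) R →ₐ[R] MvPolynomial (Fin m) R :=
  aeval (fun k => X k + C (a k))

noncomputable def sh0 (b : R) :
    MvPolynomial (Fin (n+1)) R →ₐ[R] MvPolynomial (Fin (n+1)) R :=
  aeval (Fin.cases (X 0 + C b) (fun i => X i.succ))

lemma E_C (r : R) : finSuccEquiv R n (C r) = Polynomial.C (C r) := by
  simp [finSuccEquiv_apply]

lemma E_shift_succ (a' : Fin n → R) (f : MvPolynomial (Fin (n+1)) R) :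
    finSuccEquiv R n (shC (Fin.cons 0 a') f) =
      Polynomial.mapAlgHom (shC a') (finSuccEquiv R n f) := by
  have h : ((finSuccEquiv R n).toAlgHom.comp (shC (Fin.cons 0 a'))) =
      ((Polynomial.mapAlgHom (shC a')).comp
        (finSuccEquiv R n).toAlgHom) := by
    apply algHom_ext
    intro i
    refine Fin.cases ?_ ?_ i
    · simp [shC, Fin.cons_zero, finSuccEquiv_X_zero]
    · intro i
      simp [shC, Fin.cons_succ, finSuccEquiv_X_succ, E_C]
  exact DFunLike.congr_fun h f

lemma E_shift0 (b : R) (f : MvPolynomial (Fin (n+1)) R) :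
    finSuccEquiv R n (sh0 b f) =
      ((finSuccEquiv R n) f).comp (Polynomial.X + Polynomial.C (C b)) := by
  have hcomp : ∀ p : Polynomial (MvPolynomial (Fin n) R),
      ((Polynomial.aeval (Polynomial.X + Polynomial.C (C b))).restrictScalars R) p =
        p.comp (Polynomial.X + Polynomial.C (C b)) := by
    intro p
    simp [Polynomial.aeval_def, Polynomial.eval₂_def, Polynomial.comp, Polynomial.algebraMap_eq]
  have h : ((finSuccEquiv R n).toAlgHom.comp (sh0 b)) =
      (((Polynomial.aeval (Polynomial.X + Polynomial.C (C b))).restrictScalars R).comp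
        (finSuccEquiv R n).toAlgHom) := by
    apply algHom_ext
    intro i
    refine Fin.cases ?_ ?_ i
    · simp [sh0, finSuccEquiv_X_zero, E_C]
    · intro i
      simp [sh0, finSuccEquiv_X_succ]
  have := DFunLike.congr_fun h f
  simpa [hcomp, Polynomial.comp_eq_aeval] using this

lemma shift_decomp (b : R) (a' : Fin n → R) (f : MvPolynomial (Fin (n+1)) R) :
    shC (Fin.cons b a') f = sh0 b (shC (Fin.cons 0 a') f) := by
  have h : (shC (Fin.cons b a')) = ((sh0 b).comp (shC (Fin.cons 0 a'))) := by
    apply algHom_ext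
    intro i
    refine Fin.cases ?_ ?_ i
    · simp [shC, sh0, Fin.cons_zero]
    · intro i
      simp [shC, sh0, Fin.cons_succ]
  exact DFunLike.congr_fun h f

lemma E_g0 (S₀ : Finset R) (e : R → ℕ) :
    finSuccEquiv R n (∏ u ∈ S₀, (X 0 - C u) ^ e u) =
      (∏ u ∈ S₀, (Polynomial.X - Polynomial.C u) ^ e u : Polynomial R).map
        (C : R →+* MvPolynomial (Fin n) R) := by
  rw [map_prod, Polynomial.map_prod]
  apply Finset.prod_congr rfl
  intro u _
  rw [map_pow, map_sub, finSuccEquiv_X_zero, E_C, Polynomial.map_pow, Polynomial.map_sub,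
    Polynomial.map_X, Polynomial.map_C]

lemma E_gsucc (i : Fin n) (T : Finset R) (e : R → ℕ) :
    finSuccEquiv R n (∏ u ∈ T, (X i.succ - C u) ^ e u) =
      Polynomial.C (∏ u ∈ T, (X i - C u) ^ e u) := by
  rw [map_prod, map_prod]
  apply Finset.prod_congr rfl
  intro u _
  rw [map_pow, map_sub, finSuccEquiv_X_succ, E_C, map_pow, map_sub]

lemma E_gen (S : Fin (n+1) → Finset R) (ψ : Fin (n+1) → R → ℕ) (α : Fin (n+1) → ℕ) :
    finSuccEquiv R n (∏ k, (∏ u ∈ S k, (X k - C u) ^ ψ k u) ^ α k) =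
      ((∏ u ∈ S 0, (Polynomial.X - Polynomial.C u) ^ ψ 0 u : Polynomial R).map
        (C : R →+* MvPolynomial (Fin n) R)) ^ α 0 *
      Polynomial.C (∏ i, (∏ u ∈ S i.succ, (X i - C u) ^ ψ i.succ u) ^ α i.succ) := by
  rw [map_prod, Fin.prod_univ_succ, map_pow, E_g0, map_prod]
  congr 1
  apply Finset.prod_congr rfl
  intro i _
  rw [map_pow, E_gsucc, ← map_pow]


end Stmt14Aux

namespace Stmt14Aux
open MvPolynomial
variable {R : Type*} [CommRing R] {n : ℕ}

lemma forward (S : Fin n → Finset R) (ψ : Fin n → R → ℕ) (hψ : ∀ k, ∀ u ∈ S k, 0 < ψ k u)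
    (t : ℕ) (f : MvPolynomial (Fin n) R)
    (hf : f ∈ Ideal.span {q : MvPolynomial (Fin n) R | ∃ α : Fin n → ℕ, (∑ i, α i) = t ∧
        q = ∏ k, (∏ u ∈ S k, (X k - C u) ^ ψ k u) ^ α k}) :
    ∀ a ∈ Fintype.piFinset S, ∀ β : Fin n →₀ ℕ,
      (∑ i, ((β i / ψ i (a i) : ℕ) : ℤ)) ≤ (t : ℤ) - 1 →
      coeff β (shC a f) = 0 := by
  intro a ha
  have haS : ∀ k, a k ∈ S k := (Fintype.mem_piFinset).1 ha
  refine Submodule.span_induction (p := fun x _ => ∀ β : Fin n →₀ ℕ,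
    (∑ i, ((β i / ψ i (a i) : ℕ) : ℤ)) ≤ (t : ℤ) - 1 → coeff β (shC a x) = 0)
    ?_ ?_ ?_ ?_ hf
  · rintro q ⟨α, hα, rfl⟩ β hβ
    classical
    have hg : ∀ k : Fin n, shC a (∏ u ∈ S k, (X k - C u) ^ ψ k u) =
        (X k) ^ (ψ k (a k)) *
          ∏ u ∈ (S k).erase (a k), (X k + C (a k - u)) ^ ψ k u := by
      intro k
      have hfac : ∀ u : R, shC a ((X k - C u) ^ ψ k u) =
          (X k + C (a k - u)) ^ ψ k u := by
        intro u
        rw [map_pow, map_sub]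
        have h1 : shC a (X k) = X k + C (a k) := by simp [shC]
        have h2 : shC a (C u) = C u := by simp [shC]
        rw [h1, h2, C_sub]
        ring_nf
      rw [map_prod, ← Finset.mul_prod_erase (S k) _ (haS k), hfac]
      have : (X k + C (a k - a k) : MvPolynomial (Fin n) R) = X k := by simp
      rw [this]
      congr 1
      apply Finset.prod_congr rfl
      intro u _
      exact hfac u
    have hμ : shC a (∏ k, (∏ u ∈ S k, (X k - C u) ^ ψ k u) ^ α k) =
        (∏ k, (X k : MvPolynomial (Fin n) R) ^ (ψ k (a k) * α k)) *
          ∏ k, (∏ u ∈ (S k).erase (a k), (X k + C (a k - u)) ^ ψ k u) ^ α k := by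
      rw [map_prod, ← Finset.prod_mul_distrib]
      apply Finset.prod_congr rfl
      intro k _
      rw [map_pow, hg, mul_pow, ← pow_mul]
    set H : MvPolynomial (Fin n) R :=
      ∏ k, (∏ u ∈ (S k).erase (a k), (X k + C (a k - u)) ^ ψ k u) ^ α k with hH
    set μ : Fin n →₀ ℕ := Finsupp.equivFunOnFinite.symm (fun k => ψ k (a k) * α k) with hμdef
    have hμap : ∀ k, μ k = ψ k (a k) * α k := fun k => rfl
    have hmon : (∏ k, (X k : MvPolynomial (Fin n) R) ^ (ψ k (a k) * α k)) =
        monomial μ 1 := by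
      rw [monomial_eq, C_1, one_mul, Finsupp.prod_fintype _ _ (fun i => pow_zero _)]
      exact Finset.prod_congr rfl fun k _ => by rw [hμap k]
    rw [hμ, hmon, coeff_monomial_mul']
    split_ifs with hle
    · exfalso
      have h1 : ∀ k, α k ≤ β k / ψ k (a k) := by
        intro k
        rw [Nat.le_div_iff_mul_le (hψ k (a k) (haS k))]
        calc α k * ψ k (a k) = ψ k (a k) * α k := mul_comm _ _
        _ = μ k := (hμap k).symm
        _ ≤ β k := hle k
      have h2 : (t : ℤ) ≤ ∑ i, ((β i / ψ i (a i) : ℕ) : ℤ) := by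
        rw [← hα]
        push_cast
        apply Finset.sum_le_sum
        intro i _
        exact_mod_cast h1 i
      linarith
    · rfl
  · intro β _; simp
  · intro x y _ _ hx hy β hβ
    rw [map_add, coeff_add, hx β hβ, hy β hβ, add_zero]
  · intro r x _ hx β hβ
    rw [smul_eq_mul, map_mul, MvPolynomial.coeff_mul]
    apply Finset.sum_eq_zero
    rintro ⟨u, v⟩ huv
    rw [Finset.HasAntidiagonal.mem_antidiagonal] at huv
    have hv : ∀ i, v i ≤ β i := by
      intro i
      have : u i + v i = β i := by rw [← huv]; rfl
      omega
    have hbud : (∑ i, ((v i / ψ i (a i) : ℕ) : ℤ)) ≤ (t : ℤ) - 1 := by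
      refine le_trans ?_ hβ
      apply Finset.sum_le_sum
      intro i _
      have := Nat.div_le_div_right (c := ψ i (a i)) (hv i)
      exact_mod_cast this
    rw [hx v hbud, mul_zero]

end Stmt14Aux

namespace Stmt14Aux
open MvPolynomial
variable {R : Type*} [CommRing R]

lemma backward [Nontrivial R] :
    ∀ {n : ℕ} (S : Fin n → Finset R)
      (_hD : ∀ k, ∀ a ∈ S k, ∀ b ∈ S k, a ≠ b → (b - a) ∈ nonZeroDivisors R)
      (ψ : Fin n → R → ℕ) (_hψ : ∀ k, ∀ u ∈ S k, 0 < ψ k u) (t : ℕ)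
      (f : MvPolynomial (Fin n) R),
      (∀ a ∈ Fintype.piFinset S, ∀ β : Fin n →₀ ℕ,
        (∑ i, ((β i / ψ i (a i) : ℕ) : ℤ)) ≤ (t : ℤ) - 1 → coeff β (shC a f) = 0) →
      f ∈ Ideal.span {q : MvPolynomial (Fin n) R | ∃ α : Fin n → ℕ, (∑ i, α i) = t ∧
        q = ∏ k, (∏ u ∈ S k, (X k - C u) ^ ψ k u) ^ α k} := by
  intro n
  induction n with
  | zero =>
    intro S hD ψ hψ t f hcond
    cases t with
    | zero =>
      have h1 : (1 : MvPolynomial (Fin 0) R) ∈ {q : MvPolynomial (Fin 0) R |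
          ∃ α : Fin 0 → ℕ, (∑ i, α i) = 0 ∧
          q = ∏ k, (∏ u ∈ S k, (X k - C u) ^ ψ k u) ^ α k} :=
        ⟨fun _ => 0, by simp, by simp⟩
      simpa using Ideal.mul_mem_left _ f (Ideal.subset_span h1)
    | succ t' =>
      obtain ⟨c, rfl⟩ := C_surjective (Fin 0) f
      have h0 := hcond (fun i => i.elim0) (by rw [Fintype.mem_piFinset]; intro a; exact a.elim0) 0 (by
        simp only [Finset.univ_eq_empty, Finset.sum_empty]
        push_cast
        omega)
      have hc : c = 0 := by
        have h1 : shC (fun i : Fin 0 => i.elim0) (C c) = C c := by simp [shC]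
        rw [h1] at h0
        simpa using h0
      rw [hc, map_zero]
      exact Ideal.zero_mem _
  | succ n IH =>
    intro S hD ψ hψ t f hcond
    classical
    by_cases ht : t = 0
    · subst ht
      have h1 : (1 : MvPolynomial (Fin (n+1)) R) ∈ {q : MvPolynomial (Fin (n+1)) R |
          ∃ α : Fin (n+1) → ℕ, (∑ i, α i) = 0 ∧
          q = ∏ k, (∏ u ∈ S k, (X k - C u) ^ ψ k u) ^ α k} :=
        ⟨fun _ => 0, by simp, by simp⟩
      simpa using Ideal.mul_mem_left _ f (Ideal.subset_span h1)
    by_cases hS0 : S 0 = ∅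
    · have h1 : (1 : MvPolynomial (Fin (n+1)) R) ∈ {q : MvPolynomial (Fin (n+1)) R |
          ∃ α : Fin (n+1) → ℕ, (∑ i, α i) = t ∧
          q = ∏ k, (∏ u ∈ S k, (X k - C u) ^ ψ k u) ^ α k} := by
        refine ⟨fun k => if k = 0 then t else 0, by simp [Finset.sum_ite_eq'], ?_⟩
        rw [eq_comm]
        apply Finset.prod_eq_one
        intro k _
        rcases eq_or_ne k 0 with rfl | hk
        · simp [hS0]
        · simp [hk]
      simpa using Ideal.mul_mem_left _ f (Ideal.subset_span h1)
    -- main case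
    have hS0ne : (S 0).Nonempty := Finset.nonempty_iff_ne_empty.2 hS0
    set Q := MvPolynomial (Fin n) R with hQdef
    set G₀ : Polynomial R := ∏ u ∈ S 0, (Polynomial.X - Polynomial.C u) ^ ψ 0 u with hG₀def
    have hG₀m : G₀.Monic :=
      Polynomial.monic_prod_of_monic _ _ (fun u _ => (Polynomial.monic_X_sub_C u).pow _)
    have hG₀d : 0 < G₀.natDegree := by
      rw [hG₀def, Polynomial.natDegree_prod_of_monic _ _
        (fun u _ => (Polynomial.monic_X_sub_C u).pow _)]
      have : ∀ u ∈ S 0, 0 < ((Polynomial.X - Polynomial.C u) ^ ψ 0 u).natDegree := by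
        intro u hu
        rw [(Polynomial.monic_X_sub_C u).natDegree_pow, Polynomial.natDegree_X_sub_C, mul_one]
        exact hψ 0 u hu
      exact Finset.sum_pos this hS0ne
    set G : Polynomial Q := G₀.map (C : R →+* Q) with hGdef
    have hGm : G.Monic := hG₀m.map _
    have hGnd : G.natDegree = G₀.natDegree := hG₀m.natDegree_map _
    have hGdeg : G.degree = G₀.degree := hG₀m.degree_map _
    set E := finSuccEquiv R n with hEdef
    set c : ℕ → Polynomial Q := fun j => dig G j (E f) with hcdef
    set N : ℕ := (E f).natDegree + t + 1 with hNdef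
    have hdecomp : E f = ∑ j ∈ Finset.range N, c j * G ^ j := by
      apply sum_dig hGm (by omega) N (E f) (by omega)
    -- key vanishing claim
    have hkey : ∀ j < t, ∀ (m : ℕ) (a' : Fin n → R),
        a' ∈ Fintype.piFinset (fun i => S i.succ) → ∀ β' : Fin n →₀ ℕ,
        (∑ i, ((β' i / ψ i.succ (a' i) : ℕ) : ℤ)) ≤ ((t - j : ℕ) : ℤ) - 1 →
        MvPolynomial.coeff β' (shC a' ((c j).coeff m)) = 0 := by
      intro j hjt m a' ha' β' hβ'
      have ha'S : ∀ i, a' i ∈ S i.succ := (Fintype.mem_piFinset).1 ha'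
      set σ' : ℕ := ∑ i, β' i / ψ i.succ (a' i) with hσ'def
      have hσcast : ((σ' : ℤ)) = ∑ i, ((β' i / ψ i.succ (a' i) : ℕ) : ℤ) := by
        rw [hσ'def]; push_cast; rfl
      have hσ : σ' + j + 1 ≤ t := by
        rw [← hσcast] at hβ'
        omega
      set s : ℕ := t - σ' with hsdef
      have hs1 : j + 1 ≤ s := by omega
      set γ : ℕ → Polynomial R :=
        fun j' => lam β' (Polynomial.mapAlgHom (shC a') (c j')) with hγdef
      set F : Polynomial R := lam β' (E (shC (Fin.cons 0 a') f)) with hFdef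
      have hmapAlg : ∀ p : Polynomial Q,
          Polynomial.mapAlgHom (shC a') p = p.map ((shC a').toRingHom) := fun p => rfl
      have hcc : ((shC a').toRingHom.comp (C : R →+* Q)) = (C : R →+* Q) := by
        refine RingHom.ext fun r => ?_
        simp [shC, MvPolynomial.algebraMap_eq, bind₁_C_right]
      have hmapG : Polynomial.mapAlgHom (shC a') G = G := by
        rw [hmapAlg, hGdef, Polynomial.map_map, hcc]
      have hFd : F = ∑ j' ∈ Finset.range N, γ j' * G₀ ^ j' := by
        rw [hFdef, E_shift_succ, hdecomp, map_sum, lam_sum]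
        apply Finset.sum_congr rfl
        intro j' _
        rw [map_mul, map_pow, hmapG, hGdef, ← Polynomial.map_pow, mul_comm, lam_mapC_mul,
          mul_comm]
      have hdvd : ∀ b ∈ S 0, (Polynomial.X - Polynomial.C b) ^ (s * ψ 0 b) ∣ F := by
        intro b hb
        apply pow_dvd_of_shift_coeff
        intro i hi
        have hFc : F.comp (Polynomial.X + Polynomial.C b) =
            lam β' (E (shC (Fin.cons b a') f)) := by
          rw [hFdef, ← lam_comp]
          congr 1
          rw [shift_decomp b a' f, E_shift0]
        rw [hFc, lam_coeff, hEdef, finSuccEquiv_coeff_coeff]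
        apply hcond (Fin.cons b a')
        · rw [Fintype.mem_piFinset]
          intro k
          refine Fin.cases ?_ ?_ k
          · simpa using hb
          · intro i'
            simpa using ha'S i'
        · rw [Fin.sum_univ_succ]
          simp only [Finsupp.cons_zero, Finsupp.cons_succ, Fin.cons_zero, Fin.cons_succ]
          have hidiv : i / ψ 0 b < s := (Nat.div_lt_iff_lt_mul (hψ 0 b hb)).2 hi
          rw [← hσcast]
          omega
      have hdvd2 : G₀ ^ s ∣ F := by
        have hpd := prod_pow_dvd (fun u => s * ψ 0 u) (S 0) (hD 0) F hdvd
        have hpow : (∏ u ∈ S 0, (Polynomial.X - Polynomial.C u) ^ (s * ψ 0 u)) = G₀ ^ s := by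
          rw [← Finset.prod_pow]
          apply Finset.prod_congr rfl
          intro u _
          rw [← pow_mul, mul_comm]
        rwa [hpow] at hpd
      have hdeg : ∀ j', (γ j').degree < G₀.degree := by
        intro j'
        have h1 : (γ j').degree ≤ (c j').degree := by
          refine (lam_degree_le _ _).trans ?_
          rw [hmapAlg]
          exact Polynomial.degree_map_le
        have h2 : (c j').degree < G.degree := degree_dig hGm j' (E f)
        rw [hGdeg] at h2
        exact lt_of_le_of_lt h1 h2
      rw [hFd] at hdvd2
      have hγ0 : γ j = 0 := dig_vanish hG₀m s N γ hdeg hdvd2 j (by omega) (by omega)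
      have hco := congrArg (fun p : Polynomial R => p.coeff m) hγ0
      simp only [Polynomial.coeff_zero] at hco
      rw [hγdef] at hco
      simp only [lam_coeff] at hco
      rw [hmapAlg, Polynomial.coeff_map] at hco
      exact hco
    -- ideal membership of digit coefficients via IH
    have hmem : ∀ j < t, ∀ m : ℕ, ((c j).coeff m) ∈
        Ideal.span {q : MvPolynomial (Fin n) R | ∃ α' : Fin n → ℕ, (∑ i, α' i) = t - j ∧
          q = ∏ k, (∏ u ∈ S k.succ, (X k - C u) ^ ψ k.succ u) ^ α' k} := by
      intro j hj m
      exact IH (fun i => S i.succ) (fun k => hD k.succ) (fun k => ψ k.succ)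
        (fun k u hu => hψ k.succ u hu) (t - j) _
        (fun a' ha' β' hβ' => hkey j hj m a' ha' β' hβ')
    -- assemble
    set ERH : MvPolynomial (Fin (n+1)) R →+* Polynomial Q :=
      (finSuccEquiv R n).toAlgHom.toRingHom with hERHdef
    set gens : Set (MvPolynomial (Fin (n+1)) R) :=
      {q : MvPolynomial (Fin (n+1)) R | ∃ α : Fin (n+1) → ℕ, (∑ i, α i) = t ∧
        q = ∏ k, (∏ u ∈ S k, (X k - C u) ^ ψ k u) ^ α k} with hgensdef
    suffices hEf : E f ∈ Ideal.map ERH (Ideal.span gens) by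
      have h2 := Ideal.mem_map_of_mem ((finSuccEquiv R n).symm.toAlgHom.toRingHom) hEf
      rw [Ideal.map_map] at h2
      have hcompid : (((finSuccEquiv R n).symm.toAlgHom.toRingHom).comp ERH) =
          RingHom.id (MvPolynomial (Fin (n+1)) R) := by
        refine RingHom.ext fun x => ?_
        simp [hERHdef]
      rw [hcompid, Ideal.map_id] at h2
      have hsymm : (finSuccEquiv R n).symm.toAlgHom.toRingHom (E f) = f := by
        simp [hEdef]
      rwa [hsymm] at h2
    rw [hdecomp]
    apply Ideal.sum_mem
    intro j _
    by_cases hjt : j < t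
    · have hterm : ∀ q ∈ Ideal.span {q : MvPolynomial (Fin n) R |
          ∃ α' : Fin n → ℕ, (∑ i, α' i) = t - j ∧
          q = ∏ k, (∏ u ∈ S k.succ, (X k - C u) ^ ψ k.succ u) ^ α' k},
          Polynomial.C q * G ^ j ∈ Ideal.map ERH (Ideal.span gens) := by
        intro q hq
        refine Submodule.span_induction
          (p := fun x _ => Polynomial.C x * G ^ j ∈ Ideal.map ERH (Ideal.span gens))
          ?_ ?_ ?_ ?_ hq
        · rintro x ⟨α', hα', rfl⟩
          have hE := E_gen S ψ (Fin.cons j α')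
          simp only [Fin.cons_zero, Fin.cons_succ] at hE
          have heq : Polynomial.C (∏ k, (∏ u ∈ S k.succ, (X k - C u) ^ ψ k.succ u) ^ α' k)
              * G ^ j = ERH (∏ k, (∏ u ∈ S k, (X k - C u) ^ ψ k u) ^ (Fin.cons j α' k)) := by
            have : ERH (∏ k, (∏ u ∈ S k, (X k - C u) ^ ψ k u) ^ (Fin.cons j α' k)) =
                finSuccEquiv R n (∏ k, (∏ u ∈ S k, (X k - C u) ^ ψ k u) ^ (Fin.cons j α' k)) :=
              rfl
            rw [this, hE, mul_comm, hGdef]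
          rw [heq]
          apply Ideal.mem_map_of_mem
          apply Ideal.subset_span
          refine ⟨Fin.cons j α', ?_, rfl⟩
          rw [Fin.sum_univ_succ]
          simp only [Fin.cons_zero, Fin.cons_succ]
          omega
        · simp
        · intro x y _ _ hx hy
          rw [map_add, add_mul]
          exact Ideal.add_mem _ hx hy
        · intro r x _ hx
          rw [smul_eq_mul, map_mul, mul_assoc]
          exact Ideal.mul_mem_left _ _ hx
      have hcj : c j * G ^ j = ∑ m ∈ Finset.range ((c j).natDegree + 1),
          Polynomial.X ^ m * (Polynomial.C ((c j).coeff m) * G ^ j) := by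
        conv_lhs => rw [Polynomial.as_sum_range (c j)]
        rw [Finset.sum_mul]
        apply Finset.sum_congr rfl
        intro m _
        rw [← Polynomial.C_mul_X_pow_eq_monomial]
        ring
      rw [hcj]
      apply Ideal.sum_mem
      intro m _
      exact Ideal.mul_mem_left _ _ (hterm _ (hmem j hjt m))
    · have hsplit : c j * G ^ j = (c j * G ^ (j - t)) * G ^ t := by
        rw [mul_assoc, ← pow_add]
        congr 2
        omega
      rw [hsplit]
      apply Ideal.mul_mem_left
      have hE := E_gen S ψ (Fin.cons t (fun _ => 0))
      simp only [Fin.cons_zero, Fin.cons_succ, pow_zero, Finset.prod_const_one, map_one,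
        mul_one] at hE
      have heq : G ^ t = ERH (∏ k, (∏ u ∈ S k, (X k - C u) ^ ψ k u) ^
          (Fin.cons t (fun _ => 0) k)) := by
        have : ERH (∏ k, (∏ u ∈ S k, (X k - C u) ^ ψ k u) ^ (Fin.cons t (fun _ => 0) k)) =
            finSuccEquiv R n (∏ k, (∏ u ∈ S k, (X k - C u) ^ ψ k u) ^
              (Fin.cons t (fun _ => 0) k)) := rfl
        rw [this, hE, hGdef]
      rw [heq]
      apply Ideal.mem_map_of_mem
      apply Ideal.subset_span
      refine ⟨Fin.cons t (fun _ => 0), ?_, rfl⟩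
      rw [Fin.sum_univ_succ]
      simp

end Stmt14Aux

open MvPolynomial

theorem stmt14 {R : Type*} [CommRing R] {n : ℕ}
    (S : Fin n → Finset R)
    (hD : ∀ k, ∀ a ∈ S k, ∀ b ∈ S k, a ≠ b → (b - a) ∈ nonZeroDivisors R)
    (ψ : Fin n → R → ℕ) (hψ : ∀ k, ∀ u ∈ S k, 0 < ψ k u)
    (t : ℕ) (f : MvPolynomial (Fin n) R) :
    f ∈ Ideal.span {q : MvPolynomial (Fin n) R | ∃ α : Fin n → ℕ, (∑ i, α i) = t ∧
        q = ∏ k, (∏ u ∈ S k, (X k - C u) ^ ψ k u) ^ α k} ↔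
      ∀ a ∈ Fintype.piFinset S, ∀ β : Fin n →₀ ℕ,
        (∑ i, ((β i / ψ i (a i) : ℕ) : ℤ)) ≤ (t : ℤ) - 1 →
        coeff β (aeval (fun i => (X i + C (a i) : MvPolynomial (Fin n) R)) f) = 0 := by
  constructor
  · intro hf
    exact Stmt14Aux.forward S ψ hψ t f hf
  · intro h
    rcases subsingleton_or_nontrivial R with hsub | hnt
    · have hf0 : f = 0 := Subsingleton.elim f 0
      rw [hf0]
      exact Ideal.zero_mem _
    · exact Stmt14Aux.backward S hD ψ hψ t f h
end

section
/- Let R be a commutative ring and g_1,…,g_n ∈ R[x_1,…,x_n] monic polynomials with g_k ∈ R[x_k]. Fix t ∈ ℕ. Then for every f ∈ R[x_1,…,x_n] there exists a unique ψ ∈ R[x_1,…,x_n] such that f − ψ ∈ I_t(g_1,…,g_n) and for every β ∈ supp(ψ) and every α ∈ ℕ^n with ∑α_i = t there exists s ∈ {1,…,n} with β_s ≤ deg(g_s)·α_s − 1. Moreover this ψ satisfies supp(ψ) ⊆ Δ(supp(f)). -/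
open MvPolynomial

/-- The canonical-remainder property: `f - p` lies in the ideal `I_t(g_1,…,g_n)` and
every exponent vector in the support of `p` fails to dominate the leading exponent of
any generator `∏ g_k ^ α_k` with `∑ α_i = t`. -/
def RemProp {R : Type*} [CommRing R] {n : ℕ}
    (g : Fin n → MvPolynomial (Fin n) R) (t : ℕ)
    (f p : MvPolynomial (Fin n) R) : Prop :=
  f - p ∈ Ideal.span {q : MvPolynomial (Fin n) R |
      ∃ α : Fin n → ℕ, (∑ i, α i) = t ∧ q = ∏ k, (g k) ^ α k} ∧
  ∀ β ∈ p.support, ∀ α : Fin n → ℕ, (∑ i, α i) = t →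
    ∃ s : Fin n, β s + 1 ≤ (g s).totalDegree * α s


namespace Stmt15Aux

variable {R : Type*} [CommRing R] {n : ℕ}

/-- `Lead P θ`: `P` has coefficient `1` at `θ` and all exponents of `P` are `≤ θ`. -/
def Lead (P : MvPolynomial (Fin n) R) (θ : Fin n →₀ ℕ) : Prop :=
  coeff θ P = 1 ∧ ∀ γ ∈ P.support, γ ≤ θ

theorem lead_one : Lead (1 : MvPolynomial (Fin n) R) 0 := by
  constructor
  · simp
  · intro γ hγ
    rw [mem_support_iff] at hγ
    by_cases h0 : γ = 0
    · simp [h0]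
    · exfalso; apply hγ
      rw [show (1 : MvPolynomial (Fin n) R) = monomial 0 1 by simp, coeff_monomial]
      simp [Ne.symm h0]

theorem lead_mul {P Q : MvPolynomial (Fin n) R} {θ η : Fin n →₀ ℕ}
    (hP : Lead P θ) (hQ : Lead Q η) : Lead (P * Q) (θ + η) := by
  classical
  obtain ⟨hP1, hP2⟩ := hP
  obtain ⟨hQ1, hQ2⟩ := hQ
  constructor
  · rw [coeff_mul]
    rw [Finset.sum_eq_single (θ, η)]
    · rw [hP1, hQ1, one_mul]
    · rintro ⟨a, b⟩ hab hne
      simp only [Finset.HasAntidiagonal.mem_antidiagonal] at hab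
      by_cases ha : coeff a P = 0
      · simp [ha]
      by_cases hb : coeff b Q = 0
      · simp [hb]
      exfalso
      have haθ : a ≤ θ := hP2 a (by simpa [mem_support_iff] using ha)
      have hbη : b ≤ η := hQ2 b (by simpa [mem_support_iff] using hb)
      have : a = θ ∧ b = η := by
        constructor <;> ext i <;>
        · have h1 := (Finsupp.le_def.mp haθ) i
          have h2 := (Finsupp.le_def.mp hbη) i
          have h3 : a i + b i = θ i + η i := by
            have := congrArg (fun f => f i) hab
            simpa using this
          omega
      exact hne (by simp [this.1, this.2])
    · intro h
      simp at h
  · intro γ hγ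
    have := support_mul P Q hγ
    rw [Finset.mem_add] at this
    obtain ⟨a, ha, b, hb, rfl⟩ := this
    exact add_le_add (hP2 a ha) (hQ2 b hb)

theorem lead_pow {P : MvPolynomial (Fin n) R} {θ : Fin n →₀ ℕ}
    (hP : Lead P θ) (m : ℕ) : Lead (P ^ m) (m • θ) := by
  induction m with
  | zero => simpa using lead_one
  | succ m ih =>
    have := lead_mul ih hP
    rw [pow_succ, succ_nsmul]
    exact this

theorem lead_prod {ι : Type*} (s : Finset ι) (P : ι → MvPolynomial (Fin n) R)
    (θ : ι → Fin n →₀ ℕ) (h : ∀ i ∈ s, Lead (P i) (θ i)) :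
    Lead (∏ i ∈ s, P i) (∑ i ∈ s, θ i) := by
  classical
  induction s using Finset.induction with
  | empty => simpa using lead_one
  | @insert a s' hx ih =>
    rw [Finset.prod_insert hx, Finset.sum_insert hx]
    exact lead_mul (h a (Finset.mem_insert_self a s')) (ih fun i hi => h i (Finset.mem_insert_of_mem hi))

variable (g : Fin n → MvPolynomial (Fin n) R)

/-- The leading exponent of `∏ k, g k ^ α k`, as a `Finsupp`. -/
noncomputable def Dexp (α : Fin n → ℕ) : Fin n →₀ ℕ :=
  Finsupp.equivFunOnFinite.symm fun s => (g s).totalDegree * α s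

@[simp] theorem Dexp_apply (α : Fin n → ℕ) (s : Fin n) :
    Dexp g α s = (g s).totalDegree * α s := rfl

theorem lead_g
    (hmonic : ∀ k, ∃ θ ∈ (g k).support, coeff θ (g k) = 1 ∧ ∀ γ ∈ (g k).support, γ ≤ θ)
    (huniv : ∀ k, ∀ γ ∈ (g k).support, ∀ l, l ≠ k → γ l = 0) (k : Fin n) :
    Lead (g k) (Finsupp.single k ((g k).totalDegree)) := by
  obtain ⟨θ, hθs, hθ1, hθd⟩ := hmonic k
  have hθ0 : ∀ l, l ≠ k → θ l = 0 := fun l hl => huniv k θ hθs l hl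
  have hsum : ∀ γ : Fin n →₀ ℕ, γ ∈ (g k).support → (γ.sum fun _ e => e) = ∑ l, γ l := by
    intro γ _
    exact Finsupp.sum_fintype γ _ (fun _ => rfl)
  have hγk : ∀ γ : Fin n →₀ ℕ, γ ∈ (g k).support → (∑ l, γ l) = γ k := by
    intro γ hγ
    rw [Finset.sum_eq_single k]
    · intro l _ hl
      have h1 := (Finsupp.le_def.mp (hθd γ hγ)) l
      have h2 := hθ0 l hl
      omega
    · intro h; exact absurd (Finset.mem_univ k) h
  have htd : (g k).totalDegree = θ k := by
    apply le_antisymm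
    · apply Finset.sup_le
      intro γ hγ
      rw [hsum γ hγ, hγk γ hγ]
      exact (Finsupp.le_def.mp (hθd γ hγ)) k
    · calc θ k = θ.sum fun _ e => e := by rw [hsum θ hθs, hγk θ hθs]
        _ ≤ (g k).totalDegree := MvPolynomial.le_totalDegree hθs
  have hθeq : θ = Finsupp.single k ((g k).totalDegree) := by
    ext l
    by_cases hl : l = k
    · subst hl; simp [htd]
    · simp [Finsupp.single_apply, Ne.symm hl, hθ0 l hl]
  rw [← hθeq]
  exact ⟨hθ1, hθd⟩

theorem lead_G
    (hmonic : ∀ k, ∃ θ ∈ (g k).support, coeff θ (g k) = 1 ∧ ∀ γ ∈ (g k).support, γ ≤ θ)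
    (huniv : ∀ k, ∀ γ ∈ (g k).support, ∀ l, l ≠ k → γ l = 0) (α : Fin n → ℕ) :
    Lead (∏ k, g k ^ α k) (Dexp g α) := by
  have h := lead_prod Finset.univ (fun k => g k ^ α k)
    (fun k => Finsupp.single k ((g k).totalDegree * α k)) (by
      intro k _
      have := lead_pow (lead_g g hmonic huniv k) (α k)
      rwa [Finsupp.smul_single, smul_eq_mul, mul_comm] at this)
  have heq : (∑ k, Finsupp.single k ((g k).totalDegree * α k)) = Dexp g α := by
    ext s
    rw [Finset.sum_apply']
    rw [Finset.sum_eq_single s]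
    · simp
    · intro l _ hl; simp [Finsupp.single_apply, hl]
    · intro h; exact absurd (Finset.mem_univ s) h
  rwa [heq] at h

theorem sub_add_sum_lt {β θ γ : Fin n →₀ ℕ} (hθβ : ∀ s, θ s ≤ β s)
    (hγθ : γ ≤ θ) (hne : γ ≠ θ) : (∑ s, (β - θ + γ) s) < ∑ s, β s := by
  have hle : ∀ s, (β - θ + γ) s ≤ β s := by
    intro s
    have h1 := (Finsupp.le_def.mp hγθ) s
    have h2 := hθβ s
    simp only [Finsupp.coe_add, Finsupp.coe_tsub, Pi.add_apply, Pi.sub_apply]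
    omega
  have hex : ∃ s, γ s < θ s := by
    by_contra h
    push_neg at h
    exact hne (le_antisymm hγθ (Finsupp.le_def.mpr h))
  obtain ⟨s₀, hs₀⟩ := hex
  apply Finset.sum_lt_sum (fun s _ => hle s)
  refine ⟨s₀, Finset.mem_univ s₀, ?_⟩
  have h2 := hθβ s₀
  simp only [Finsupp.coe_add, Finsupp.coe_tsub, Pi.add_apply, Pi.sub_apply]
  omega

variable (t : ℕ)

open Classical in
/-- The canonical reduction of the monomial `X^β` modulo `I_t`. -/
noncomputable def red : (Fin n →₀ ℕ) → MvPolynomial (Fin n) R := fun β =>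
  if h : ∃ α : Fin n → ℕ, (∑ i, α i) = t ∧ ∀ s, (g s).totalDegree * α s ≤ β s then
    let θ : Fin n →₀ ℕ := Dexp g h.choose
    let L := (∏ k, g k ^ h.choose k) - monomial θ 1;
    -(∑ γ ∈ (L.support.filter fun γ => γ ≤ θ ∧ γ ≠ θ).attach,
        (coeff γ.1 L) • red (β - θ + γ.1))
  else monomial β 1
termination_by β => ∑ s, β s
decreasing_by
  · have hmem := γ.2
    rw [Finset.mem_filter] at hmem
    exact sub_add_sum_lt (fun s => h.choose_spec.2 s) hmem.2.1 hmem.2.2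

/-- Non-reduced exponents. -/
def NR (β : Fin n →₀ ℕ) : Prop :=
  ∃ α : Fin n → ℕ, (∑ i, α i) = t ∧ ∀ s, (g s).totalDegree * α s ≤ β s

theorem red_of_not_NR {β : Fin n →₀ ℕ} (h : ¬ NR g t β) :
    red g t β = monomial β 1 := by
  rw [red]; exact dif_neg h

/-- The tail of the generator `∏ g^α`. -/
noncomputable def tail (α : Fin n → ℕ) : MvPolynomial (Fin n) R :=
  (∏ k, g k ^ α k) - monomial (Dexp g α) 1

theorem tail_support
    (hmonic : ∀ k, ∃ θ ∈ (g k).support, coeff θ (g k) = 1 ∧ ∀ γ ∈ (g k).support, γ ≤ θ)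
    (huniv : ∀ k, ∀ γ ∈ (g k).support, ∀ l, l ≠ k → γ l = 0) (α : Fin n → ℕ) :
    ∀ γ ∈ (tail g α).support, γ ≤ Dexp g α ∧ γ ≠ Dexp g α := by
  obtain ⟨h1, h2⟩ := lead_G g hmonic huniv α
  intro γ hγ
  rw [mem_support_iff] at hγ
  by_cases he : γ = Dexp g α
  · exfalso
    apply hγ
    rw [he, tail, coeff_sub, h1, coeff_monomial, if_pos rfl, sub_self]
  · refine ⟨?_, he⟩
    have hc : coeff γ (tail g α) = coeff γ (∏ k, g k ^ α k) := by
      rw [tail, coeff_sub, coeff_monomial, if_neg (by exact fun hh => he hh.symm), sub_zero]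
    apply h2
    rw [mem_support_iff, ← hc]
    exact hγ

theorem prod_eq_monomial_add_tail (α : Fin n → ℕ) :
    (∏ k, g k ^ α k) = monomial (Dexp g α) 1 + tail g α := by
  rw [tail, add_sub_cancel]

theorem red_of_NR {β : Fin n →₀ ℕ}
    (hmonic : ∀ k, ∃ θ ∈ (g k).support, coeff θ (g k) = 1 ∧ ∀ γ ∈ (g k).support, γ ≤ θ)
    (huniv : ∀ k, ∀ γ ∈ (g k).support, ∀ l, l ≠ k → γ l = 0)
    (h : NR g t β) :
    red g t β = -(∑ γ ∈ (tail g h.choose).support,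
        (coeff γ (tail g h.choose)) • red g t (β - Dexp g h.choose + γ)) := by
  classical
  unfold NR at h
  rw [red, dif_pos h]
  simp only []
  congr 1
  rw [show ((∏ k, g k ^ h.choose k) - monomial (Dexp g h.choose) 1 : MvPolynomial (Fin n) R)
      = tail g h.choose from rfl]
  rw [Finset.filter_true_of_mem (tail_support g hmonic huniv h.choose)]
  exact Finset.sum_attach ((tail g h.choose).support)
    (fun γ => coeff γ (tail g h.choose) • red g t (β - Dexp g h.choose + γ))

/-- Linear extension of `red`. -/
noncomputable def RedL : MvPolynomial (Fin n) R →ₗ[R] MvPolynomial (Fin n) R :=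
  (MvPolynomial.basisMonomials (Fin n) R).constr R (red g t)

theorem RedL_monomial (β : Fin n →₀ ℕ) (c : R) :
    RedL g t (monomial β c) = c • red g t β := by
  have h1 : (monomial β c : MvPolynomial (Fin n) R) = c • monomial β 1 := by
    rw [smul_monomial, smul_eq_mul, mul_one]
  rw [h1, map_smul]
  congr 1
  have := (MvPolynomial.basisMonomials (Fin n) R).constr_basis R (red g t) β
  rwa [coe_basisMonomials] at this

theorem RedL_apply (p : MvPolynomial (Fin n) R) :
    RedL g t p = ∑ β ∈ p.support, coeff β p • red g t β := by
  conv_lhs => rw [as_sum p]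
  rw [map_sum]
  exact Finset.sum_congr rfl fun β _ => RedL_monomial g t β (coeff β p)

theorem RedL_eq_self {p : MvPolynomial (Fin n) R}
    (h : ∀ β ∈ p.support, ¬ NR g t β) : RedL g t p = p := by
  rw [RedL_apply]
  conv_rhs => rw [as_sum p]
  apply Finset.sum_congr rfl
  intro β hβ
  rw [red_of_not_NR g t (h β hβ), smul_monomial, smul_eq_mul, mul_one]

theorem monomial_mul_expand (δ : Fin n →₀ ℕ) (q : MvPolynomial (Fin n) R) :
    monomial δ 1 * q = ∑ γ ∈ q.support, monomial (δ + γ) (coeff γ q) := by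
  conv_lhs => rw [as_sum q]
  rw [Finset.mul_sum]
  apply Finset.sum_congr rfl
  intro γ _
  rw [monomial_mul, one_mul]

theorem RedL_monomial_mul (δ : Fin n →₀ ℕ) (q : MvPolynomial (Fin n) R) :
    RedL g t (monomial δ 1 * q) = ∑ γ ∈ q.support, coeff γ q • red g t (δ + γ) := by
  rw [monomial_mul_expand, map_sum]
  exact Finset.sum_congr rfl fun γ _ => RedL_monomial g t _ _

/-- The ideal `I_t`. -/
noncomputable def It : Ideal (MvPolynomial (Fin n) R) :=
  Ideal.span {q : MvPolynomial (Fin n) R |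
      ∃ α : Fin n → ℕ, (∑ i, α i) = t ∧ q = ∏ k, (g k) ^ α k}

section MainInduction

variable (hmonic : ∀ k, ∃ θ ∈ (g k).support, coeff θ (g k) = 1 ∧ ∀ γ ∈ (g k).support, γ ≤ θ)
variable (huniv : ∀ k, ∀ γ ∈ (g k).support, ∀ l, l ≠ k → γ l = 0)

include hmonic huniv

theorem red_support_aux (N : ℕ) : ∀ β : Fin n →₀ ℕ, (∑ s, β s) < N →
    ∀ a ∈ (red g t β).support, ¬ NR g t a ∧ a ≤ β := by
  classical
  induction N with
  | zero => intro β h; omega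
  | succ N ih =>
    intro β hβ a ha
    by_cases h : NR g t β
    · rw [red_of_NR g t hmonic huniv h] at ha
      rw [support_neg] at ha
      have := MvPolynomial.support_sum ha
      rw [Finset.mem_biUnion] at this
      obtain ⟨γ, hγ, haγ⟩ := this
      have haγ' := MvPolynomial.support_smul haγ
      obtain ⟨hγle, hγne⟩ := tail_support g hmonic huniv h.choose γ hγ
      have hθβ : ∀ s, Dexp g h.choose s ≤ β s := h.choose_spec.2
      have hlt : (∑ s, (β - Dexp g h.choose + γ) s) < ∑ s, β s :=
        sub_add_sum_lt hθβ hγle hγne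
      have hih := ih (β - Dexp g h.choose + γ) (by omega) a haγ'
      refine ⟨hih.1, ?_⟩
      refine le_trans hih.2 (Finsupp.le_def.mpr ?_)
      intro s
      have h1 := (Finsupp.le_def.mp hγle) s
      have h2 := hθβ s
      simp only [Finsupp.coe_add, Finsupp.coe_tsub, Pi.add_apply, Pi.sub_apply, Dexp_apply] at *
      omega
    · rw [red_of_not_NR g t h] at ha
      have := MvPolynomial.support_monomial_subset ha
      rw [Finset.mem_singleton] at this
      subst this
      exact ⟨h, le_refl _⟩

theorem red_sub_mem_aux (N : ℕ) : ∀ β : Fin n →₀ ℕ, (∑ s, β s) < N →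
    monomial β 1 - red g t β ∈ It g t := by
  classical
  induction N with
  | zero => intro β h; omega
  | succ N ih =>
    intro β hβ
    by_cases h : NR g t β
    · rw [red_of_NR g t hmonic huniv h]
      set α₀ := h.choose with hα₀
      set θ₀ := Dexp g α₀ with hθ₀
      set L := tail g α₀ with hL
      have hθβ : ∀ s, θ₀ s ≤ β s := h.choose_spec.2
      have hθβ' : θ₀ ≤ β := Finsupp.le_def.mpr hθβ
      have hexp : monomial (β - θ₀) 1 * (∏ k, g k ^ α₀ k)
          = monomial β 1 + ∑ γ ∈ L.support, monomial ((β - θ₀) + γ) (coeff γ L) := by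
        rw [prod_eq_monomial_add_tail, mul_add, monomial_mul, one_mul,
          tsub_add_cancel_of_le hθβ', ← hL, monomial_mul_expand]
      have key : monomial β 1 + ∑ γ ∈ L.support, coeff γ L • red g t (β - θ₀ + γ)
          = monomial (β - θ₀) 1 * (∏ k, g k ^ α₀ k)
            - ∑ γ ∈ L.support, coeff γ L • (monomial (β - θ₀ + γ) 1 - red g t (β - θ₀ + γ)) := by
        rw [hexp]
        rw [add_sub_assoc]
        congr 1
        rw [← Finset.sum_sub_distrib]
        apply Finset.sum_congr rfl
        intro γ _
        rw [smul_sub, smul_monomial, smul_eq_mul, mul_one, sub_sub_cancel]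
      rw [sub_neg_eq_add, key]
      apply sub_mem
      · apply Ideal.mul_mem_left
        apply Ideal.subset_span
        exact ⟨α₀, h.choose_spec.1, rfl⟩
      · apply Ideal.sum_mem
        intro γ hγ
        obtain ⟨hγle, hγne⟩ := tail_support g hmonic huniv α₀ γ hγ
        have hlt : (∑ s, (β - θ₀ + γ) s) < ∑ s, β s := sub_add_sum_lt hθβ hγle hγne
        rw [smul_eq_C_mul]
        exact Ideal.mul_mem_left _ _ (ih (β - θ₀ + γ) (by omega))
    · rw [red_of_not_NR g t h, sub_self]
      exact zero_mem _

omit hmonic huniv in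
theorem sum_lt_of_mid {β A B γ : Fin n →₀ ℕ} (hab : ∀ s, A s + B s ≤ β s)
    (hγ : γ ≤ B) (hne : γ ≠ B) : (∑ s, ((β - (A + B) + γ) + A) s) < ∑ s, β s := by
  have hex : ∃ s, γ s < B s := by
    by_contra hcon
    push_neg at hcon
    exact hne (le_antisymm hγ (Finsupp.le_def.mpr hcon))
  obtain ⟨s₀, hs₀⟩ := hex
  apply Finset.sum_lt_sum
  · intro s _
    have h1 := (Finsupp.le_def.mp hγ) s
    have h2 := hab s
    simp only [Finsupp.coe_add, Finsupp.coe_tsub, Pi.add_apply, Pi.sub_apply]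
    omega
  · refine ⟨s₀, Finset.mem_univ s₀, ?_⟩
    have h2 := hab s₀
    simp only [Finsupp.coe_add, Finsupp.coe_tsub, Pi.add_apply, Pi.sub_apply]
    omega

theorem redL_gen_aux (N : ℕ) : ∀ β : Fin n →₀ ℕ, (∑ s, β s) < N →
    ∀ α : Fin n → ℕ, (∑ i, α i) = t → (∀ s, (g s).totalDegree * α s ≤ β s) →
    RedL g t (monomial (β - Dexp g α) 1 * ∏ k, g k ^ α k) = 0 := by
  classical
  induction N with
  | zero => intro β h; omega
  | succ N ih =>
    intro β hβ α hsum hle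
    -- the "step" sub-lemma: enlarging the generator exponent does not change the value
    have step : ∀ (α' ν' : Fin n → ℕ), (∑ i, α' i) = t →
        (∀ s, (g s).totalDegree * α' s ≤ β s) →
        (∀ s, (g s).totalDegree * α' s + (g s).totalDegree * ν' s ≤ β s) →
        RedL g t (monomial (β - Dexp g α') 1 * ∏ k, g k ^ α' k)
          = RedL g t (monomial (β - (Dexp g α' + Dexp g ν')) 1
              * ((∏ k, g k ^ ν' k) * ∏ k, g k ^ α' k)) := by
      intro α' ν' hsum' hle' hμβ
      have hmid : (β - (Dexp g α' + Dexp g ν')) + Dexp g ν' = β - Dexp g α' := by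
        ext s
        have h1 := hμβ s
        simp only [Finsupp.coe_add, Finsupp.coe_tsub, Pi.add_apply, Pi.sub_apply, Dexp_apply]
        omega
      have hGsplit : monomial (β - (Dexp g α' + Dexp g ν')) 1 * ((∏ k, g k ^ ν' k) * ∏ k, g k ^ α' k)
          = monomial (β - Dexp g α') 1 * (∏ k, g k ^ α' k)
            + ∑ γ ∈ (tail g ν').support, coeff γ (tail g ν')
                • (monomial ((β - (Dexp g α' + Dexp g ν') + γ)) 1 * ∏ k, g k ^ α' k) := by
        rw [← mul_assoc]
        rw [show (monomial (β - (Dexp g α' + Dexp g ν')) 1 : MvPolynomial (Fin n) R) * (∏ k, g k ^ ν' k)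
            = monomial (β - Dexp g α') 1
              + ∑ γ ∈ (tail g ν').support, monomial ((β - (Dexp g α' + Dexp g ν')) + γ) (coeff γ (tail g ν')) by
          rw [prod_eq_monomial_add_tail g ν', mul_add, monomial_mul, one_mul, hmid,
            monomial_mul_expand]]
        rw [add_mul, Finset.sum_mul]
        congr 1
        apply Finset.sum_congr rfl
        intro γ _
        rw [← smul_mul_assoc, smul_monomial, smul_eq_mul, mul_one]
      rw [hGsplit, map_add, map_sum]
      have hzero : ∀ γ ∈ (tail g ν').support,
          RedL g t (coeff γ (tail g ν')
            • (monomial ((β - (Dexp g α' + Dexp g ν') + γ)) 1 * ∏ k, g k ^ α' k)) = 0 := by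
        intro γ hγ
        obtain ⟨hγle, hγne⟩ := tail_support g hmonic huniv ν' γ hγ
        rw [map_smul]
        have harg : (β - (Dexp g α' + Dexp g ν') + γ)
            = ((β - (Dexp g α' + Dexp g ν') + γ) + Dexp g α') - Dexp g α' := by
          ext s
          simp only [Finsupp.coe_add, Finsupp.coe_tsub, Pi.add_apply, Pi.sub_apply]
          omega
        have hlt : (∑ s, ((β - (Dexp g α' + Dexp g ν') + γ) + Dexp g α') s) < ∑ s, β s := by
          have := sum_lt_of_mid (β := β) (A := Dexp g α') (B := Dexp g ν') (γ := γ)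
            (fun s => hμβ s) hγle hγne
          exact this
        have hge : ∀ s, (g s).totalDegree * α' s
            ≤ ((β - (Dexp g α' + Dexp g ν') + γ) + Dexp g α') s := by
          intro s
          simp only [Finsupp.coe_add, Finsupp.coe_tsub, Pi.add_apply, Pi.sub_apply, Dexp_apply]
          omega
        have := ih ((β - (Dexp g α' + Dexp g ν') + γ) + Dexp g α') (by omega) α' hsum' hge
        rw [← harg] at this
        rw [this, smul_zero]
      rw [Finset.sum_congr rfl hzero, Finset.sum_const_zero, add_zero]
    -- now compare with the chosen witness
    have hNR : NR g t β := ⟨α, hsum, hle⟩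
    set α₀ := hNR.choose with hα₀def
    have hspec := hNR.choose_spec
    have hsum₀ : (∑ i, α₀ i) = t := hspec.1
    have hle₀ : ∀ s, (g s).totalDegree * α₀ s ≤ β s := hspec.2
    -- the chosen witness gives value zero, by definition of `red`
    have h0 : RedL g t (monomial (β - Dexp g α₀) 1 * ∏ k, g k ^ α₀ k) = 0 := by
      rw [prod_eq_monomial_add_tail g α₀, mul_add, monomial_mul, one_mul,
        tsub_add_cancel_of_le (Finsupp.le_def.mpr hle₀), map_add]
      rw [show (monomial β 1 : MvPolynomial (Fin n) R) = monomial β (1:R) from rfl]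
      rw [RedL_monomial, one_smul, RedL_monomial_mul]
      rw [red_of_NR g t hmonic huniv hNR, ← hα₀def]
      rw [neg_add_cancel]
    -- common refinement
    set μ : Fin n → ℕ := fun s => max (α s) (α₀ s) with hμdef
    have hαμ : ∀ s, α s + (μ s - α s) = μ s := fun s => Nat.add_sub_cancel' (le_max_left _ _)
    have hα₀μ : ∀ s, α₀ s + (μ s - α₀ s) = μ s := fun s => Nat.add_sub_cancel' (le_max_right _ _)
    have hdμ : ∀ s, (g s).totalDegree * μ s ≤ β s := by
      intro s
      rcases max_choice (α s) (α₀ s) with hc | hc <;> rw [hμdef] <;> simp only <;> rw [hc]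
      · exact hle s
      · exact hle₀ s
    have e1 := step α (fun s => μ s - α s) hsum hle (by
      intro s
      rw [← Nat.mul_add, hαμ s]
      exact hdμ s)
    have e2 := step α₀ (fun s => μ s - α₀ s) hsum₀ hle₀ (by
      intro s
      rw [← Nat.mul_add, hα₀μ s]
      exact hdμ s)
    have hD1 : Dexp g α + Dexp g (fun s => μ s - α s) = Dexp g μ := by
      ext s
      simp only [Finsupp.coe_add, Pi.add_apply, Dexp_apply]
      rw [← Nat.mul_add, hαμ s]
    have hD2 : Dexp g α₀ + Dexp g (fun s => μ s - α₀ s) = Dexp g μ := by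
      ext s
      simp only [Finsupp.coe_add, Pi.add_apply, Dexp_apply]
      rw [← Nat.mul_add, hα₀μ s]
    have hP1 : (∏ k, g k ^ (fun s => μ s - α s) k) * (∏ k, g k ^ α k) = ∏ k, g k ^ μ k := by
      rw [← Finset.prod_mul_distrib]
      apply Finset.prod_congr rfl
      intro k _
      rw [← pow_add]
      congr 1
      simpa [Nat.add_comm] using hαμ k
    have hP2 : (∏ k, g k ^ (fun s => μ s - α₀ s) k) * (∏ k, g k ^ α₀ k) = ∏ k, g k ^ μ k := by
      rw [← Finset.prod_mul_distrib]
      apply Finset.prod_congr rfl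
      intro k _
      rw [← pow_add]
      congr 1
      simpa [Nat.add_comm] using hα₀μ k
    rw [hD1, hP1] at e1
    rw [hD2, hP2] at e2
    rw [e1, ← e2, h0]

theorem redL_gen (β : Fin n →₀ ℕ) (α : Fin n → ℕ) (hsum : (∑ i, α i) = t) :
    RedL g t (monomial β 1 * ∏ k, g k ^ α k) = 0 := by
  have h := redL_gen_aux g t hmonic huniv ((∑ s, (β + Dexp g α) s) + 1) (β + Dexp g α)
    (by omega) α hsum (by
      intro s
      simp only [Finsupp.coe_add, Pi.add_apply, Dexp_apply]
      omega)
  rwa [add_tsub_cancel_right] at h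

theorem redL_vanish {w : MvPolynomial (Fin n) R} (hw : w ∈ It g t) :
    RedL g t w = 0 := by
  classical
  have main : ∀ q, RedL g t (q * w) = 0 := by
    refine Submodule.span_induction (p := fun x _ => ∀ q, RedL g t (q * x) = 0)
      ?_ ?_ ?_ ?_ hw
    · rintro x ⟨α, hα, rfl⟩ q
      conv_lhs => rw [as_sum q, Finset.sum_mul, map_sum]
      rw [Finset.sum_eq_zero]
      intro β hβ
      rw [show (monomial β (coeff β q) : MvPolynomial (Fin n) R) = coeff β q • monomial β 1 by
        rw [smul_monomial, smul_eq_mul, mul_one], smul_mul_assoc, map_smul,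
        redL_gen g t hmonic huniv β α hα, smul_zero]
    · intro q
      rw [mul_zero, map_zero]
    · intro x y _ _ hx hy q
      rw [mul_add, map_add, hx, hy, add_zero]
    · intro a x _ hx q
      rw [smul_eq_mul, ← mul_assoc, hx]
  have := main 1
  rwa [one_mul] at this

end MainInduction

end Stmt15Aux


theorem stmt15 {R : Type*} [CommRing R] {n : ℕ}
    (g : Fin n → MvPolynomial (Fin n) R)
    (hmonic : ∀ k, ∃ θ ∈ (g k).support, coeff θ (g k) = 1 ∧ ∀ γ ∈ (g k).support, γ ≤ θ)
    (huniv : ∀ k, ∀ γ ∈ (g k).support, ∀ l, l ≠ k → γ l = 0)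
    (t : ℕ) (f : MvPolynomial (Fin n) R) :
    (∃! p : MvPolynomial (Fin n) R, RemProp g t f p) ∧
    ∀ p : MvPolynomial (Fin n) R, RemProp g t f p →
      ∀ a ∈ p.support, ∃ c ∈ f.support, a ≤ c := by
  classical
  have hcond : ∀ p : MvPolynomial (Fin n) R,
      (∀ β ∈ p.support, ∀ α : Fin n → ℕ, (∑ i, α i) = t →
          ∃ s : Fin n, β s + 1 ≤ (g s).totalDegree * α s)
        ↔ (∀ β ∈ p.support, ¬ Stmt15Aux.NR g t β) := by
    intro p
    constructor
    · intro h β hβ hNR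
      obtain ⟨α, hα, hle⟩ := hNR
      obtain ⟨s, hs⟩ := h β hβ α hα
      have := hle s
      omega
    · intro h β hβ α hα
      by_contra hcon
      push_neg at hcon
      exact h β hβ ⟨α, hα, fun s => by have := hcon s; omega⟩
  set ψ := Stmt15Aux.RedL g t f with hψ
  have hψsupp : ∀ a ∈ ψ.support, ∃ β ∈ f.support, ¬ Stmt15Aux.NR g t a ∧ a ≤ β := by
    intro a ha
    rw [hψ, Stmt15Aux.RedL_apply] at ha
    have h1 := MvPolynomial.support_sum ha
    rw [Finset.mem_biUnion] at h1
    obtain ⟨β, hβ, ha2⟩ := h1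
    have ha3 := MvPolynomial.support_smul ha2
    exact ⟨β, hβ, Stmt15Aux.red_support_aux g t hmonic huniv ((∑ s, β s) + 1) β
      (by omega) a ha3⟩
  have hψmem : f - ψ ∈ Stmt15Aux.It g t := by
    have hf : (∑ β ∈ f.support, coeff β f • (monomial β 1 : MvPolynomial (Fin n) R)) = f := by
      conv_rhs => rw [as_sum f]
      apply Finset.sum_congr rfl
      intro β _
      rw [smul_monomial, smul_eq_mul, mul_one]
    have heq : f - ψ = ∑ β ∈ f.support,
        coeff β f • (monomial β 1 - Stmt15Aux.red g t β) := by
      rw [hψ, Stmt15Aux.RedL_apply]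
      nth_rewrite 1 [← hf]
      rw [← Finset.sum_sub_distrib]
      apply Finset.sum_congr rfl
      intro β _
      rw [smul_sub]
    rw [heq]
    apply Ideal.sum_mem
    intro β _
    rw [MvPolynomial.smul_eq_C_mul]
    exact Ideal.mul_mem_left _ _
      (Stmt15Aux.red_sub_mem_aux g t hmonic huniv ((∑ s, β s) + 1) β (by omega))
  have hψRem : RemProp g t f ψ := by
    refine ⟨hψmem, (hcond ψ).mpr ?_⟩
    intro β hβ
    obtain ⟨c, hc, hn, hle⟩ := hψsupp β hβ
    exact hn
  have huniq : ∀ p, RemProp g t f p → p = ψ := by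
    intro p hp
    have hsub : p - ψ ∈ Stmt15Aux.It g t := by
      have h2 := sub_mem hψmem hp.1
      rwa [show f - ψ - (f - p) = p - ψ by ring] at h2
    have hred : ∀ β ∈ (p - ψ).support, ¬ Stmt15Aux.NR g t β := by
      intro β hβ
      have h3 := MvPolynomial.support_sub _ p ψ hβ
      rw [Finset.mem_union] at h3
      rcases h3 with h | h
      · exact (hcond p).mp hp.2 β h
      · obtain ⟨c, hc, hn, hle⟩ := hψsupp β h
        exact hn
    have h0 := Stmt15Aux.redL_vanish g t hmonic huniv hsub
    rw [Stmt15Aux.RedL_eq_self g t hred] at h0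
    exact sub_eq_zero.mp h0
  refine ⟨⟨ψ, hψRem, fun p hp => huniq p hp⟩, ?_⟩
  intro p hp a ha
  rw [huniq p hp] at ha
  obtain ⟨c, hc, _, hle⟩ := hψsupp a ha
  exact ⟨c, hc, hle⟩
end

section
/- Let R be a commutative ring and g_1,…,g_n ∈ R[x_1,…,x_n] monic polynomials with g_k ∈ R[x_k] for all k, and let A be a finite subset of ℕ^n. Then the family (∏_{k=1}^n g_k^{α_k})_{α ∈ A} is a Gröbner basis of the ideal it generates: for every nonzero τ in ⟨{∏_k g_k^{α_k} : α ∈ A}⟩ there exist β ∈ supp(τ) and α ∈ A with deg(g_k)·α_k ≤ β_k for all k. -/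
open MvPolynomial

namespace Stmt16Aux

variable {R : Type*} [CommRing R] {n : ℕ}

/-- `θ` is the (componentwise) greatest support element and has coefficient 1. -/
def IsTop (p : MvPolynomial (Fin n) R) (θ : Fin n →₀ ℕ) : Prop :=
  coeff θ p = 1 ∧ ∀ γ ∈ p.support, γ ≤ θ

lemma isTop_monomial (θ : Fin n →₀ ℕ) : IsTop (monomial θ (1:R)) θ := by
  constructor
  · simp [coeff_monomial]
  · intro γ hγ
    have := support_monomial_subset hγ
    simp only [Finset.mem_singleton] at this
    simp [this]

lemma isTop_one : IsTop (1 : MvPolynomial (Fin n) R) 0 := by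
  have h := isTop_monomial (R := R) (n := n) 0
  rwa [monomial_zero', C_1] at h

lemma isTop_mul {p q : MvPolynomial (Fin n) R} {θ η : Fin n →₀ ℕ}
    (hp : IsTop p θ) (hq : IsTop q η) : IsTop (p * q) (θ + η) := by
  constructor
  · rw [coeff_mul]
    rw [Finset.sum_eq_single_of_mem (θ, η) (by simp [Finset.mem_antidiagonal])]
    · rw [hp.1, hq.1, one_mul]
    · rintro ⟨a, b⟩ hab hne
      simp only [Finset.HasAntidiagonal.mem_antidiagonal] at hab
      by_contra hz
      have ha : coeff a p ≠ 0 := fun h => hz (by simp [h])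
      have hb : coeff b q ≠ 0 := fun h => hz (by simp [h])
      have haθ : a ≤ θ := hp.2 a (mem_support_iff.mpr ha)
      have hbη : b ≤ η := hq.2 b (mem_support_iff.mpr hb)
      have : a = θ ∧ b = η := by
        refine ⟨Finsupp.ext fun j => ?_, Finsupp.ext fun j => ?_⟩ <;>
        · have h1 := Finsupp.le_def.mp haθ j
          have h2 := Finsupp.le_def.mp hbη j
          have h3 : a j + b j = θ j + η j := by
            rw [← Finsupp.add_apply, ← Finsupp.add_apply, hab]
          omega
      exact hne (by rw [this.1, this.2])
  · intro γ hγ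
    have := MvPolynomial.support_mul p q hγ
    rw [Finset.mem_add] at this
    obtain ⟨a, ha, b, hb, rfl⟩ := this
    exact add_le_add (hp.2 a ha) (hq.2 b hb)

lemma isTop_pow {p : MvPolynomial (Fin n) R} {θ : Fin n →₀ ℕ}
    (hp : IsTop p θ) (m : ℕ) : IsTop (p ^ m) (m • θ) := by
  induction m with
  | zero => simpa using isTop_one
  | succ m ih =>
      rw [pow_succ, succ_nsmul]
      exact isTop_mul ih hp

lemma isTop_prod {ι : Type*} (s : Finset ι) (f : ι → MvPolynomial (Fin n) R)
    (t : ι → (Fin n →₀ ℕ)) (h : ∀ i ∈ s, IsTop (f i) (t i)) :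
    IsTop (∏ i ∈ s, f i) (∑ i ∈ s, t i) := by
  induction s using Finset.cons_induction with
  | empty => simpa using isTop_one
  | cons a s ha ih =>
      rw [Finset.prod_cons, Finset.sum_cons]
      exact isTop_mul (h a (Finset.mem_cons_self a s)) (ih fun i hi => h i (Finset.mem_cons_of_mem hi))

lemma prod_pow_add (g : Fin n → MvPolynomial (Fin n) R) (a b : Fin n →₀ ℕ) :
    ∏ k, g k ^ (a + b) k = (∏ k, g k ^ a k) * ∏ k, g k ^ b k := by
  simp [Finsupp.add_apply, pow_add, Finset.prod_mul_distrib]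

lemma prod_pow_single (g : Fin n → MvPolynomial (Fin n) R) (k : Fin n) (m : ℕ) :
    ∏ j, g j ^ (Finsupp.single k m) j = g k ^ m := by
  rw [Finset.prod_eq_single k]
  · rw [Finsupp.single_eq_same]
  · intro j _ hj
    rw [Finsupp.single_eq_of_ne' (Ne.symm hj), pow_zero]
  · intro h; exact absurd (Finset.mem_univ k) h

lemma sum_single_apply (v : Fin n → ℕ) (j : Fin n) :
    (∑ k, Finsupp.single k (v k)) j = v j := by
  rw [Finset.sum_apply']
  rw [Finset.sum_eq_single j]
  · rw [Finsupp.single_eq_same]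
  · intro k _ hk; exact Finsupp.single_eq_of_ne' hk
  · intro h; exact absurd (Finset.mem_univ j) h

lemma isTop_g (g : Fin n → MvPolynomial (Fin n) R)
    (hmonic : ∀ k, ∃ θ ∈ (g k).support, coeff θ (g k) = 1 ∧ ∀ γ ∈ (g k).support, γ ≤ θ)
    (huniv : ∀ k, ∀ γ ∈ (g k).support, ∀ l, l ≠ k → γ l = 0) (k : Fin n) :
    IsTop (g k) (Finsupp.single k ((g k).totalDegree)) := by
  obtain ⟨θ, hθs, hθ1, hθmax⟩ := hmonic k
  have hsum : ∀ γ ∈ (g k).support, (γ.sum fun _ e => e) = γ k := by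
    intro γ hγ
    have hsub : γ.support ⊆ {k} := by
      intro j hj
      rw [Finset.mem_singleton]
      by_contra hjk
      exact (Finsupp.mem_support_iff.mp hj) (huniv k γ hγ j hjk)
    rw [Finsupp.sum_of_support_subset γ hsub _ (fun i _ => rfl), Finset.sum_singleton]
  have hdeg : (g k).totalDegree = θ k := by
    apply le_antisymm
    · apply Finset.sup_le
      intro γ hγ
      rw [hsum γ hγ]
      exact Finsupp.le_def.mp (hθmax γ hγ) k
    · rw [← hsum θ hθs]
      exact le_totalDegree hθs
  have hθeq : Finsupp.single k ((g k).totalDegree) = θ := by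
    ext j
    by_cases hjk : j = k
    · subst hjk; rw [Finsupp.single_eq_same, hdeg]
    · rw [Finsupp.single_eq_of_ne' (Ne.symm hjk), huniv k θ hθs j hjk]
  rw [hθeq]
  exact ⟨hθ1, hθmax⟩

lemma g_eq_one (g : Fin n → MvPolynomial (Fin n) R) (k : Fin n)
    (hg : IsTop (g k) (Finsupp.single k ((g k).totalDegree)))
    (h : (g k).totalDegree = 0) : g k = 1 := by
  ext m
  rw [coeff_one]
  by_cases hm : m = 0
  · subst hm
    have h1 := hg.1
    rw [h, Finsupp.single_zero] at h1
    simp [h1]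
  · rw [if_neg (Ne.symm hm)]
    by_contra hc
    have hmem : m ∈ (g k).support := mem_support_iff.mpr hc
    have := hg.2 m hmem
    rw [h, Finsupp.single_zero] at this
    exact hm (le_antisymm this zero_le)

lemma nat_div_unique {a a' b b' d : ℕ} (hd : d ≠ 0) (ha : a < d) (ha' : a' < d)
    (h : a + d * b = a' + d * b') : a = a' ∧ b = b' := by
  have h1 : (a + d * b) % d = a := by rw [Nat.add_mul_mod_self_left, Nat.mod_eq_of_lt ha]
  have h2 : (a' + d * b') % d = a' := by rw [Nat.add_mul_mod_self_left, Nat.mod_eq_of_lt ha']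
  have haa : a = a' := by rw [← h1, ← h2, h]
  refine ⟨haa, ?_⟩
  have : d * b = d * b' := by omega
  exact Nat.eq_of_mul_eq_mul_left (Nat.pos_of_ne_zero hd) this

lemma sum_single_coords (k : Fin n) (m : ℕ) : ∑ j, (Finsupp.single k m) j = m := by
  rw [Finset.sum_eq_single k]
  · rw [Finsupp.single_eq_same]
  · intro j _ hj; exact Finsupp.single_eq_of_ne' (Ne.symm hj)
  · intro hk; exact absurd (Finset.mem_univ k) hk

lemma division (g : Fin n → MvPolynomial (Fin n) R)
    (hg : ∀ k, IsTop (g k) (Finsupp.single k ((g k).totalDegree)))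
    (P : (Fin n →₀ ℕ) → Prop)
    (hP : ∀ ε k, P ε → (g k).totalDegree ≠ 0 → P (ε + Finsupp.single k 1))
    (N : Submodule R (MvPolynomial (Fin n) R))
    (hN : ∀ (β ε : Fin n →₀ ℕ), (∀ k, (g k).totalDegree ≠ 0 → β k < (g k).totalDegree) → P ε →
      (monomial β 1) * ∏ k, g k ^ ε k ∈ N) :
    ∀ m : ℕ, ∀ β : Fin n →₀ ℕ, (∑ k, β k) ≤ m → ∀ ε, P ε →
      (monomial β 1) * ∏ k, g k ^ ε k ∈ N := by
  intro m
  induction m with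
  | zero =>
    intro β hβ ε hε
    by_cases hc : ∀ k, (g k).totalDegree ≠ 0 → β k < (g k).totalDegree
    · exact hN β ε hc hε
    · push_neg at hc
      obtain ⟨k, hk0, hkd⟩ := hc
      exfalso
      have h1 : β k ≤ ∑ j, β j := Finset.single_le_sum (fun j _ => Nat.zero_le _) (Finset.mem_univ k)
      omega
  | succ m ih =>
    intro β hβ ε hε
    by_cases hc : ∀ k, (g k).totalDegree ≠ 0 → β k < (g k).totalDegree
    · exact hN β ε hc hε
    push_neg at hc
    obtain ⟨k, hk0, hkd⟩ := hc
    set d := (g k).totalDegree with hdd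
    have hle : Finsupp.single k d ≤ β := Finsupp.single_le_iff.mpr hkd
    set β' := β - Finsupp.single k d with hβ'def
    have hβ'add : β' + Finsupp.single k d = β := tsub_add_cancel_of_le hle
    have hsumβ : ∑ j, β j = (∑ j, β' j) + d := by
      conv_lhs => rw [← hβ'add]
      simp only [Finsupp.add_apply]
      rw [Finset.sum_add_distrib, sum_single_coords]
    have hsumβ' : (∑ j, β' j) ≤ m := by omega
    set h := g k - monomial (Finsupp.single k d) 1 with hh
    have hsupp : ∀ η ∈ h.support, (∀ j, j ≠ k → η j = 0) ∧ η k < d := by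
      intro η hη
      have hcne : coeff η h ≠ 0 := mem_support_iff.mp hη
      have hcoeff : coeff η h = coeff η (g k) - if Finsupp.single k d = η then 1 else 0 := by
        rw [hh, coeff_sub, coeff_monomial]
      have hne : η ≠ Finsupp.single k d := by
        rintro rfl
        rw [if_pos rfl, (hg k).1] at hcoeff
        simp only [sub_self] at hcoeff
        exact hcne hcoeff
      rw [if_neg (Ne.symm hne), sub_zero] at hcoeff
      have hηs : η ∈ (g k).support := mem_support_iff.mpr (hcoeff ▸ hcne)
      have hcomp := Finsupp.le_def.mp ((hg k).2 η hηs)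
      have hzero : ∀ j, j ≠ k → η j = 0 := by
        intro j hj
        have := hcomp j
        rwa [Finsupp.single_eq_of_ne' (Ne.symm hj), Nat.le_zero] at this
      refine ⟨hzero, ?_⟩
      have hk' := hcomp k
      rw [Finsupp.single_eq_same] at hk'
      rcases lt_or_eq_of_le hk' with h' | h'
      · exact h'
      · exfalso
        apply hne
        ext j
        by_cases hjk : j = k
        · subst hjk; rw [Finsupp.single_eq_same]; exact h'
        · rw [Finsupp.single_eq_of_ne' (Ne.symm hjk)]; exact hzero j hjk
    have key : (monomial β 1 : MvPolynomial (Fin n) R) * ∏ j, g j ^ ε j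
        = monomial β' 1 * ∏ j, g j ^ (ε + Finsupp.single k 1 : Fin n →₀ ℕ) j
          - ∑ η ∈ h.support, coeff η h • (monomial (β' + η) 1 * ∏ j, g j ^ ε j) := by
      rw [prod_pow_add, prod_pow_single, pow_one]
      have e2 : (monomial β 1 : MvPolynomial (Fin n) R)
          = monomial β' 1 * monomial (Finsupp.single k d) 1 := by
        rw [monomial_mul, mul_one, hβ'add]
      have e3 : (monomial (Finsupp.single k d) 1 : MvPolynomial (Fin n) R) = g k - h := by
        rw [hh]; ring
      have e4 : h * (monomial β' 1 * ∏ j, g j ^ ε j)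
          = ∑ η ∈ h.support, coeff η h • (monomial (β' + η) 1 * ∏ j, g j ^ ε j) := by
        conv_lhs => rw [as_sum h]
        rw [Finset.sum_mul]
        apply Finset.sum_congr rfl
        intro η hη
        rw [← mul_assoc, monomial_mul, mul_one, add_comm η β', ← smul_mul_assoc,
          smul_monomial, smul_eq_mul, mul_one]
      rw [e2, e3, ← e4]
      ring
    rw [key]
    refine Submodule.sub_mem N ?_ ?_
    · exact ih β' hsumβ' (ε + Finsupp.single k 1) (hP ε k hε hk0)
    · refine Submodule.sum_mem N ?_
      intro η hη
      refine Submodule.smul_mem N _ ?_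
      obtain ⟨hz, hlt⟩ := hsupp η hη
      refine ih (β' + η) ?_ ε hε
      have hsη : ∑ j, η j = η k := by
        rw [Finset.sum_eq_single k]
        · intro j _ hj; exact hz j hj
        · intro hk; exact absurd (Finset.mem_univ k) hk
      have hadd : ∑ j, (β' + η) j = (∑ j, β' j) + ∑ j, η j := by
        simp [Finsupp.add_apply, Finset.sum_add_distrib]
      omega

lemma isTop_prod_pow (g : Fin n → MvPolynomial (Fin n) R)
    (hg : ∀ k, IsTop (g k) (Finsupp.single k ((g k).totalDegree))) (ε : Fin n →₀ ℕ) :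
    IsTop (∏ k, g k ^ ε k) (∑ k, Finsupp.single k ((g k).totalDegree * ε k)) := by
  refine isTop_prod Finset.univ _ _ ?_
  intro k _
  have h := isTop_pow (hg k) (ε k)
  rwa [Finsupp.smul_single, smul_eq_mul, mul_comm] at h

abbrev PP (g : Fin n → MvPolynomial (Fin n) R) (A : Finset (Fin n → ℕ))
    (ε : Fin n →₀ ℕ) : Prop :=
  (∀ k, (g k).totalDegree = 0 → ε k = 0) ∧
    ∃ α ∈ A, ∀ k, (g k).totalDegree = 0 ∨ α k ≤ ε k

end Stmt16Aux

open Stmt16Aux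

theorem stmt16 {R : Type*} [CommRing R] {n : ℕ}
    (g : Fin n → MvPolynomial (Fin n) R)
    (hmonic : ∀ k, ∃ θ ∈ (g k).support, coeff θ (g k) = 1 ∧ ∀ γ ∈ (g k).support, γ ≤ θ)
    (huniv : ∀ k, ∀ γ ∈ (g k).support, ∀ l, l ≠ k → γ l = 0)
    (A : Finset (Fin n → ℕ)) :
    ∀ τ ∈ Ideal.span {q : MvPolynomial (Fin n) R | ∃ α ∈ A, q = ∏ k, (g k) ^ α k},
      τ ≠ 0 → ∃ β ∈ τ.support, ∃ α ∈ A, ∀ k, (g k).totalDegree * α k ≤ β k := by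
  classical
  intro τ hτ hτ0
  have hg : ∀ k, IsTop (g k) (Finsupp.single k ((g k).totalDegree)) :=
    isTop_g g hmonic huniv
  set B : Set (MvPolynomial (Fin n) R) := {p | ∃ γ ε : Fin n →₀ ℕ,
    (∀ k, (g k).totalDegree ≠ 0 → γ k < (g k).totalDegree) ∧ PP g A ε ∧
    p = monomial γ 1 * ∏ k, g k ^ ε k} with hB
  set N : Submodule R (MvPolynomial (Fin n) R) := Submodule.span R B with hN
  have hPstep : ∀ (ε : Fin n →₀ ℕ) (k : Fin n), PP g A ε → (g k).totalDegree ≠ 0 →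
      PP g A (ε + Finsupp.single k 1) := by
    rintro ε k ⟨h1, α, hαA, h2⟩ hk
    refine ⟨?_, α, hαA, ?_⟩
    · intro j hj
      rw [Finsupp.add_apply]
      rcases eq_or_ne j k with rfl | hne
      · exact absurd hj hk
      · rw [Finsupp.single_eq_of_ne' (Ne.symm hne), h1 j hj]
        rfl
    · intro j
      rcases h2 j with h | h
      · exact Or.inl h
      · right
        rw [Finsupp.add_apply]
        exact le_trans h (Nat.le_add_right _ _)
  have hdiv : ∀ (β ε : Fin n →₀ ℕ), PP g A ε → monomial β 1 * ∏ k, g k ^ ε k ∈ N :=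
    fun β ε hε => division g hg (PP g A) hPstep N
      (fun β' ε' hβ' hε' => Submodule.subset_span ⟨β', ε', hβ', hε', rfl⟩)
      (∑ k, β k) β le_rfl ε hε
  have hτN : τ ∈ N := by
    have hτ' : τ ∈ Submodule.span (MvPolynomial (Fin n) R)
        {q : MvPolynomial (Fin n) R | ∃ α ∈ A, q = ∏ k, (g k) ^ α k} := hτ
    obtain ⟨c, hcs, hcsum⟩ := Submodule.mem_span_set.mp hτ'
    rw [← hcsum, Finsupp.sum]
    refine Submodule.sum_mem N ?_
    intro p hp
    obtain ⟨α, hαA, hpe⟩ := hcs hp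
    rw [smul_eq_mul]
    set r := c p with hr
    rw [hpe]
    set ε : Fin n →₀ ℕ := Finsupp.equivFunOnFinite.symm
        (fun k => if (g k).totalDegree = 0 then 0 else α k) with hεdef
    have hεapp : ∀ k, ε k = if (g k).totalDegree = 0 then 0 else α k := by
      intro k; simp [hεdef]
    have hprod : ∏ k, g k ^ α k = ∏ k, g k ^ ε k := by
      refine Finset.prod_congr rfl ?_
      intro k _
      rw [hεapp k]
      by_cases h0 : (g k).totalDegree = 0
      · rw [if_pos h0, g_eq_one g k (hg k) h0, one_pow, one_pow]
      · rw [if_neg h0]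
    rw [hprod]
    have hPε : PP g A ε := by
      refine ⟨fun k hk => by rw [hεapp k, if_pos hk], α, hαA, fun k => ?_⟩
      by_cases h0 : (g k).totalDegree = 0
      · exact Or.inl h0
      · right; rw [hεapp k, if_neg h0]
    rw [as_sum r, Finset.sum_mul]
    refine Submodule.sum_mem N ?_
    intro β hβ
    have hterm : (monomial β (coeff β r)) * ∏ k, g k ^ ε k
        = coeff β r • (monomial β 1 * ∏ k, g k ^ ε k) := by
      rw [← smul_mul_assoc, smul_monomial, smul_eq_mul, mul_one]
    rw [hterm]
    exact Submodule.smul_mem N _ (hdiv β ε hPε)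
  obtain ⟨c, hcs, hcsum⟩ := Submodule.mem_span_set.mp hτN
  have hcne : c.support.Nonempty := by
    rw [Finset.nonempty_iff_ne_empty]
    intro hemp
    apply hτ0
    rw [← hcsum, Finsupp.sum, hemp, Finset.sum_empty]
  have hchoice : ∀ b : {x // x ∈ c.support}, ∃ γ ε : Fin n →₀ ℕ,
      (∀ k, (g k).totalDegree ≠ 0 → γ k < (g k).totalDegree) ∧ PP g A ε ∧
      (b : MvPolynomial (Fin n) R) = monomial γ 1 * ∏ k, g k ^ ε k :=
    fun b => hcs b.2
  choose γf εf hγf hPf hbf using hchoice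
  set D : (Fin n →₀ ℕ) → (Fin n →₀ ℕ) :=
    fun ε => ∑ k, Finsupp.single k ((g k).totalDegree * ε k) with hD
  have hDapp : ∀ (ε : Fin n →₀ ℕ) (j : Fin n), (D ε) j = (g j).totalDegree * ε j :=
    fun ε j => sum_single_apply _ j
  have hTop : ∀ b : {x // x ∈ c.support},
      IsTop (b : MvPolynomial (Fin n) R) (γf b + D (εf b)) := by
    intro b
    rw [hbf b]
    exact isTop_mul (isTop_monomial _) (isTop_prod_pow g hg (εf b))
  obtain ⟨b₀, hb₀, hmax⟩ := Finset.exists_max_image c.support.attach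
      (fun b => toLex (γf b + D (εf b))) (by rwa [Finset.attach_nonempty_iff])
  set μ := γf b₀ + D (εf b₀) with hμ
  have hcoeffτ : coeff μ τ = c b₀ := by
    rw [← hcsum, Finsupp.sum, ← Finset.sum_attach c.support (fun p => c p • p), coeff_sum]
    rw [Finset.sum_eq_single_of_mem b₀ (Finset.mem_attach _ _)]
    · rw [MvPolynomial.coeff_smul, (hTop b₀).1, smul_eq_mul, mul_one]
    · intro b _ hne
      by_cases hz : coeff μ (b : MvPolynomial (Fin n) R) = 0
      · rw [MvPolynomial.coeff_smul, hz, smul_zero]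
      · exfalso
        have hμmem : μ ∈ (b : MvPolynomial (Fin n) R).support := mem_support_iff.mpr hz
        have hle1 : μ ≤ γf b + D (εf b) := (hTop b).2 μ hμmem
        have hle2 : toLex (γf b + D (εf b)) ≤ toLex μ := hmax b (Finset.mem_attach _ _)
        have heq : γf b + D (εf b) = μ :=
          toLex.injective (le_antisymm hle2 (Finsupp.toLex_monotone hle1))
        have hcoord : ∀ j, γf b j + (g j).totalDegree * εf b j
            = γf b₀ j + (g j).totalDegree * εf b₀ j := by
          intro j
          have h1 := DFunLike.congr_fun heq j
          rw [hμ] at h1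
          rwa [Finsupp.add_apply, Finsupp.add_apply, hDapp, hDapp] at h1
        have hpair : ∀ j, γf b j = γf b₀ j ∧ εf b j = εf b₀ j := by
          intro j
          by_cases hdj : (g j).totalDegree = 0
          · have e1 := (hPf b).1 j hdj
            have e2 := (hPf b₀).1 j hdj
            have e3 := hcoord j
            rw [hdj] at e3
            exact ⟨by omega, by rw [e1, e2]⟩
          · exact nat_div_unique hdj (hγf b j hdj) (hγf b₀ j hdj) (hcoord j)
        have hγeq : γf b = γf b₀ := Finsupp.ext fun j => (hpair j).1
        have hεeq : εf b = εf b₀ := Finsupp.ext fun j => (hpair j).2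
        have hbeq : (b : MvPolynomial (Fin n) R) = (b₀ : MvPolynomial (Fin n) R) := by
          rw [hbf b, hbf b₀, hγeq, hεeq]
        exact hne (Subtype.ext hbeq)
  have hμsupp : μ ∈ τ.support := by
    rw [mem_support_iff, hcoeffτ]
    exact Finsupp.mem_support_iff.mp b₀.2
  obtain ⟨h0f, α, hαA, hcov⟩ := hPf b₀
  refine ⟨μ, hμsupp, α, hαA, ?_⟩
  intro k
  have hμk : μ k = γf b₀ k + (g k).totalDegree * εf b₀ k := by
    rw [hμ, Finsupp.add_apply, hDapp]
  rcases hcov k with h | h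
  · rw [h, zero_mul]; exact Nat.zero_le _
  · rw [hμk]
    exact le_trans (Nat.mul_le_mul_left _ h) (Nat.le_add_left _ _)
end
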